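/- arXiv:2011.10544 — 5 statements merged into one kernel-verified Lean document; each statement's English description precedes it below -/
import Mathlib

section
/- For a prime p, in the intersection graph of D_{2p^2}, the distance between two distinct vertices u, v equals: 1 if both lie in the clique {⟨r⟩, ⟨r^p⟩} ∪ {⟨r^p, s r^i⟩ : 1 ≤ i ≤ p} or if u = ⟨s r^{i+lp}⟩ and v = ⟨r^p, s r^i⟩; 2 if u, v are distinct reflections with u, v ∈ H_i for the same i, or u is a reflection in H_j and v ∈ {⟨r⟩, ⟨r^p⟩} ∪ {⟨r^p, s r^i⟩} with i ≠ j; and 3 if u ∈ H_i, v ∈ H_j are reflections with i ≠ j. -/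
open DihedralGroup Subgroup

/-- The intersection graph of a group: vertices are the proper non-trivial
subgroups, two distinct subgroups are adjacent iff their intersection is
non-trivial. -/
def interGraph (G : Type*) [Group G] :
    SimpleGraph {H : Subgroup G // H ≠ ⊥ ∧ H ≠ ⊤} where
  Adj H K := H ≠ K ∧ H.1 ⊓ K.1 ≠ ⊥
  symm := ⟨fun H K h => ⟨h.1.symm, by rw [inf_comm]; exact h.2⟩⟩
  loopless := ⟨fun H h => h.1 rfl⟩

/-- The vertex type of the intersection graph of `DihedralGroup n`. -/
abbrev Vert (n : ℕ) := {H : Subgroup (DihedralGroup n) // H ≠ ⊥ ∧ H ≠ ⊤}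

/-- The degree of a vertex in the intersection graph of `DihedralGroup n`. -/
noncomputable def deg (n : ℕ) (v : Vert n) : ℕ :=
  Nat.card ((interGraph (DihedralGroup n)).neighborSet v)

/-- The eccentricity of a vertex in the intersection graph of `DihedralGroup n`. -/
noncomputable def ecc (n : ℕ) (v : Vert n) : ℕ :=
  sSup (Set.range fun u => (interGraph (DihedralGroup n)).dist v u)

namespace Stmt11Aux

open DihedralGroup Subgroup

variable {n : ℕ}

lemma sr_ne_one (a : ZMod n) : sr a ≠ 1 := by
  simp [one_def, -r_zero]

lemma mem_zpowers_sr {a : ZMod n} {x : DihedralGroup n} :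
    x ∈ zpowers (sr a) ↔ x = 1 ∨ x = sr a := by
  constructor
  · rintro ⟨k, rfl⟩
    have h2 : (sr a : DihedralGroup n) ^ (2 : ℤ) = 1 := by
      rw [zpow_two, sr_mul_self]
    rcases Int.even_or_odd k with ⟨m, rfl⟩ | ⟨m, rfl⟩
    · left
      show sr a ^ (m + m) = 1
      rw [← two_mul, zpow_mul, h2, one_zpow]
    · right
      show sr a ^ (2 * m + 1) = sr a
      rw [zpow_add, zpow_mul, h2, one_zpow, one_mul, zpow_one]
  · rintro (rfl | rfl)
    · exact one_mem _
    · exact mem_zpowers _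

lemma r_pow (d : ZMod n) (m : ℕ) : (r d) ^ m = r ((m : ZMod n) * d) := by
  induction m with
  | zero => simp [one_def, -r_zero]
  | succ k ih => rw [pow_succ, ih, r_mul_r]; push_cast; ring_nf

lemma r_zpow (c : ZMod n) (k : ℤ) : ∃ d, (r c) ^ k = r d := by
  cases k with
  | ofNat m => exact ⟨_, by rw [Int.ofNat_eq_coe, zpow_natCast, r_pow]⟩
  | negSucc m =>
      refine ⟨-(((m + 1 : ℕ) : ZMod n) * c), ?_⟩
      rw [zpow_negSucc, r_pow]
      rfl

lemma sr_notMem_zpowers_r (a c : ZMod n) : sr a ∉ zpowers (r c) := by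
  rintro ⟨k, hk⟩
  obtain ⟨d, hd⟩ := r_zpow c k
  simp only at hk
  rw [hd] at hk
  exact absurd hk (by simp)

lemma eq_top_of_r_one_mem [NeZero n] {w : Subgroup (DihedralGroup n)} (a : ZMod n)
    (h1 : r 1 ∈ w) (h2 : sr a ∈ w) : w = ⊤ := by
  rw [eq_top_iff]
  rintro (b | b) -
  · have := pow_mem h1 b.val
    rwa [r_one_pow, ZMod.natCast_zmod_val] at this
  · have hr : r (b - a) ∈ w := by
      have := pow_mem h1 (b - a).val
      rwa [r_one_pow, ZMod.natCast_zmod_val] at this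
    have := mul_mem h2 hr
    rwa [sr_mul_r, add_sub_cancel] at this

/-- The natural projection between dihedral groups. -/
def dihMap {m k : ℕ} (h : k ∣ m) : DihedralGroup m →* DihedralGroup k where
  toFun x := match x with
    | .r a => .r (ZMod.castHom h (ZMod k) a)
    | .sr a => .sr (ZMod.castHom h (ZMod k) a)
  map_one' := by simp [one_def, -r_zero]
  map_mul' := by rintro (a | a) (b | b) <;> simp [map_add, map_sub]

@[simp] lemma dihMap_r {m k : ℕ} (h : k ∣ m) (a : ZMod m) :
    dihMap h (r a) = r (ZMod.castHom h (ZMod k) a) := rfl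

@[simp] lemma dihMap_sr {m k : ℕ} (h : k ∣ m) (a : ZMod m) :
    dihMap h (sr a) = sr (ZMod.castHom h (ZMod k) a) := rfl

lemma adj_of {u v : Vert n} (hne : u ≠ v) {x : DihedralGroup n}
    (hx1 : x ∈ u.1) (hx2 : x ∈ v.1) (hx : x ≠ 1) :
    (interGraph (DihedralGroup n)).Adj u v := by
  show u ≠ v ∧ u.1 ⊓ v.1 ≠ ⊥
  refine ⟨hne, fun h => hx ?_⟩
  have : x ∈ u.1 ⊓ v.1 := Subgroup.mem_inf.mpr ⟨hx1, hx2⟩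
  rw [h] at this
  exact Subgroup.mem_bot.mp this

lemma vne_of {u v : Vert n} {x : DihedralGroup n} (h1 : x ∈ u.1) (h2 : x ∉ v.1) : u ≠ v :=
  fun h => h2 (by rw [← h]; exact h1)

lemma not_adj_refl {u v : Vert n} {a : ZMod n} (hu : u.1 = zpowers (sr a))
    (hv : sr a ∉ v.1) : ¬ (interGraph (DihedralGroup n)).Adj u v := by
  show ¬ (u ≠ v ∧ u.1 ⊓ v.1 ≠ ⊥)
  rintro ⟨-, hbot⟩
  apply hbot
  rw [eq_bot_iff]
  intro x hx
  rw [Subgroup.mem_inf, hu] at hx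
  rw [Subgroup.mem_bot]
  rcases mem_zpowers_sr.mp hx.1 with rfl | rfl
  · rfl
  · exact absurd hx.2 hv

lemma sr_mem_of_inf_ne_bot {w : Subgroup (DihedralGroup n)} {a : ZMod n}
    (h : zpowers (sr a) ⊓ w ≠ ⊥) : sr a ∈ w := by
  rw [Subgroup.ne_bot_iff_exists_ne_one] at h
  obtain ⟨⟨x, hx⟩, hx1⟩ := h
  have hx' := Subgroup.mem_inf.mp hx
  rcases mem_zpowers_sr.mp hx'.1 with rfl | rfl
  · exact absurd (Subtype.ext rfl) hx1
  · exact hx'.2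

lemma dist_eq_two' {V : Type*} {G : SimpleGraph V} {u v w : V}
    (h1 : G.Adj u w) (h2 : G.Adj w v) (h : ¬ G.Adj u v) (hne : u ≠ v) : G.dist u v = 2 := by
  have hle : G.dist u v ≤ 2 := by
    have := G.dist_le (SimpleGraph.Walk.cons h1 (SimpleGraph.Walk.cons h2 SimpleGraph.Walk.nil))
    simpa using this
  have h0 : G.dist u v ≠ 0 := by
    intro hc
    rcases SimpleGraph.dist_eq_zero_iff_eq_or_not_reachable.mp hc with hc' | hc'
    · exact hne hc'
    · exact hc' ⟨SimpleGraph.Walk.cons h1 (SimpleGraph.Walk.cons h2 SimpleGraph.Walk.nil)⟩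
  have h1' : G.dist u v ≠ 1 := fun hh => h (SimpleGraph.dist_eq_one_iff_adj.mp hh)
  omega

lemma exists_mid {V : Type*} {G : SimpleGraph V} {u v : V} (h : G.dist u v = 2) :
    ∃ w, G.Adj u w ∧ G.Adj w v := by
  obtain ⟨w, hw⟩ := G.exists_walk_of_dist_ne_zero (u := u) (v := v) (by omega)
  rw [h] at hw
  cases w with
  | nil => simp at hw
  | cons h1 w' => cases w' with
    | nil => simp at hw
    | cons h2 w'' => cases w'' with
      | nil => exact ⟨_, h1, h2⟩
      | cons h3 w''' =>
        simp only [SimpleGraph.Walk.length_cons] at hw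
        omega

section P

variable {p : ℕ}

/-- The subgroup `⟨r^p, s r^i⟩` of `D_{2p²}`. -/
def Kg (p i : ℕ) : Subgroup (DihedralGroup (p ^ 2)) :=
  closure {r ((p : ℕ) : ZMod (p ^ 2)), sr ((i : ℕ) : ZMod (p ^ 2))}

lemma cast_p_ne_zero (hp : p.Prime) : ((p : ℕ) : ZMod (p ^ 2)) ≠ 0 := by
  intro h
  rw [ZMod.natCast_eq_zero_iff] at h
  have h1 := Nat.le_of_dvd hp.pos h
  have h2 := hp.two_le
  nlinarith

lemma cast_shift (hp : p.Prime) (i l : ℕ) :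
    ZMod.castHom (dvd_pow_self p two_ne_zero) (ZMod p) (((i + l * p : ℕ) : ZMod (p ^ 2)))
      = (i : ZMod p) := by
  rw [map_natCast]
  push_cast [ZMod.natCast_self]
  ring

lemma natCast_inj_of (hp : p.Prime) {i j : ℕ} (hi1 : 1 ≤ i) (hi2 : i ≤ p) (hj1 : 1 ≤ j)
    (hj2 : j ≤ p) (h : (i : ZMod p) = (j : ZMod p)) : i = j := by
  have h' : i % p = j % p := (ZMod.natCast_eq_natCast_iff i j p).mp h
  have hp2 := hp.two_le
  rcases Nat.lt_or_ge i p with hi | hi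
  · rcases Nat.lt_or_ge j p with hj | hj
    · rwa [Nat.mod_eq_of_lt hi, Nat.mod_eq_of_lt hj] at h'
    · have hj' : j = p := le_antisymm hj2 hj
      rw [hj', Nat.mod_eq_of_lt hi, Nat.mod_self] at h'
      omega
  · have hi' : i = p := le_antisymm hi2 hi
    rcases Nat.lt_or_ge j p with hj | hj
    · rw [hi', Nat.mod_self, Nat.mod_eq_of_lt hj] at h'
      omega
    · omega

lemma r_p_mem_Kg (i : ℕ) : r ((p : ℕ) : ZMod (p ^ 2)) ∈ Kg p i :=
  subset_closure (Set.mem_insert _ _)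

lemma sr_i_mem_Kg (i : ℕ) : sr ((i : ℕ) : ZMod (p ^ 2)) ∈ Kg p i :=
  subset_closure (Set.mem_insert_of_mem _ rfl)

lemma sr_shift_mem_Kg (i l : ℕ) : sr ((i + l * p : ℕ) : ZMod (p ^ 2)) ∈ Kg p i := by
  have h2 : r (((l : ℕ) : ZMod (p ^ 2)) * ((p : ℕ) : ZMod (p ^ 2))) ∈ Kg p i := by
    have := pow_mem (r_p_mem_Kg (p := p) i) l
    rwa [r_pow] at this
  have h3 := mul_mem (sr_i_mem_Kg (p := p) i) h2
  rw [sr_mul_r] at h3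
  convert h3 using 2
  push_cast
  ring

lemma Kg_le (i : ℕ) :
    Kg p i ≤ (zpowers (sr ((i : ℕ) : ZMod p))).comap (dihMap (dvd_pow_self p two_ne_zero)) := by
  rw [Kg, closure_le]
  rintro x hx
  simp only [Set.mem_insert_iff, Set.mem_singleton_iff] at hx
  rcases hx with rfl | rfl
  · have h0 : ZMod.castHom (dvd_pow_self p two_ne_zero) (ZMod p) ((p : ℕ) : ZMod (p ^ 2)) = 0 := by
      rw [map_natCast]
      exact ZMod.natCast_self p
    rw [SetLike.mem_coe, mem_comap, dihMap_r, h0, ← one_def]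
    exact one_mem _
  · rw [SetLike.mem_coe, mem_comap, dihMap_sr, map_natCast]
    exact mem_zpowers _

lemma sr_mem_Kg_cast (i : ℕ) {b : ZMod (p ^ 2)} (h : sr b ∈ Kg p i) :
    ZMod.castHom (dvd_pow_self p two_ne_zero) (ZMod p) b = ((i : ℕ) : ZMod p) := by
  have h2 := Kg_le i h
  rw [mem_comap, dihMap_sr] at h2
  rcases mem_zpowers_sr.mp h2 with h1 | h1
  · exact absurd h1 (sr_ne_one _)
  · injection h1

lemma Kg_ne_top (hp : p.Prime) (i : ℕ) : Kg p i ≠ ⊤ := by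
  haveI := Fact.mk hp
  intro h
  have hmem : r (1 : ZMod (p ^ 2)) ∈ Kg p i := h ▸ mem_top _
  have h2 := Kg_le i hmem
  rw [mem_comap, dihMap_r, map_one] at h2
  rcases mem_zpowers_sr.mp h2 with h1 | h1
  · rw [one_def] at h1
    have : (1 : ZMod p) = 0 := by injection h1
    exact one_ne_zero this
  · exact absurd h1 (by simp)

lemma Kg_ne_bot (hp : p.Prime) (i : ℕ) : Kg p i ≠ ⊥ := by
  intro h
  have hmem := r_p_mem_Kg (p := p) i
  rw [h, Subgroup.mem_bot, one_def] at hmem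
  exact cast_p_ne_zero hp (by injection hmem)

lemma r_p_notMem_zpowers_sr (hp : p.Prime) (a : ZMod (p ^ 2)) :
    r ((p : ℕ) : ZMod (p ^ 2)) ∉ zpowers (sr a) := by
  intro h
  rcases mem_zpowers_sr.mp h with h1 | h1
  · rw [one_def] at h1
    exact cast_p_ne_zero hp (by injection h1)
  · exact absurd h1 (by simp)

lemma isUnit_of_cast_ne_zero (hp : p.Prime) {d : ZMod (p ^ 2)}
    (h : ZMod.castHom (dvd_pow_self p two_ne_zero) (ZMod p) d ≠ 0) : IsUnit d := by
  haveI : NeZero (p ^ 2) := ⟨pow_ne_zero 2 hp.ne_zero⟩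
  have hd : ¬ p ∣ d.val := by
    intro hdvd
    apply h
    calc ZMod.castHom (dvd_pow_self p two_ne_zero) (ZMod p) d
        = ZMod.castHom (dvd_pow_self p two_ne_zero) (ZMod p) ((d.val : ℕ) : ZMod (p ^ 2)) := by
          rw [ZMod.natCast_zmod_val]
      _ = ((d.val : ℕ) : ZMod p) := map_natCast _ _
      _ = 0 := (ZMod.natCast_eq_zero_iff _ _).mpr hdvd
  have hcop : Nat.Coprime d.val (p ^ 2) :=
    Nat.Coprime.pow_right 2 ((Nat.Prime.coprime_iff_not_dvd hp).mpr hd).symm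
  have := (ZMod.isUnit_iff_coprime d.val (p ^ 2)).mpr hcop
  rwa [ZMod.natCast_zmod_val] at this

lemma r_one_mem_of (hp : p.Prime) {w : Subgroup (DihedralGroup (p ^ 2))} {d : ZMod (p ^ 2)}
    (hd : IsUnit d) (h : r d ∈ w) : r (1 : ZMod (p ^ 2)) ∈ w := by
  haveI : NeZero (p ^ 2) := ⟨pow_ne_zero 2 hp.ne_zero⟩
  obtain ⟨u, hu⟩ := hd
  have key : ((u⁻¹ : (ZMod (p ^ 2))ˣ) : ZMod (p ^ 2)) * d = 1 := by
    rw [← hu]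
    exact u.inv_mul
  have := pow_mem h ((u⁻¹ : (ZMod (p ^ 2))ˣ) : ZMod (p ^ 2)).val
  rwa [r_pow, ZMod.natCast_zmod_val, key] at this

end P

end Stmt11Aux
open Stmt11Aux in
theorem stmt11 (p : ℕ) (hp : p.Prime)
    (C : Set (Vert (p ^ 2)))
    (hC : C = {v | (∃ i : ℕ, 1 ≤ i ∧ i ≤ p ∧ v.1 = Subgroup.closure
        {DihedralGroup.r ((p : ℕ) : ZMod (p ^ 2)),
          DihedralGroup.sr ((i : ℕ) : ZMod (p ^ 2))}) ∨
      v.1 = Subgroup.zpowers (DihedralGroup.r (1 : ZMod (p ^ 2))) ∨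
      v.1 = Subgroup.zpowers (DihedralGroup.r ((p : ℕ) : ZMod (p ^ 2)))})
    (Hmem : ℕ → Vert (p ^ 2) → Prop)
    (hH : ∀ i v, Hmem i v ↔ ∃ l : ℕ, 1 ≤ l ∧ l ≤ p ∧
      v.1 = Subgroup.zpowers (DihedralGroup.sr ((i + l * p : ℕ) : ZMod (p ^ 2)))) :
    (∀ u v : Vert (p ^ 2), u ≠ v → u ∈ C → v ∈ C →
      (interGraph (DihedralGroup (p ^ 2))).dist u v = 1) ∧
    (∀ i : ℕ, 1 ≤ i → i ≤ p → ∀ u v : Vert (p ^ 2), Hmem i u →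
      v.1 = Subgroup.closure {DihedralGroup.r ((p : ℕ) : ZMod (p ^ 2)),
        DihedralGroup.sr ((i : ℕ) : ZMod (p ^ 2))} →
      (interGraph (DihedralGroup (p ^ 2))).dist u v = 1) ∧
    (∀ i : ℕ, 1 ≤ i → i ≤ p → ∀ u v : Vert (p ^ 2), u ≠ v → Hmem i u → Hmem i v →
      (interGraph (DihedralGroup (p ^ 2))).dist u v = 2) ∧
    (∀ i j : ℕ, 1 ≤ i → i ≤ p → 1 ≤ j → j ≤ p → i ≠ j →
      ∀ u v : Vert (p ^ 2), Hmem j u →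
      (v.1 = Subgroup.zpowers (DihedralGroup.r (1 : ZMod (p ^ 2))) ∨
        v.1 = Subgroup.zpowers (DihedralGroup.r ((p : ℕ) : ZMod (p ^ 2))) ∨
        v.1 = Subgroup.closure {DihedralGroup.r ((p : ℕ) : ZMod (p ^ 2)),
          DihedralGroup.sr ((i : ℕ) : ZMod (p ^ 2))}) →
      (interGraph (DihedralGroup (p ^ 2))).dist u v = 2) ∧
    (∀ i j : ℕ, 1 ≤ i → i ≤ p → 1 ≤ j → j ≤ p → i ≠ j →
      ∀ u v : Vert (p ^ 2), Hmem i u → Hmem j v →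
      (interGraph (DihedralGroup (p ^ 2))).dist u v = 3) := by
  haveI : NeZero p := ⟨hp.ne_zero⟩
  haveI : NeZero (p ^ 2) := ⟨pow_ne_zero 2 hp.ne_zero⟩
  set G := interGraph (DihedralGroup (p ^ 2)) with hG
  -- the middle vertices
  have hKV : ∀ i : ℕ, (Kg p i ≠ ⊥ ∧ Kg p i ≠ ⊤) := fun i => ⟨Kg_ne_bot hp i, Kg_ne_top hp i⟩
  set KV : ℕ → Vert (p ^ 2) := fun i => ⟨Kg p i, hKV i⟩ with hKVdef
  have hrp_ne_one : DihedralGroup.r ((p : ℕ) : ZMod (p ^ 2)) ≠ 1 := by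
    intro h
    rw [one_def] at h
    exact cast_p_ne_zero hp (by injection h)
  -- r^p belongs to every subgroup listed in C
  have hrpC : ∀ w : Vert (p ^ 2), w ∈ C → DihedralGroup.r ((p : ℕ) : ZMod (p ^ 2)) ∈ w.1 := by
    intro w hw
    rw [hC] at hw
    rcases hw with ⟨i, -, -, h⟩ | h | h <;> rw [h]
    · exact r_p_mem_Kg i
    · have : DihedralGroup.r ((p : ℕ) : ZMod (p ^ 2)) = (DihedralGroup.r 1) ^ p :=
        (r_one_pow p).symm
      rw [this]
      exact pow_mem (mem_zpowers _) p
    · exact mem_zpowers _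
  -- any reflection vertex of H_i is adjacent to KV i
  have hAdjHK : ∀ i l : ℕ, ∀ u : Vert (p ^ 2),
      u.1 = zpowers (DihedralGroup.sr ((i + l * p : ℕ) : ZMod (p ^ 2))) → G.Adj u (KV i) := by
    intro i l u hu
    refine adj_of ?_ ?_ (sr_shift_mem_Kg i l) (sr_ne_one _)
    · refine (vne_of (u := KV i) (r_p_mem_Kg i) ?_).symm
      rw [hu]
      exact r_p_notMem_zpowers_sr hp _
    · rw [hu]
      exact mem_zpowers _
  -- KV j is adjacent to every element of the "C pattern" distinct from it
  have hKVne : ∀ i j : ℕ, 1 ≤ i → i ≤ p → 1 ≤ j → j ≤ p → i ≠ j → KV i ≠ KV j := by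
    intro i j hi1 hi2 hj1 hj2 hij
    refine vne_of (u := KV i) (v := KV j) (sr_i_mem_Kg i) ?_
    intro h
    have hc := sr_mem_Kg_cast j h
    rw [map_natCast] at hc
    exact hij (natCast_inj_of hp hi1 hi2 hj1 hj2 hc)
  refine ⟨?_, ?_, ?_, ?_, ?_⟩
  -- Part 1 : the clique C
  · intro u v hne hu hv
    rw [SimpleGraph.dist_eq_one_iff_adj]
    exact adj_of hne (hrpC u hu) (hrpC v hv) hrp_ne_one
  -- Part 2 : reflection in H_i adjacent to ⟨r^p, sr^i⟩
  · intro i hi1 hi2 u v hu hv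
    rw [hH] at hu
    obtain ⟨l, hl1, hl2, hu⟩ := hu
    rw [SimpleGraph.dist_eq_one_iff_adj]
    have : v = KV i := Subtype.ext hv
    rw [this]
    exact hAdjHK i l u hu
  -- Part 3 : two distinct reflections in the same H_i
  · intro i hi1 hi2 u v hne hu hv
    rw [hH] at hu hv
    obtain ⟨l, hl1, hl2, hu⟩ := hu
    obtain ⟨m, hm1, hm2, hv⟩ := hv
    have hnadj : ¬ G.Adj u v := by
      refine not_adj_refl hu ?_
      rw [hv]
      intro h
      rcases mem_zpowers_sr.mp h with h1 | h1
      · exact sr_ne_one _ h1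
      · simp only [sr.injEq] at h1
        apply hne
        apply Subtype.ext
        rw [hu, hv, h1]
    exact dist_eq_two' (hAdjHK i l u hu) ((hAdjHK i m v hv).symm) hnadj hne
  -- Part 4 : reflection in H_j vs clique member with index i ≠ j
  · intro i j hi1 hi2 hj1 hj2 hij u v hu hv
    rw [hH] at hu
    obtain ⟨l, hl1, hl2, hu⟩ := hu
    -- the reflection sr^(j+lp) lies in no subgroup on v's list
    have hsrv : DihedralGroup.sr ((j + l * p : ℕ) : ZMod (p ^ 2)) ∉ v.1 := by
      rcases hv with h | h | h <;> rw [h]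
      · exact sr_notMem_zpowers_r _ _
      · exact sr_notMem_zpowers_r _ _
      · intro hmem
        have hc := sr_mem_Kg_cast i hmem
        rw [cast_shift hp] at hc
        exact hij (natCast_inj_of hp hi1 hi2 hj1 hj2 hc.symm)
    have hnadj : ¬ G.Adj u v := not_adj_refl hu hsrv
    have hne : u ≠ v := vne_of (by rw [hu]; exact mem_zpowers _) hsrv
    -- KV j is adjacent to v
    have hKVv : G.Adj (KV j) v := by
      have hsrj : DihedralGroup.sr ((j : ℕ) : ZMod (p ^ 2)) ∉ v.1 := by
        rcases hv with h | h | h <;> rw [h]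
        · exact sr_notMem_zpowers_r _ _
        · exact sr_notMem_zpowers_r _ _
        · intro hmem
          have hc := sr_mem_Kg_cast i hmem
          rw [map_natCast] at hc
          exact hij (natCast_inj_of hp hi1 hi2 hj1 hj2 hc.symm)
      have hrpv : DihedralGroup.r ((p : ℕ) : ZMod (p ^ 2)) ∈ v.1 := by
        rcases hv with h | h | h <;> rw [h]
        · have : DihedralGroup.r ((p : ℕ) : ZMod (p ^ 2)) = (DihedralGroup.r 1) ^ p :=
            (r_one_pow p).symm
          rw [this]
          exact pow_mem (mem_zpowers _) p
        · exact mem_zpowers _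
        · exact r_p_mem_Kg i
      exact adj_of (vne_of (sr_i_mem_Kg j) hsrj) (r_p_mem_Kg j) hrpv hrp_ne_one
    exact dist_eq_two' (hAdjHK j l u hu) hKVv hnadj hne
  -- Part 5 : reflections in different H_i, H_j
  · intro i j hi1 hi2 hj1 hj2 hij u v hu hv
    rw [hH] at hu hv
    obtain ⟨l, hl1, hl2, hu⟩ := hu
    obtain ⟨m, hm1, hm2, hv⟩ := hv
    set a : ZMod (p ^ 2) := ((i + l * p : ℕ) : ZMod (p ^ 2)) with ha
    set b : ZMod (p ^ 2) := ((j + m * p : ℕ) : ZMod (p ^ 2)) with hb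
    have hcasta : ZMod.castHom (dvd_pow_self p two_ne_zero) (ZMod p) a = (i : ZMod p) :=
      cast_shift hp i l
    have hcastb : ZMod.castHom (dvd_pow_self p two_ne_zero) (ZMod p) b = (j : ZMod p) :=
      cast_shift hp j m
    have hijc : (i : ZMod p) ≠ (j : ZMod p) :=
      fun h => hij (natCast_inj_of hp hi1 hi2 hj1 hj2 h)
    have hab : a ≠ b := by
      intro h
      rw [h, hcastb] at hcasta
      exact hijc hcasta.symm
    have hsrv : DihedralGroup.sr a ∉ v.1 := by
      rw [hv]
      intro h
      rcases mem_zpowers_sr.mp h with h1 | h1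
      · exact sr_ne_one _ h1
      · simp only [sr.injEq] at h1
        exact hab h1
    have hne : u ≠ v := vne_of (by rw [hu]; exact mem_zpowers _) hsrv
    have hnadj : ¬ G.Adj u v := not_adj_refl hu hsrv
    have hW : G.Adj u (KV i) := hAdjHK i l u hu
    have hW2 : G.Adj (KV i) (KV j) := by
      refine adj_of (hKVne i j hi1 hi2 hj1 hj2 hij) (r_p_mem_Kg i) (r_p_mem_Kg j) hrp_ne_one
    have hW3 : G.Adj (KV j) v := (hAdjHK j m v hv).symm
    have hle : G.dist u v ≤ 3 := by
      have := G.dist_le (SimpleGraph.Walk.cons hW (SimpleGraph.Walk.cons hW2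
        (SimpleGraph.Walk.cons hW3 SimpleGraph.Walk.nil)))
      simpa using this
    have h0 : G.dist u v ≠ 0 := by
      intro hc
      rcases SimpleGraph.dist_eq_zero_iff_eq_or_not_reachable.mp hc with hc' | hc'
      · exact hne hc'
      · exact hc' ⟨SimpleGraph.Walk.cons hW (SimpleGraph.Walk.cons hW2
          (SimpleGraph.Walk.cons hW3 SimpleGraph.Walk.nil))⟩
    have h1 : G.dist u v ≠ 1 := fun hh => hnadj (SimpleGraph.dist_eq_one_iff_adj.mp hh)
    have h2 : G.dist u v ≠ 2 := by
      intro hh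
      obtain ⟨w, hw1, hw2⟩ := exists_mid hh
      -- sr a and sr b both lie in w
      have hsa : DihedralGroup.sr a ∈ w.1 := by
        have h' := (hw1 : u ≠ w ∧ u.1 ⊓ w.1 ≠ ⊥).2
        rw [hu] at h'
        exact sr_mem_of_inf_ne_bot h'
      have hsb : DihedralGroup.sr b ∈ w.1 := by
        have h' := (hw2 : w ≠ v ∧ w.1 ⊓ v.1 ≠ ⊥).2
        rw [inf_comm, hv] at h'
        exact sr_mem_of_inf_ne_bot h'
      have hrmem : DihedralGroup.r (b - a) ∈ w.1 := by
        have := mul_mem hsa hsb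
        rwa [sr_mul_sr] at this
      have hunit : IsUnit (b - a) := by
        apply isUnit_of_cast_ne_zero hp
        rw [map_sub, hcasta, hcastb]
        intro h
        rw [sub_eq_zero] at h
        exact hijc h.symm
      have hr1 : DihedralGroup.r (1 : ZMod (p ^ 2)) ∈ w.1 := r_one_mem_of hp hunit hrmem
      exact w.2.2 (eq_top_of_r_one_mem a hr1 hsa)
    omega
end

section
/- For a prime p, the hyper-Wiener index of the intersection graph of D_{2p^2} equals (6p^4 + 3p^3 + 6p^2 + 3p + 2)/2. -/
open DihedralGroup Subgroup

namespace S13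

section distlemmas
variable {V : Type*} (G : SimpleGraph V) {u v : V}

lemma dist_eq_two (hne : u ≠ v) (hnadj : ¬G.Adj u v) {w : V}
    (h1 : G.Adj u w) (h2 : G.Adj w v) : G.dist u v = 2 := by
  have hle := SimpleGraph.dist_le (SimpleGraph.Walk.cons h1 (SimpleGraph.Walk.cons h2 SimpleGraph.Walk.nil))
  simp only [SimpleGraph.Walk.length_cons, SimpleGraph.Walk.length_nil] at hle
  have h0 : G.dist u v ≠ 0 := SimpleGraph.dist_ne_zero_iff_ne_and_reachable.mpr
    ⟨hne, ⟨SimpleGraph.Walk.cons h1 (SimpleGraph.Walk.cons h2 SimpleGraph.Walk.nil)⟩⟩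
  have h1' : G.dist u v ≠ 1 := fun h => hnadj (SimpleGraph.dist_eq_one_iff_adj.mp h)
  omega

lemma exists_mid (h : G.dist u v = 2) : ∃ w, G.Adj u w ∧ G.Adj w v := by
  obtain ⟨w, hw⟩ := SimpleGraph.exists_walk_of_dist_ne_zero (by omega : G.dist u v ≠ 0)
  rw [h] at hw
  cases w with
  | nil => simp at hw
  | cons h1 q =>
    cases q with
    | nil => simp at hw
    | @cons _ c _ h2 q2 =>
      have hq2 : q2.length = 0 := by
        simp only [SimpleGraph.Walk.length_cons] at hw
        omega
      have heq := SimpleGraph.Walk.eq_of_length_eq_zero hq2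
      exact ⟨_, h1, heq ▸ h2⟩

lemma dist_eq_three (hne : u ≠ v) (hnadj : ¬G.Adj u v)
    (hnomid : ∀ w, ¬(G.Adj u w ∧ G.Adj w v)) {a b : V}
    (h1 : G.Adj u a) (h2 : G.Adj a b) (h3 : G.Adj b v) : G.dist u v = 3 := by
  have hle := SimpleGraph.dist_le (SimpleGraph.Walk.cons h1 (SimpleGraph.Walk.cons h2
    (SimpleGraph.Walk.cons h3 SimpleGraph.Walk.nil)))
  simp only [SimpleGraph.Walk.length_cons, SimpleGraph.Walk.length_nil] at hle
  have h0 : G.dist u v ≠ 0 := SimpleGraph.dist_ne_zero_iff_ne_and_reachable.mpr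
    ⟨hne, ⟨SimpleGraph.Walk.cons h1 (SimpleGraph.Walk.cons h2
      (SimpleGraph.Walk.cons h3 SimpleGraph.Walk.nil))⟩⟩
  have h1' : G.dist u v ≠ 1 := fun h => hnadj (SimpleGraph.dist_eq_one_iff_adj.mp h)
  have h2' : G.dist u v ≠ 2 := by
    intro h
    obtain ⟨w, hw1, hw2⟩ := exists_mid G h
    exact hnomid w ⟨hw1, hw2⟩
  omega

end distlemmas

variable {p : ℕ}

/-- reduction mod p from `ZMod (p^2)` -/
def pr (p : ℕ) : ZMod (p^2) →+* ZMod p := ZMod.castHom (dvd_pow_self p two_ne_zero) (ZMod p)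

lemma r_inv (n : ℕ) (i : ZMod n) : (r i)⁻¹ = r (-i) := by
  rw [inv_eq_iff_mul_eq_one]; simp

lemma sr_inv (n : ℕ) (i : ZMod n) : (sr i)⁻¹ = sr i := by
  rw [inv_eq_iff_mul_eq_one]; simp

/-- the subgroup of rotations by multiples of p -/
def A (p : ℕ) : Subgroup (DihedralGroup (p^2)) where
  carrier := {x | ∃ i, x = r i ∧ pr p i = 0}
  one_mem' := ⟨0, one_def, map_zero _⟩
  mul_mem' := by rintro _ _ ⟨i, rfl, hi⟩ ⟨j, rfl, hj⟩; exact ⟨i + j, by simp, by simp [hi, hj]⟩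
  inv_mem' := by rintro _ ⟨i, rfl, hi⟩; exact ⟨-i, r_inv _ _, by simp [hi]⟩

/-- the subgroup of all rotations -/
def B (p : ℕ) : Subgroup (DihedralGroup (p^2)) where
  carrier := {x | ∃ i, x = r i}
  one_mem' := ⟨0, one_def⟩
  mul_mem' := by rintro _ _ ⟨i, rfl⟩ ⟨j, rfl⟩; exact ⟨i + j, by simp⟩
  inv_mem' := by rintro _ ⟨i, rfl⟩; exact ⟨-i, r_inv _ _⟩

/-- the order-2 subgroup generated by the reflection `sr i` -/
def R (p : ℕ) (i : ZMod (p^2)) : Subgroup (DihedralGroup (p^2)) where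
  carrier := {x | x = 1 ∨ x = sr i}
  one_mem' := Or.inl rfl
  mul_mem' := by
    rintro _ _ (rfl | rfl) (rfl | rfl)
    · exact Or.inl (one_mul 1)
    · exact Or.inr (one_mul _)
    · exact Or.inr (mul_one _)
    · exact Or.inl (by simp)
  inv_mem' := by
    rintro _ (rfl | rfl)
    · exact Or.inl inv_one
    · exact Or.inr (sr_inv _ _)

/-- the order-2p dihedral subgroup indexed by `j : ZMod p` -/
def D (p : ℕ) (j : ZMod p) : Subgroup (DihedralGroup (p^2)) where
  carrier := {x | (∃ i, x = r i ∧ pr p i = 0) ∨ (∃ i, x = sr i ∧ pr p i = j)}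
  one_mem' := Or.inl ⟨0, one_def, map_zero _⟩
  mul_mem' := by
    rintro _ _ (⟨i, rfl, hi⟩ | ⟨i, rfl, hi⟩) (⟨k, rfl, hk⟩ | ⟨k, rfl, hk⟩)
    · exact Or.inl ⟨i + k, by simp, by simp [hi, hk]⟩
    · exact Or.inr ⟨k - i, by simp, by simp [hi, hk]⟩
    · exact Or.inr ⟨i + k, by simp, by simp [hi, hk]⟩
    · exact Or.inl ⟨k - i, by simp, by simp [hi, hk]⟩
  inv_mem' := by
    rintro _ (⟨i, rfl, hi⟩ | ⟨i, rfl, hi⟩)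
    · exact Or.inl ⟨-i, r_inv _ _, by simp [hi]⟩
    · exact Or.inr ⟨i, sr_inv _ _, hi⟩


section basic
variable (hp : p.Prime)
include hp

lemma p2_ne_zero : p^2 ≠ 0 := pow_ne_zero _ hp.ne_zero
lemma one_lt_p2 : 1 < p^2 := one_lt_pow₀ hp.one_lt two_ne_zero

lemma cast_p_ne_zero : (p : ZMod (p^2)) ≠ 0 := by
  haveI : NeZero (p^2) := ⟨p2_ne_zero hp⟩
  rw [Ne, ZMod.natCast_eq_zero_iff]
  exact fun h => absurd (Nat.le_of_dvd hp.pos h) (by nlinarith [hp.two_le])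

lemma one_ne_zero_zmod : (1 : ZMod (p^2)) ≠ 0 := by
  haveI : Fact (1 < p^2) := ⟨one_lt_p2 hp⟩
  exact one_ne_zero

omit hp in
lemma pr_p_eq_zero : pr p (p : ZMod (p^2)) = 0 := by
  rw [map_natCast, ZMod.natCast_self]

lemma pr_one_ne_zero : pr p 1 ≠ 0 := by
  haveI : Fact (1 < p) := ⟨hp.one_lt⟩
  rw [map_one]; exact one_ne_zero

lemma pr_lift (j : ZMod p) : pr p ((j.val : ℕ) : ZMod (p^2)) = j := by
  haveI : NeZero p := ⟨hp.ne_zero⟩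
  rw [map_natCast]
  exact ZMod.natCast_rightInverse j


/-- the subgroup of multiples of `p` in `ZMod (p^2)` -/
def K (p : ℕ) : AddSubgroup (ZMod (p^2)) := AddSubgroup.zmultiples (p : ZMod (p^2))


lemma mem_K_iff {x : ZMod (p^2)} : x ∈ K p ↔ pr p x = 0 := by
  haveI : NeZero p := ⟨hp.ne_zero⟩
  haveI : NeZero (p^2) := ⟨pow_ne_zero _ hp.ne_zero⟩
  constructor
  · rintro ⟨k, rfl⟩
    simp only [zsmul_eq_mul, map_mul, map_intCast, map_natCast, ZMod.natCast_self, mul_zero]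
  · intro hx
    have hxv : ((x.val : ℕ) : ZMod (p^2)) = x := ZMod.natCast_rightInverse x
    have h1 : pr p ((x.val : ℕ) : ZMod (p^2)) = 0 := by rw [hxv]; exact hx
    rw [map_natCast] at h1
    have h2 : p ∣ x.val := (ZMod.natCast_eq_zero_iff _ _).mp h1
    refine ⟨((x.val / p : ℕ) : ℤ), ?_⟩
    show ((x.val / p : ℕ) : ℤ) • ((p : ℕ) : ZMod (p^2)) = x
    rw [natCast_zsmul, nsmul_eq_mul]
    rw [← Nat.cast_mul, Nat.div_mul_cancel h2, hxv]

lemma card_K : Nat.card (K p) = p := by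
  haveI : NeZero (p^2) := ⟨pow_ne_zero _ hp.ne_zero⟩
  rw [K, Nat.card_zmultiples, ZMod.addOrderOf_coe p (pow_ne_zero _ hp.ne_zero),
    Nat.gcd_eq_right (dvd_pow_self p two_ne_zero), pow_two, Nat.mul_div_cancel_left p hp.pos]

lemma addsub_classify (S : AddSubgroup (ZMod (p^2))) : S = ⊥ ∨ S = K p ∨ S = ⊤ := by
  haveI : NeZero (p^2) := ⟨pow_ne_zero _ hp.ne_zero⟩
  have hdvd : Nat.card S ∣ p^2 := by
    have := AddSubgroup.card_addSubgroup_dvd_card S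
    rwa [Nat.card_zmod] at this
  obtain ⟨k, hk, hcard⟩ := (Nat.dvd_prime_pow hp).mp hdvd
  interval_cases k
  · left
    exact AddSubgroup.eq_bot_of_card_eq _ (by simpa using hcard)
  · right; left
    have hle : S ≤ K p := by
      intro x hx
      have h1 : p • (⟨x, hx⟩ : S) = 0 := by
        have := card_nsmul_eq_zero' (G := S) (x := ⟨x, hx⟩)
        rwa [hcard, pow_one] at this
      have h2 : p • x = 0 := by
        have := congrArg (Subtype.val) h1
        simpa using this
      rw [mem_K_iff hp]
      have hxv : ((x.val : ℕ) : ZMod (p^2)) = x := ZMod.natCast_rightInverse x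
      have h3 : ((p * x.val : ℕ) : ZMod (p^2)) = 0 := by
        push_cast
        rw [hxv, ← nsmul_eq_mul, h2]
      have h4 : p^2 ∣ p * x.val := (ZMod.natCast_eq_zero_iff _ _).mp h3
      have h5 : p ∣ x.val := by
        rcases h4 with ⟨c, hc⟩
        exact ⟨c, by nlinarith [hp.pos]⟩
      have h6 : pr p ((x.val : ℕ) : ZMod (p^2)) = 0 := by
        rw [map_natCast]
        exact (ZMod.natCast_eq_zero_iff _ _).mpr h5
      rwa [hxv] at h6
    exact AddSubgroup.eq_of_le_of_card_ge hle (by rw [card_K hp, hcard, pow_one])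
  · right; right
    exact AddSubgroup.eq_top_of_card_eq _ (by rw [hcard, Nat.card_zmod])

omit hp in
lemma mem_A {x : DihedralGroup (p^2)} : x ∈ A p ↔ ∃ i, x = r i ∧ pr p i = 0 := Iff.rfl
omit hp in
lemma mem_B {x : DihedralGroup (p^2)} : x ∈ B p ↔ ∃ i, x = r i := Iff.rfl
omit hp in
lemma mem_R {x : DihedralGroup (p^2)} {i : ZMod (p^2)} : x ∈ R p i ↔ x = 1 ∨ x = sr i := Iff.rfl
omit hp in
lemma mem_D {x : DihedralGroup (p^2)} {j : ZMod p} :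
    x ∈ D p j ↔ (∃ i, x = r i ∧ pr p i = 0) ∨ (∃ i, x = sr i ∧ pr p i = j) := Iff.rfl

omit hp in
lemma r_mem_A {i : ZMod (p^2)} : r i ∈ A p ↔ pr p i = 0 := by
  rw [mem_A]
  constructor
  · rintro ⟨i', hi', h⟩
    obtain rfl : i = i' := by simpa using hi'
    exact h
  · exact fun h => ⟨i, rfl, h⟩

omit hp in
lemma sr_not_mem_A {i : ZMod (p^2)} : sr i ∉ A p := by
  rw [mem_A]; rintro ⟨i', hi', -⟩; simp at hi'

omit hp in
lemma sr_not_mem_B {i : ZMod (p^2)} : sr i ∉ B p := by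
  rw [mem_B]; rintro ⟨i', hi'⟩; simp at hi'

omit hp in
lemma r_mem_D {i : ZMod (p^2)} {j : ZMod p} : r i ∈ D p j ↔ pr p i = 0 := by
  rw [mem_D]
  constructor
  · rintro (⟨i', hi', h⟩ | ⟨i', hi', -⟩)
    · obtain rfl : i = i' := by simpa using hi'
      exact h
    · simp at hi'
  · exact fun h => Or.inl ⟨i, rfl, h⟩

omit hp in
lemma sr_mem_D {i : ZMod (p^2)} {j : ZMod p} : sr i ∈ D p j ↔ pr p i = j := by
  rw [mem_D]
  constructor
  · rintro (⟨i', hi', -⟩ | ⟨i', hi', h⟩)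
    · simp at hi'
    · obtain rfl : i = i' := by simpa using hi'
      exact h
  · exact fun h => Or.inr ⟨i, rfl, h⟩

omit hp in
lemma r_mem_R {i i' : ZMod (p^2)} : r i ∈ R p i' ↔ i = 0 := by
  rw [mem_R, one_def]
  simp [-r_zero]

omit hp in
lemma sr_mem_R {i i' : ZMod (p^2)} : sr i ∈ R p i' ↔ i = i' := by
  rw [mem_R, one_def]
  simp [-r_zero]

/-- the additive subgroup of rotation exponents of `H` -/
def rotS (H : Subgroup (DihedralGroup (p^2))) : AddSubgroup (ZMod (p^2)) where
  carrier := {i | r i ∈ H}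
  zero_mem' := by show r 0 ∈ H; rw [← one_def]; exact H.one_mem
  add_mem' := by intro a b ha hb; show r (a + b) ∈ H; rw [← r_mul_r]; exact H.mul_mem ha hb
  neg_mem' := by intro a ha; show r (-a) ∈ H; rw [← r_inv]; exact H.inv_mem ha

omit hp in
lemma mem_rotS {H : Subgroup (DihedralGroup (p^2))} {i : ZMod (p^2)} :
    i ∈ rotS H ↔ r i ∈ H := Iff.rfl

theorem classify (H : Subgroup (DihedralGroup (p^2))) (h1 : H ≠ ⊥) (h2 : H ≠ ⊤) :
    H = A p ∨ H = B p ∨ (∃ i, H = R p i) ∨ (∃ j, H = D p j) := by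
  by_cases hsr : ∃ a, sr a ∈ H
  · obtain ⟨a, ha⟩ := hsr
    have hmemsr : ∀ b : ZMod (p^2), sr b ∈ H ↔ b - a ∈ rotS H := by
      intro b
      constructor
      · intro hb
        have := H.mul_mem ha hb
        rwa [sr_mul_sr] at this
      · intro hb
        have := H.mul_mem ha (mem_rotS.mp hb)
        rwa [sr_mul_r, add_sub_cancel] at this
    rcases addsub_classify hp (rotS H) with hS | hS | hS
    · right; right; left
      refine ⟨a, ?_⟩
      ext x
      cases x with
      | r i =>
        rw [r_mem_R, ← mem_rotS (H := H), hS, AddSubgroup.mem_bot]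
      | sr b =>
        rw [sr_mem_R, hmemsr, hS]
        simp [sub_eq_zero]
    · right; right; right
      refine ⟨pr p a, ?_⟩
      ext x
      cases x with
      | r i =>
        rw [r_mem_D, ← mem_K_iff hp, ← hS]
        exact Iff.rfl
      | sr b =>
        rw [sr_mem_D, hmemsr, hS, mem_K_iff hp, map_sub, sub_eq_zero]
    · exfalso
      apply h2
      rw [Subgroup.eq_top_iff']
      intro x
      cases x with
      | r i => exact mem_rotS.mp (hS ▸ AddSubgroup.mem_top i)
      | sr b => exact (hmemsr b).mpr (hS ▸ AddSubgroup.mem_top _)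
  · push_neg at hsr
    rcases addsub_classify hp (rotS H) with hS | hS | hS
    · exfalso
      apply h1
      rw [Subgroup.eq_bot_iff_forall]
      intro x hx
      cases x with
      | r i =>
        have : i ∈ rotS H := hx
        rw [hS] at this
        simp only [AddSubgroup.mem_bot] at this
        rw [this, ← one_def]
      | sr b => exact absurd hx (hsr b)
    · left
      ext x
      cases x with
      | r i =>
        rw [r_mem_A, ← mem_K_iff hp, ← hS]
        exact Iff.rfl
      | sr b => simp [hsr b, sr_not_mem_A]
    · right; left
      ext x
      cases x with
      | r i =>
        have : r i ∈ H := mem_rotS.mp (hS ▸ AddSubgroup.mem_top i)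
        simp [this, mem_B]
      | sr b => simp [hsr b, sr_not_mem_B]


lemma r_p_ne_one : r (p : ZMod (p^2)) ≠ 1 := by
  rw [one_def]
  simpa [-r_zero] using cast_p_ne_zero hp

lemma r_one_ne_one : r (1 : ZMod (p^2)) ≠ 1 := by
  rw [one_def]
  simpa [-r_zero] using one_ne_zero_zmod hp

omit hp in
lemma sr_ne_one {i : ZMod (p^2)} : sr i ≠ 1 := by rw [one_def]; simp [-r_zero]

lemma A_ne_bot : A p ≠ ⊥ := fun h => r_p_ne_one hp
  (Subgroup.eq_bot_iff_forall _ |>.mp h _ (r_mem_A.mpr (pr_p_eq_zero)))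

omit hp in
lemma A_ne_top : A p ≠ ⊤ := fun h => sr_not_mem_A (i := 0) (h ▸ Subgroup.mem_top _)

lemma B_ne_bot : B p ≠ ⊥ := fun h => r_one_ne_one hp
  (Subgroup.eq_bot_iff_forall _ |>.mp h _ ⟨1, rfl⟩)

omit hp in
lemma B_ne_top : B p ≠ ⊤ := fun h => sr_not_mem_B (i := 0) (h ▸ Subgroup.mem_top _)

omit hp in
lemma R_ne_bot {i : ZMod (p^2)} : R p i ≠ ⊥ := fun h => sr_ne_one
  (Subgroup.eq_bot_iff_forall _ |>.mp h _ (sr_mem_R.mpr rfl))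

lemma R_ne_top {i : ZMod (p^2)} : R p i ≠ ⊤ := by
  intro h
  have : r (1 : ZMod (p^2)) ∈ R p i := h ▸ Subgroup.mem_top _
  rw [r_mem_R] at this
  exact one_ne_zero_zmod hp this

lemma D_ne_bot {j : ZMod p} : D p j ≠ ⊥ := fun h => r_p_ne_one hp
  (Subgroup.eq_bot_iff_forall _ |>.mp h _ (r_mem_D.mpr (pr_p_eq_zero)))

lemma D_ne_top {j : ZMod p} : D p j ≠ ⊤ := by
  intro h
  have : r (1 : ZMod (p^2)) ∈ D p j := h ▸ Subgroup.mem_top _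
  rw [r_mem_D] at this
  exact pr_one_ne_zero hp this

-- distinctness
lemma A_ne_B : A p ≠ B p := by
  intro h
  have : r (1 : ZMod (p^2)) ∈ A p := h ▸ (⟨1, rfl⟩ : r (1 : ZMod (p^2)) ∈ B p)
  exact pr_one_ne_zero hp (r_mem_A.mp this)

lemma A_ne_R {i : ZMod (p^2)} : A p ≠ R p i := by
  intro h
  have : r (p : ZMod (p^2)) ∈ R p i := h ▸ r_mem_A.mpr pr_p_eq_zero
  exact cast_p_ne_zero hp (r_mem_R.mp this)

lemma A_ne_D {j : ZMod p} : A p ≠ D p j := by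
  intro h
  exact sr_not_mem_A (h ▸ sr_mem_D.mpr (pr_lift hp j))

lemma B_ne_R {i : ZMod (p^2)} : B p ≠ R p i := by
  intro h
  have : r (1 : ZMod (p^2)) ∈ R p i := h ▸ ⟨1, rfl⟩
  exact one_ne_zero_zmod hp (r_mem_R.mp this)

lemma B_ne_D {j : ZMod p} : B p ≠ D p j := by
  intro h
  have : r (1 : ZMod (p^2)) ∈ D p j := h ▸ ⟨1, rfl⟩
  exact pr_one_ne_zero hp (r_mem_D.mp this)

lemma R_ne_D {i : ZMod (p^2)} {j : ZMod p} : R p i ≠ D p j := by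
  intro h
  have : r (p : ZMod (p^2)) ∈ R p i := h ▸ r_mem_D.mpr pr_p_eq_zero
  exact cast_p_ne_zero hp (r_mem_R.mp this)

omit hp in
lemma R_inj {i i' : ZMod (p^2)} (h : R p i = R p i') : i = i' := by
  have : sr i ∈ R p i' := h ▸ sr_mem_R.mpr rfl
  exact sr_mem_R.mp this

lemma D_inj {j j' : ZMod p} (h : D p j = D p j') : j = j' := by
  have : sr ((j.val : ℕ) : ZMod (p^2)) ∈ D p j' := h ▸ sr_mem_D.mpr (pr_lift hp j)
  rw [sr_mem_D, pr_lift hp] at this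
  exact this

-- intersections
omit hp in
lemma inf_ne_bot {H K' : Subgroup (DihedralGroup (p^2))} {x : DihedralGroup (p^2)}
    (hx : x ≠ 1) (h1 : x ∈ H) (h2 : x ∈ K') : H ⊓ K' ≠ ⊥ := fun h =>
  hx (Subgroup.eq_bot_iff_forall _ |>.mp h x (Subgroup.mem_inf.mpr ⟨h1, h2⟩))

omit hp in
lemma A_inf_R {i : ZMod (p^2)} : A p ⊓ R p i = ⊥ := by
  rw [Subgroup.eq_bot_iff_forall]
  intro x hx
  rw [Subgroup.mem_inf, mem_R] at hx
  rcases hx with ⟨hA, rfl | rfl⟩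
  · rfl
  · exact absurd hA sr_not_mem_A

omit hp in
lemma B_inf_R {i : ZMod (p^2)} : B p ⊓ R p i = ⊥ := by
  rw [Subgroup.eq_bot_iff_forall]
  intro x hx
  rw [Subgroup.mem_inf, mem_R] at hx
  rcases hx with ⟨hB, rfl | rfl⟩
  · rfl
  · exact absurd hB sr_not_mem_B

omit hp in
lemma R_inf_R {i i' : ZMod (p^2)} (h : i ≠ i') : R p i ⊓ R p i' = ⊥ := by
  rw [Subgroup.eq_bot_iff_forall]
  intro x hx
  rw [Subgroup.mem_inf, mem_R, mem_R] at hx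
  rcases hx with ⟨rfl | rfl, h2 | h2⟩ <;> first
  | rfl
  | (exact absurd h2 sr_ne_one.symm) | (exact absurd (sr.inj h2) h) | (exact h2)

omit hp in
lemma R_inf_D {i : ZMod (p^2)} {j : ZMod p} (h : pr p i ≠ j) : R p i ⊓ D p j = ⊥ := by
  rw [Subgroup.eq_bot_iff_forall]
  intro x hx
  rw [Subgroup.mem_inf, mem_R] at hx
  rcases hx with ⟨rfl | rfl, hD⟩
  · rfl
  · exact absurd (sr_mem_D.mp hD) h


omit hp in
lemma vne {n : ℕ} {u v : Vert n} (h : u.1 ≠ v.1) : u ≠ v :=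
  fun he => h (congrArg Subtype.val he)

def vA : Vert (p^2) := ⟨A p, A_ne_bot hp, A_ne_top⟩
def vB : Vert (p^2) := ⟨B p, B_ne_bot hp, B_ne_top⟩
def vR (i : ZMod (p^2)) : Vert (p^2) := ⟨R p i, R_ne_bot, R_ne_top hp⟩
def vD (j : ZMod p) : Vert (p^2) := ⟨D p j, D_ne_bot hp, D_ne_top hp⟩


lemma adj_AB : (interGraph (DihedralGroup (p^2))).Adj (vA hp) (vB hp) :=
  And.intro (vne (A_ne_B hp)) (inf_ne_bot (r_p_ne_one hp) (r_mem_A.mpr pr_p_eq_zero) ⟨_, rfl⟩)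

lemma adj_AD {j : ZMod p} : (interGraph (DihedralGroup (p^2))).Adj (vA hp) (vD hp j) :=
  And.intro (vne (A_ne_D hp)) (inf_ne_bot (r_p_ne_one hp) (r_mem_A.mpr pr_p_eq_zero)
    (r_mem_D.mpr pr_p_eq_zero))

lemma adj_BD {j : ZMod p} : (interGraph (DihedralGroup (p^2))).Adj (vB hp) (vD hp j) :=
  And.intro (vne (B_ne_D hp)) (inf_ne_bot (r_p_ne_one hp) ⟨_, rfl⟩ (r_mem_D.mpr pr_p_eq_zero))

lemma adj_DD {j j' : ZMod p} (h : j ≠ j') : (interGraph (DihedralGroup (p^2))).Adj (vD hp j) (vD hp j') :=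
  And.intro (vne (fun he => h (D_inj hp he))) (inf_ne_bot (r_p_ne_one hp) (r_mem_D.mpr pr_p_eq_zero)
    (r_mem_D.mpr pr_p_eq_zero))

lemma adj_RD {i : ZMod (p^2)} : (interGraph (DihedralGroup (p^2))).Adj (vR hp i) (vD hp (pr p i)) :=
  And.intro (vne (R_ne_D hp)) (inf_ne_bot sr_ne_one (sr_mem_R.mpr rfl) (sr_mem_D.mpr rfl))

lemma adj_vR {i : ZMod (p^2)} {w : Vert (p^2)} (h : (interGraph (DihedralGroup (p^2))).Adj (vR hp i) w) :
    w = vD hp (pr p i) := by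
  have h2 : R p i ⊓ w.1 ≠ ⊥ := And.right h
  have h1 : vR hp i ≠ w := And.left h
  rcases classify hp w.1 w.2.1 w.2.2 with hw | hw | ⟨k, hw⟩ | ⟨j, hw⟩
  · rw [hw, inf_comm] at h2; exact absurd A_inf_R h2
  · rw [hw, inf_comm] at h2; exact absurd B_inf_R h2
  · rcases eq_or_ne i k with rfl | hik
    · have : w = vR hp i := Subtype.ext hw
      exact absurd this.symm h1
    · rw [hw] at h2; exact absurd (R_inf_R hik) h2
  · rcases eq_or_ne (pr p i) j with he | hne
    · refine Subtype.ext ?_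
      show w.1 = D p (pr p i)
      rw [hw, he]
    · rw [hw] at h2; exact absurd (R_inf_D hne) h2

-- distance lemmas
lemma dist_AB : (interGraph (DihedralGroup (p^2))).dist (vA hp) (vB hp) = 1 :=
  SimpleGraph.dist_eq_one_iff_adj.mpr (adj_AB hp)

lemma dist_AD {j : ZMod p} : (interGraph (DihedralGroup (p^2))).dist (vA hp) (vD hp j) = 1 :=
  SimpleGraph.dist_eq_one_iff_adj.mpr (adj_AD hp)

lemma dist_BD {j : ZMod p} : (interGraph (DihedralGroup (p^2))).dist (vB hp) (vD hp j) = 1 :=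
  SimpleGraph.dist_eq_one_iff_adj.mpr (adj_BD hp)

lemma dist_DD {j j' : ZMod p} (h : j ≠ j') : (interGraph (DihedralGroup (p^2))).dist (vD hp j) (vD hp j') = 1 :=
  SimpleGraph.dist_eq_one_iff_adj.mpr (adj_DD hp h)

lemma dist_RD_adj {i : ZMod (p^2)} : (interGraph (DihedralGroup (p^2))).dist (vR hp i) (vD hp (pr p i)) = 1 :=
  SimpleGraph.dist_eq_one_iff_adj.mpr (adj_RD hp)

lemma dist_AR {i : ZMod (p^2)} : (interGraph (DihedralGroup (p^2))).dist (vA hp) (vR hp i) = 2 :=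
  dist_eq_two _ (vne (A_ne_R hp)) (fun h => And.right h A_inf_R)
    (adj_AD hp (j := pr p i)) ((adj_RD hp).symm)

lemma dist_BR {i : ZMod (p^2)} : (interGraph (DihedralGroup (p^2))).dist (vB hp) (vR hp i) = 2 :=
  dist_eq_two _ (vne (B_ne_R hp)) (fun h => And.right h B_inf_R)
    (adj_BD hp (j := pr p i)) ((adj_RD hp).symm)

lemma dist_RD_ne {i : ZMod (p^2)} {j : ZMod p} (h : pr p i ≠ j) :
    (interGraph (DihedralGroup (p^2))).dist (vR hp i) (vD hp j) = 2 :=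
  dist_eq_two _ (vne (R_ne_D hp)) (fun hadj => And.right hadj (R_inf_D h))
    (adj_RD hp) (adj_DD hp h)

lemma dist_RR_two {i i' : ZMod (p^2)} (hik : i ≠ i') (hpr : pr p i = pr p i') :
    (interGraph (DihedralGroup (p^2))).dist (vR hp i) (vR hp i') = 2 :=
  dist_eq_two _ (vne fun h => hik (R_inj h)) (fun hadj => And.right hadj (R_inf_R hik))
    (adj_RD hp) (by rw [hpr]; exact (adj_RD hp).symm)

lemma dist_RR_three {i i' : ZMod (p^2)} (hpr : pr p i ≠ pr p i') :
    (interGraph (DihedralGroup (p^2))).dist (vR hp i) (vR hp i') = 3 := by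
  have hik : i ≠ i' := fun h => hpr (by rw [h])
  refine dist_eq_three _ (vne fun h => hik (R_inj h)) (fun hadj => And.right hadj (R_inf_R hik))
    ?_ (adj_RD hp) (adj_DD hp hpr) ((adj_RD hp (i := i')).symm)
  rintro w ⟨h1, h2⟩
  have hw1 := adj_vR hp h1
  have hw2 := adj_vR hp h2.symm
  rw [hw1] at hw2
  exact hpr (D_inj hp (congrArg Subtype.val hw2))


/-- enumeration of the vertices -/
def eV : (Unit ⊕ Unit ⊕ ZMod (p^2) ⊕ ZMod p) → Vert (p^2)
  | Sum.inl _ => vA hp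
  | Sum.inr (Sum.inl _) => vB hp
  | Sum.inr (Sum.inr (Sum.inl i)) => vR hp i
  | Sum.inr (Sum.inr (Sum.inr j)) => vD hp j

lemma eV_bij : Function.Bijective (eV hp) := by
  constructor
  · rintro (⟨⟩ | ⟨⟩ | i | j) (⟨⟩ | ⟨⟩ | i' | j') h <;>
      have h' := congrArg Subtype.val h <;>
      simp only [eV, vA, vB, vR, vD] at h'
    · rfl
    · exact absurd h' (A_ne_B hp)
    · exact absurd h' (A_ne_R hp)
    · exact absurd h' (A_ne_D hp)
    · exact absurd h'.symm (A_ne_B hp)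
    · rfl
    · exact absurd h' (B_ne_R hp)
    · exact absurd h' (B_ne_D hp)
    · exact absurd h'.symm (A_ne_R hp)
    · exact absurd h'.symm (B_ne_R hp)
    · rw [R_inj h']
    · exact absurd h' (R_ne_D hp)
    · exact absurd h'.symm (A_ne_D hp)
    · exact absurd h'.symm (B_ne_D hp)
    · exact absurd h'.symm (R_ne_D hp)
    · rw [D_inj hp h']
  · intro v
    rcases classify hp v.1 v.2.1 v.2.2 with hv | hv | ⟨i, hv⟩ | ⟨j, hv⟩
    · exact ⟨Sum.inl (), (Subtype.ext hv).symm⟩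
    · exact ⟨Sum.inr (Sum.inl ()), (Subtype.ext hv).symm⟩
    · exact ⟨Sum.inr (Sum.inr (Sum.inl i)), (Subtype.ext hv).symm⟩
    · exact ⟨Sum.inr (Sum.inr (Sum.inr j)), (Subtype.ext hv).symm⟩

lemma card_fiber [NeZero (p^2)] (c : ZMod p) :
    (Finset.univ.filter (fun i : ZMod (p^2) => pr p i = c)).card = p := by
  haveI : NeZero p := ⟨hp.ne_zero⟩
  haveI : NeZero (p^2) := ⟨p2_ne_zero hp⟩
  have h0 : pr p ((c.val : ℕ) : ZMod (p^2)) = c := pr_lift hp c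
  have e1 : {x : ZMod (p^2) // pr p x = 0} ≃ {x : ZMod (p^2) // pr p x = c} :=
    { toFun := fun x => ⟨x.1 + ((c.val : ℕ) : ZMod (p^2)), by rw [map_add, x.2, h0, zero_add]⟩
      invFun := fun y => ⟨y.1 - ((c.val : ℕ) : ZMod (p^2)), by rw [map_sub, y.2, h0, sub_self]⟩
      left_inv := fun x => by simp
      right_inv := fun y => by simp }
  have e2 : {x : ZMod (p^2) // pr p x = 0} ≃ (K p) :=
    Equiv.subtypeEquivRight (fun x => (mem_K_iff hp).symm)
  rw [← Fintype.card_subtype, Fintype.card_eq_nat_card, Nat.card_congr (e1.symm.trans e2)]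
  exact card_K hp


/-- summand: `d + d^2` -/
noncomputable def FF (p : ℕ) (u v : Vert (p^2)) : ℕ :=
  (interGraph (DihedralGroup (p^2))).dist u v +
    ((interGraph (DihedralGroup (p^2))).dist u v) ^ 2

omit hp in
lemma FF_self {u : Vert (p^2)} : FF p u u = 0 := by
  simp [FF, SimpleGraph.dist_self]

omit hp in
lemma FF_of_dist {u v : Vert (p^2)} {d : ℕ}
    (h : (interGraph (DihedralGroup (p^2))).dist u v = d) : FF p u v = d + d^2 := by
  rw [FF, h]

omit hp in
lemma FF_comm {u v : Vert (p^2)} : FF p u v = FF p v u := by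
  rw [FF, FF, SimpleGraph.dist_comm]

section rows
variable [NeZero p] [NeZero (p^2)]

lemma row_A : ∑ b : Unit ⊕ Unit ⊕ ZMod (p^2) ⊕ ZMod p, FF p (vA hp) (eV hp b)
    = 6 * p^2 + 2 * p + 2 := by
  rw [Fintype.sum_sum_type, Fintype.sum_sum_type, Fintype.sum_sum_type]
  simp only [eV]
  rw [Finset.sum_congr rfl (fun i _ => FF_of_dist (dist_AR hp)),
    Finset.sum_congr rfl (fun j _ => FF_of_dist (dist_AD hp)),
    Fintype.sum_unique, Fintype.sum_unique, FF_self, FF_of_dist (dist_AB hp),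
    Finset.sum_const, Finset.sum_const, Finset.card_univ, Finset.card_univ,
    ZMod.card, ZMod.card, smul_eq_mul, smul_eq_mul]
  ring

lemma row_B : ∑ b : Unit ⊕ Unit ⊕ ZMod (p^2) ⊕ ZMod p, FF p (vB hp) (eV hp b)
    = 6 * p^2 + 2 * p + 2 := by
  rw [Fintype.sum_sum_type, Fintype.sum_sum_type, Fintype.sum_sum_type]
  simp only [eV]
  rw [Finset.sum_congr rfl (fun i _ => FF_of_dist (dist_BR hp)),
    Finset.sum_congr rfl (fun j _ => FF_of_dist (dist_BD hp)),
    Fintype.sum_unique, Fintype.sum_unique, FF_self,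
    FF_comm.trans (FF_of_dist (dist_AB hp)),
    Finset.sum_const, Finset.sum_const, Finset.card_univ, Finset.card_univ,
    ZMod.card, ZMod.card, smul_eq_mul, smul_eq_mul]
  ring

lemma FF_RR (i i' : ZMod (p^2)) :
    FF p (vR hp i) (vR hp i') =
      if i' = i then 0 else if pr p i' = pr p i then 6 else 12 := by
  split_ifs with h1 h2
  · rw [h1, FF_self]
  · exact FF_of_dist (dist_RR_two hp (fun h => h1 h.symm) h2.symm)
  · exact FF_of_dist (dist_RR_three hp (fun h => h2 h.symm))

lemma FF_RD (i : ZMod (p^2)) (j : ZMod p) :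
    FF p (vR hp i) (vD hp j) = if pr p i = j then 2 else 6 := by
  split_ifs with h1
  · rw [← h1]; exact FF_of_dist (dist_RD_adj hp)
  · exact FF_of_dist (dist_RD_ne hp h1)

lemma FF_DD (j j' : ZMod p) :
    FF p (vD hp j) (vD hp j') = if j' = j then 0 else 2 := by
  split_ifs with h1
  · rw [h1, FF_self]
  · exact FF_of_dist (dist_DD hp (fun h => h1 h.symm))

lemma row_R (i : ZMod (p^2)) :
    ∑ b : Unit ⊕ Unit ⊕ ZMod (p^2) ⊕ ZMod p, FF p (vR hp i) (eV hp b)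
    = 12 * p^2 + 2 := by
  rw [Fintype.sum_sum_type, Fintype.sum_sum_type, Fintype.sum_sum_type]
  simp only [eV]
  rw [Fintype.sum_unique, Fintype.sum_unique,
    FF_comm.trans (FF_of_dist (dist_AR hp)), FF_comm.trans (FF_of_dist (dist_BR hp)),
    Finset.sum_congr rfl (fun i' _ => FF_RR hp i i'),
    Finset.sum_congr rfl (fun j _ => FF_RD hp i j)]
  -- first conditional sum
  rw [Finset.sum_ite, Finset.sum_const_zero, zero_add, Finset.filter_ne',
    Finset.sum_ite, Finset.sum_const, Finset.sum_const, smul_eq_mul, smul_eq_mul]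
  -- second conditional sum: over j, if pr p i = j then 2 else 6
  have h2 : (∑ j : ZMod p, if pr p i = j then 2 else 6)
      = 2 + 6 * (Finset.univ.erase (pr p i)).card := by
    rw [Finset.sum_ite, Finset.sum_const, Finset.sum_const, smul_eq_mul, smul_eq_mul]
    have : Finset.univ.filter (fun j : ZMod p => pr p i = j) = {pr p i} := by
      ext x
      simp [eq_comm]
    rw [this]
    have : Finset.univ.filter (fun j : ZMod p => ¬ pr p i = j)
        = Finset.univ.erase (pr p i) := by
      rw [← Finset.filter_ne']
      apply Finset.filter_congr
      intro x _
      simp [ne_comm, eq_comm]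
    rw [this]
    simp [mul_comm]
  rw [h2]
  -- cards
  have hc1 : ((Finset.univ.erase i).filter (fun i' => pr p i' = pr p i)).card + 1 = p := by
    rw [Finset.filter_erase, Finset.card_erase_add_one (by simp)]
    exact card_fiber hp (pr p i)
  have hc12 : ((Finset.univ.erase i).filter (fun i' => pr p i' = pr p i)).card
      + ((Finset.univ.erase i).filter (fun i' => ¬ pr p i' = pr p i)).card + 1 = p^2 := by
    rw [Finset.card_filter_add_card_filter_not,
      Finset.card_erase_add_one (Finset.mem_univ i), Finset.card_univ, ZMod.card]
  have he : (Finset.univ.erase (pr p i)).card + 1 = p := by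
    rw [Finset.card_erase_add_one (Finset.mem_univ _), Finset.card_univ, ZMod.card]
  linarith

lemma row_D (j : ZMod p) :
    (∑ b : Unit ⊕ Unit ⊕ ZMod (p^2) ⊕ ZMod p, FF p (vD hp j) (eV hp b)) + 2 * p
    = 6 * p^2 + 2 := by
  rw [Fintype.sum_sum_type, Fintype.sum_sum_type, Fintype.sum_sum_type]
  simp only [eV]
  rw [Fintype.sum_unique, Fintype.sum_unique,
    FF_comm.trans (FF_of_dist (dist_AD hp)), FF_comm.trans (FF_of_dist (dist_BD hp)),
    Finset.sum_congr rfl (fun i _ => FF_comm.trans (FF_RD hp i j)),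
    Finset.sum_congr rfl (fun j' _ => (FF_DD hp j j'))]
  rw [Finset.sum_ite, Finset.sum_const, Finset.sum_const, smul_eq_mul, smul_eq_mul,
    Finset.sum_ite, Finset.sum_const_zero, zero_add, Finset.filter_ne',
    Finset.sum_const, smul_eq_mul]
  have hd1 : (Finset.univ.filter (fun i : ZMod (p^2) => pr p i = j)).card = p :=
    card_fiber hp j
  have hd12 : (Finset.univ.filter (fun i : ZMod (p^2) => pr p i = j)).card
      + (Finset.univ.filter (fun i : ZMod (p^2) => ¬ pr p i = j)).card = p^2 := by
    rw [Finset.card_filter_add_card_filter_not, Finset.card_univ, ZMod.card]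
  have he : (Finset.univ.erase j).card + 1 = p := by
    rw [Finset.card_erase_add_one (Finset.mem_univ _), Finset.card_univ, ZMod.card]
  linarith

end rows

end basic
end S13


theorem stmt13 (p : ℕ) (hp : p.Prime) :
    ∑ᶠ u : Vert (p ^ 2), ∑ᶠ v : Vert (p ^ 2),
        ((interGraph (DihedralGroup (p ^ 2))).dist u v +
          ((interGraph (DihedralGroup (p ^ 2))).dist u v) ^ 2) =
      12 * p ^ 4 + 6 * p ^ 3 + 12 * p ^ 2 + 6 * p + 4 := by
  haveI : NeZero p := ⟨hp.ne_zero⟩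
  haveI : NeZero (p ^ 2) := ⟨S13.p2_ne_zero hp⟩
  let g : (Unit ⊕ Unit ⊕ ZMod (p^2) ⊕ ZMod p) → ℕ :=
    fun a => ∑ b, S13.FF p (S13.eV hp a) (S13.eV hp b)
  have key : ∑ a, g a = 12 * p ^ 4 + 6 * p ^ 3 + 12 * p ^ 2 + 6 * p + 4 := by
    rw [Fintype.sum_sum_type, Fintype.sum_sum_type, Fintype.sum_sum_type,
      Fintype.sum_unique, Fintype.sum_unique]
    have hgA : g (Sum.inl default) = 6 * p ^ 2 + 2 * p + 2 := S13.row_A hp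
    have hgB : g (Sum.inr (Sum.inl default)) = 6 * p ^ 2 + 2 * p + 2 := S13.row_B hp
    have hgR : ∀ i : ZMod (p^2), g (Sum.inr (Sum.inr (Sum.inl i))) = 12 * p ^ 2 + 2 :=
      fun i => S13.row_R hp i
    rw [hgA, hgB, Finset.sum_congr rfl (fun i (_ : i ∈ Finset.univ) => hgR i),
      Finset.sum_const, Finset.card_univ, ZMod.card, smul_eq_mul]
    have hD : (∑ j : ZMod p, g (Sum.inr (Sum.inr (Sum.inr j)))) + p * (2 * p)
        = p * (6 * p ^ 2 + 2) := by
      have h := Finset.sum_congr rfl (fun j (_ : j ∈ Finset.univ) => S13.row_D hp j)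
      rw [Finset.sum_add_distrib, Finset.sum_const, Finset.sum_const, Finset.card_univ,
        ZMod.card, smul_eq_mul, smul_eq_mul] at h
      have h2 : (∑ j : ZMod p, g (Sum.inr (Sum.inr (Sum.inr j))))
          = ∑ j : ZMod p, ∑ b, S13.FF p (S13.vD hp j) (S13.eV hp b) :=
        Finset.sum_congr rfl fun j _ => rfl
      rw [h2]
      linarith
    have f1 : p ^ 2 * (12 * p ^ 2 + 2) = 12 * p ^ 4 + 2 * p ^ 2 := by ring
    have f2 : p * (6 * p ^ 2 + 2) = 6 * p ^ 3 + 2 * p := by ring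
    have f3 : p * (2 * p) = 2 * p ^ 2 := by ring
    linarith
  let E : (Unit ⊕ Unit ⊕ ZMod (p^2) ⊕ ZMod p) ≃ Vert (p^2) :=
    Equiv.ofBijective _ (S13.eV_bij hp)
  show (∑ᶠ u : Vert (p ^ 2), ∑ᶠ v : Vert (p ^ 2), S13.FF p u v) = _
  calc (∑ᶠ u : Vert (p ^ 2), ∑ᶠ v : Vert (p ^ 2), S13.FF p u v)
      = ∑ᶠ u : Vert (p ^ 2), ∑ᶠ b, S13.FF p u (E b) :=
        finsum_congr fun u => (finsum_comp_equiv E).symm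
    _ = ∑ᶠ a, ∑ᶠ b, S13.FF p (E a) (E b) := (finsum_comp_equiv E).symm
    _ = ∑ a, ∑ b, S13.FF p (E a) (E b) := by
        rw [finsum_eq_sum_of_fintype]
        exact Finset.sum_congr rfl fun a _ => finsum_eq_sum_of_fintype _
    _ = ∑ a, g a := rfl
    _ = 12 * p ^ 4 + 6 * p ^ 3 + 12 * p ^ 2 + 6 * p + 4 := key
end

section
/- For a prime p, the first Zagreb index of the intersection graph of D_{2p^2} equals 4p^3 + 7p^2 + 5p + 2. -/
open DihedralGroup Subgroup

namespace IG

variable {m : ℕ}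

/-- Subgroup of rotations with angle in `A`. -/
def sub1 (A : AddSubgroup (ZMod m)) : Subgroup (DihedralGroup m) where
  carrier := {x | ∃ i ∈ A, x = r i}
  one_mem' := ⟨0, A.zero_mem, rfl⟩
  mul_mem' := by
    rintro x y ⟨i, hi, rfl⟩ ⟨j, hj, rfl⟩
    exact ⟨i + j, A.add_mem hi hj, rfl⟩
  inv_mem' := by
    rintro x ⟨i, hi, rfl⟩
    exact ⟨-i, A.neg_mem hi, rfl⟩

/-- Dihedral-type subgroup: rotations in `A`, reflections in the coset `b + A`. -/
def sub2 (A : AddSubgroup (ZMod m)) (b : ZMod m) : Subgroup (DihedralGroup m) where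
  carrier := {x | (∃ i ∈ A, x = r i) ∨ (∃ j, j - b ∈ A ∧ x = sr j)}
  one_mem' := Or.inl ⟨0, A.zero_mem, rfl⟩
  mul_mem' := by
    rintro x y (⟨i, hi, rfl⟩ | ⟨i, hi, rfl⟩) (⟨j, hj, rfl⟩ | ⟨j, hj, rfl⟩)
    · exact Or.inl ⟨i + j, A.add_mem hi hj, rfl⟩
    · refine Or.inr ⟨j - i, ?_, rfl⟩
      have : j - i - b = (j - b) + (-i) := by ring
      rw [this]; exact A.add_mem hj (A.neg_mem hi)
    · refine Or.inr ⟨i + j, ?_, rfl⟩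
      have : i + j - b = (i - b) + j := by ring
      rw [this]; exact A.add_mem hi hj
    · refine Or.inl ⟨j - i, ?_, rfl⟩
      have : j - i = (j - b) - (i - b) := by ring
      rw [this]; exact A.sub_mem hj hi
  inv_mem' := by
    rintro x (⟨i, hi, rfl⟩ | ⟨i, hi, rfl⟩)
    · exact Or.inl ⟨-i, A.neg_mem hi, rfl⟩
    · exact Or.inr ⟨i, hi, rfl⟩

@[simp] lemma r_mem_sub1 {A : AddSubgroup (ZMod m)} {i : ZMod m} :
    r i ∈ sub1 A ↔ i ∈ A := by
  constructor
  · rintro ⟨j, hj, h⟩; injection h with h; exact h ▸ hj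
  · exact fun h => ⟨i, h, rfl⟩

@[simp] lemma sr_not_mem_sub1 {A : AddSubgroup (ZMod m)} {j : ZMod m} :
    sr j ∉ sub1 A := by
  rintro ⟨i, hi, h⟩; exact absurd h (by simp)

@[simp] lemma r_mem_sub2 {A : AddSubgroup (ZMod m)} {b i : ZMod m} :
    r i ∈ sub2 A b ↔ i ∈ A := by
  constructor
  · rintro (⟨j, hj, h⟩ | ⟨j, hj, h⟩)
    · injection h with h; exact h ▸ hj
    · exact absurd h (by simp)
  · exact fun h => Or.inl ⟨i, h, rfl⟩

@[simp] lemma sr_mem_sub2 {A : AddSubgroup (ZMod m)} {b j : ZMod m} :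
    sr j ∈ sub2 A b ↔ j - b ∈ A := by
  constructor
  · rintro (⟨i, hi, h⟩ | ⟨i, hi, h⟩)
    · exact absurd h (by simp)
    · injection h with h; exact h ▸ hi
  · exact fun h => Or.inr ⟨j, h, rfl⟩

/-- The additive subgroup of rotation indices of a subgroup. -/
def rot (H : Subgroup (DihedralGroup m)) : AddSubgroup (ZMod m) where
  carrier := {i | r i ∈ H}
  zero_mem' := by simpa [← one_def] using H.one_mem
  add_mem' := by
    intro a b ha hb
    simpa using H.mul_mem ha hb
  neg_mem' := by
    intro a ha
    show r (-a) ∈ H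
    have e : (r a)⁻¹ = r (-a) := rfl
    exact e ▸ H.inv_mem ha

@[simp] lemma mem_rot {H : Subgroup (DihedralGroup m)} {i : ZMod m} :
    i ∈ rot H ↔ r i ∈ H := Iff.rfl

/-- Every subgroup of a dihedral group is `sub1` or `sub2`. -/
lemma sub_eq (H : Subgroup (DihedralGroup m)) :
    H = sub1 (rot H) ∨ ∃ b, sr b ∈ H ∧ H = sub2 (rot H) b := by
  by_cases hB : ∃ b, sr b ∈ H
  · obtain ⟨b, hb⟩ := hB
    refine Or.inr ⟨b, hb, ?_⟩
    ext x
    cases x with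
    | r i => simp
    | sr j =>
      simp only [sr_mem_sub2, mem_rot]
      constructor
      · intro hj
        have := H.mul_mem hb hj
        simpa using this
      · intro hj
        have e : sr b * r (j - b) = sr j := by rw [sr_mul_r]; ring_nf
        exact e ▸ H.mul_mem hb hj
  · left
    ext x
    cases x with
    | r i => simp
    | sr j => simp only [sr_not_mem_sub1, iff_false]; exact fun h => hB ⟨j, h⟩

end IG

namespace IG

section P

variable (p : ℕ) [hp : Fact p.Prime]

lemma pp : p.Prime := hp.out

instance : NeZero (p ^ 2) := ⟨pow_ne_zero 2 (pp p).ne_zero⟩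

/-- The projection `ZMod (p^2) → ZMod p`. -/
def π : ZMod (p ^ 2) →+* ZMod p := ZMod.castHom (dvd_pow_self p two_ne_zero) (ZMod p)

/-- The kernel of `π` as an additive subgroup; this is the unique subgroup of order `p`. -/
def K : AddSubgroup (ZMod (p ^ 2)) := (π p).toAddMonoidHom.ker

lemma mem_K {x : ZMod (p ^ 2)} : x ∈ K p ↔ π p x = 0 := Iff.rfl

lemma pih_natCast (k : ℕ) : π p (k : ZMod (p ^ 2)) = (k : ZMod p) := map_natCast _ k

lemma pih_surj : Function.Surjective (π p) := by
  intro c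
  exact ⟨(c.val : ZMod (p ^ 2)), by rw [pih_natCast, ZMod.natCast_rightInverse.injective.eq_iff.mpr rfl, ZMod.natCast_val, ZMod.cast_id]⟩

lemma pih_apply (x : ZMod (p ^ 2)) : π p x = (x.val : ZMod p) := by
  conv_lhs => rw [show x = ((x.val : ℕ) : ZMod (p ^ 2)) by rw [ZMod.natCast_val, ZMod.cast_id]]
  rw [pih_natCast]

lemma card_K : Nat.card (K p) = p := by
  have h1 : Nat.card (ZMod (p ^ 2)) = p ^ 2 := Nat.card_zmod _
  have h2 : Nat.card (ZMod (p ^ 2) ⧸ K p) = p := by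
    simp only [K]
    rw [Nat.card_congr (QuotientAddGroup.quotientKerEquivOfSurjective (π p).toAddMonoidHom (pih_surj p)).toEquiv]
    exact Nat.card_zmod p
  have h := AddSubgroup.card_eq_card_quotient_mul_card_addSubgroup (K p)
  rw [h1, h2] at h
  have h3 : p * p = p * Nat.card (K p) := by rw [← pow_two]; exact h
  exact (Nat.eq_of_mul_eq_mul_left (pp p).pos h3).symm

lemma addsub_classify (A : AddSubgroup (ZMod (p ^ 2))) : A = ⊥ ∨ A = K p ∨ A = ⊤ := by
  have hdvd : Nat.card A ∣ p ^ 2 := by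
    simpa [Nat.card_zmod] using AddSubgroup.card_addSubgroup_dvd_card A
  obtain ⟨i, hi2, hcard⟩ := (Nat.dvd_prime_pow (pp p)).mp hdvd
  interval_cases i
  · left
    exact AddSubgroup.eq_bot_of_card_eq _ (by simpa using hcard)
  · right; left
    have hle : A ≤ K p := by
      intro a ha
      have : (Nat.card A) • (⟨a, ha⟩ : A) = 0 := card_nsmul_eq_zero'
      have h0 : p • a = 0 := by
        have := congrArg (AddSubgroup.subtype A) this
        simpa [hcard] using this
      rw [mem_K, pih_apply, ZMod.natCast_eq_zero_iff]
      have : ((p * a.val : ℕ) : ZMod (p ^ 2)) = 0 := by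
        push_cast
        rw [ZMod.natCast_val, ZMod.cast_id, ← nsmul_eq_mul]
        exact_mod_cast h0
      rw [ZMod.natCast_eq_zero_iff] at this
      exact (Nat.mul_dvd_mul_iff_left (pp p).pos).mp (by simpa [pow_two] using this)
    have : Nat.card (K p) ≤ Nat.card A := by rw [card_K, hcard, pow_one]
    exact AddSubgroup.eq_of_le_of_card_ge hle this
  · right; right
    exact AddSubgroup.eq_top_of_card_eq _ (by rw [hcard, Nat.card_zmod])

end P

end IG

namespace IG
section P2
set_option linter.unusedSectionVars false

variable (p : ℕ) [hp : Fact p.Prime]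

instance fact1p : Fact (1 < p) := ⟨(pp p).one_lt⟩
instance fact1p2 : Fact (1 < p ^ 2) := ⟨Nat.one_lt_pow two_ne_zero (pp p).one_lt⟩

abbrev lift (c : ZMod p) : ZMod (p ^ 2) := ((c.val : ℕ) : ZMod (p ^ 2))

lemma pih_lift (c : ZMod p) : π p (lift p c) = c := by
  rw [lift, pih_natCast, ZMod.natCast_val, ZMod.cast_id]

/-- The rotation subgroup of order `p`. -/
def Rp : Subgroup (DihedralGroup (p ^ 2)) := sub1 (K p)
/-- The rotation subgroup of order `p ^ 2`. -/
def Rp2 : Subgroup (DihedralGroup (p ^ 2)) := sub1 ⊤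
/-- The order-2 subgroup generated by the reflection `sr i`. -/
def Refl (i : ZMod (p ^ 2)) : Subgroup (DihedralGroup (p ^ 2)) := sub2 ⊥ i
/-- The dihedral subgroup of order `2 p`. -/
def Dp (c : ZMod p) : Subgroup (DihedralGroup (p ^ 2)) := sub2 (K p) (lift p c)

@[simp] lemma r_mem_Rp {i : ZMod (p ^ 2)} : r i ∈ Rp p ↔ π p i = 0 := by
  rw [Rp, r_mem_sub1, mem_K]
@[simp] lemma sr_not_mem_Rp {j : ZMod (p ^ 2)} : sr j ∉ Rp p := sr_not_mem_sub1
@[simp] lemma r_mem_Rp2 {i : ZMod (p ^ 2)} : r i ∈ Rp2 p := by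
  rw [Rp2, r_mem_sub1]; trivial
@[simp] lemma sr_not_mem_Rp2 {j : ZMod (p ^ 2)} : sr j ∉ Rp2 p := sr_not_mem_sub1
@[simp] lemma r_mem_Refl {b i : ZMod (p ^ 2)} : r i ∈ Refl p b ↔ i = 0 := by
  rw [Refl, r_mem_sub2, AddSubgroup.mem_bot]
@[simp] lemma sr_mem_Refl {b j : ZMod (p ^ 2)} : sr j ∈ Refl p b ↔ j = b := by
  rw [Refl, sr_mem_sub2, AddSubgroup.mem_bot, sub_eq_zero]
@[simp] lemma r_mem_Dp {c : ZMod p} {i : ZMod (p ^ 2)} : r i ∈ Dp p c ↔ π p i = 0 := by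
  rw [Dp, r_mem_sub2, mem_K]
@[simp] lemma sr_mem_Dp {c : ZMod p} {j : ZMod (p ^ 2)} : sr j ∈ Dp p c ↔ π p j = c := by
  rw [Dp, sr_mem_sub2, mem_K, map_sub, pih_lift, sub_eq_zero]

lemma pcast_ne : ((p : ℕ) : ZMod (p ^ 2)) ≠ 0 := by
  rw [Ne, ZMod.natCast_eq_zero_iff]
  intro h
  have := Nat.le_of_dvd (pp p).pos h
  nlinarith [(pp p).one_lt]

lemma pih_p : π p ((p : ℕ) : ZMod (p ^ 2)) = 0 := by
  rw [pih_natCast, ZMod.natCast_self]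

lemma rp_ne_one : (r ((p : ℕ) : ZMod (p ^ 2)) : DihedralGroup (p ^ 2)) ≠ 1 := by
  rw [one_def, Ne, r.injEq]
  exact pcast_ne p

lemma r1_ne_one : (r (1 : ZMod (p ^ 2)) : DihedralGroup (p ^ 2)) ≠ 1 := by
  rw [one_def, Ne, r.injEq]
  exact one_ne_zero

lemma sr_ne_one (j : ZMod (p ^ 2)) : (sr j : DihedralGroup (p ^ 2)) ≠ 1 := by
  rw [one_def]; exact fun h => by injection h

lemma pih_one : π p (1 : ZMod (p ^ 2)) ≠ 0 := by
  rw [map_one]; exact one_ne_zero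

-- properness
lemma Rp_ne_bot : Rp p ≠ ⊥ := fun h => rp_ne_one p (by
  have hm : r ((p : ℕ) : ZMod (p ^ 2)) ∈ Rp p := (r_mem_Rp p).mpr (pih_p p)
  rw [h, Subgroup.mem_bot] at hm; exact hm)
lemma Rp_ne_top : Rp p ≠ ⊤ := fun h => sr_not_mem_Rp p (h ▸ mem_top (sr (0 : ZMod (p ^ 2))))
lemma Rp2_ne_bot : Rp2 p ≠ ⊥ := fun h => r1_ne_one p (by
  have hm : r (1 : ZMod (p ^ 2)) ∈ Rp2 p := r_mem_Rp2 p
  rw [h, Subgroup.mem_bot] at hm; exact hm)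
lemma Rp2_ne_top : Rp2 p ≠ ⊤ := fun h => sr_not_mem_Rp2 p (h ▸ mem_top (sr (0 : ZMod (p ^ 2))))
lemma Refl_ne_bot (b : ZMod (p ^ 2)) : Refl p b ≠ ⊥ := fun h => sr_ne_one p b (by
  have hm : sr b ∈ Refl p b := (sr_mem_Refl p).mpr rfl
  rw [h, Subgroup.mem_bot] at hm; exact hm)
lemma Refl_ne_top (b : ZMod (p ^ 2)) : Refl p b ≠ ⊤ := fun h => by
  have := h ▸ mem_top (r (1 : ZMod (p ^ 2)))
  rw [r_mem_Refl] at this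
  exact one_ne_zero this
lemma Dp_ne_bot (c : ZMod p) : Dp p c ≠ ⊥ := fun h => sr_ne_one p (lift p c) (by
  have hm : sr (lift p c) ∈ Dp p c := (sr_mem_Dp p).mpr (pih_lift p c)
  rw [h, Subgroup.mem_bot] at hm; exact hm)
lemma Dp_ne_top (c : ZMod p) : Dp p c ≠ ⊤ := fun h => by
  have := h ▸ mem_top (r (1 : ZMod (p ^ 2)))
  rw [r_mem_Dp] at this
  exact pih_one p this

end P2
end IG

namespace IG
section P3
set_option linter.unusedSectionVars false
variable (p : ℕ) [hp : Fact p.Prime]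

-- distinctness
lemma Rp_ne_Rp2 : Rp p ≠ Rp2 p := fun h => by
  have : r (1 : ZMod (p ^ 2)) ∈ Rp p := h ▸ r_mem_Rp2 p
  exact pih_one p ((r_mem_Rp p).mp this)
lemma Rp_ne_Refl (b : ZMod (p ^ 2)) : Rp p ≠ Refl p b := fun h =>
  sr_not_mem_Rp p (h ▸ (sr_mem_Refl p).mpr rfl)
lemma Rp_ne_Dp (c : ZMod p) : Rp p ≠ Dp p c := fun h =>
  sr_not_mem_Rp p (h ▸ (sr_mem_Dp p).mpr (pih_lift p c))
lemma Rp2_ne_Refl (b : ZMod (p ^ 2)) : Rp2 p ≠ Refl p b := fun h =>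
  sr_not_mem_Rp2 p (h ▸ (sr_mem_Refl p).mpr rfl)
lemma Rp2_ne_Dp (c : ZMod p) : Rp2 p ≠ Dp p c := fun h =>
  sr_not_mem_Rp2 p (h ▸ (sr_mem_Dp p).mpr (pih_lift p c))
lemma Refl_ne_Dp (b : ZMod (p ^ 2)) (c : ZMod p) : Refl p b ≠ Dp p c := fun h => by
  have : r ((p : ℕ) : ZMod (p ^ 2)) ∈ Refl p b := h ▸ (r_mem_Dp p).mpr (pih_p p)
  exact pcast_ne p ((r_mem_Refl p).mp this)
lemma Refl_inj {b b' : ZMod (p ^ 2)} (h : Refl p b = Refl p b') : b = b' :=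
  (sr_mem_Refl p).mp (h ▸ (sr_mem_Refl p).mpr rfl)
lemma Dp_inj {c c' : ZMod p} (h : Dp p c = Dp p c') : c = c' := by
  have : sr (lift p c) ∈ Dp p c' := h ▸ (sr_mem_Dp p).mpr (pih_lift p c)
  rw [sr_mem_Dp, pih_lift] at this
  exact this

-- degenerate cases
lemma sub1_bot : sub1 (⊥ : AddSubgroup (ZMod (p ^ 2))) = ⊥ := by
  ext x
  cases x with
  | r i => simp [Subgroup.mem_bot, one_def, -r_zero]
  | sr j => simp [Subgroup.mem_bot, one_def, -r_zero]
lemma sub2_top (b : ZMod (p ^ 2)) : sub2 (⊤ : AddSubgroup (ZMod (p ^ 2))) b = ⊤ := by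
  ext x
  cases x with
  | r i => simp
  | sr j => simp
lemma sub2_K (b : ZMod (p ^ 2)) : sub2 (K p) b = Dp p (π p b) := by
  ext x
  cases x with
  | r i => simp [mem_K]
  | sr j => simp [mem_K, map_sub, sub_eq_zero]

/-- Index type for the proper nontrivial subgroups. -/
abbrev Idx := (Unit ⊕ Unit) ⊕ (ZMod (p ^ 2) ⊕ ZMod p)

def vsub : Idx p → Subgroup (DihedralGroup (p ^ 2))
  | .inl (.inl _) => Rp p
  | .inl (.inr _) => Rp2 p
  | .inr (.inl i) => Refl p i
  | .inr (.inr c) => Dp p c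

/-- The classification map as a map into vertices. -/
def vert (x : Idx p) : Vert (p ^ 2) :=
  ⟨vsub p x, by
    rcases x with (⟨⟩ | ⟨⟩) | (i | c)
    · exact ⟨Rp_ne_bot p, Rp_ne_top p⟩
    · exact ⟨Rp2_ne_bot p, Rp2_ne_top p⟩
    · exact ⟨Refl_ne_bot p i, Refl_ne_top p i⟩
    · exact ⟨Dp_ne_bot p c, Dp_ne_top p c⟩⟩

lemma vert_bij : Function.Bijective (vert p) := by
  constructor
  · rintro x y h
    have h : vsub p x = vsub p y := Subtype.ext_iff.mp h
    rcases x with (⟨⟩ | ⟨⟩) | (i | c) <;> rcases y with (⟨⟩ | ⟨⟩) | (j | d) <;>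
      simp only [vsub] at h
    · rfl
    · exact absurd h (Rp_ne_Rp2 p)
    · exact absurd h (Rp_ne_Refl p j)
    · exact absurd h (Rp_ne_Dp p d)
    · exact absurd h.symm (Rp_ne_Rp2 p)
    · rfl
    · exact absurd h (Rp2_ne_Refl p j)
    · exact absurd h (Rp2_ne_Dp p d)
    · exact absurd h.symm (Rp_ne_Refl p i)
    · exact absurd h.symm (Rp2_ne_Refl p i)
    · rw [Refl_inj p h]
    · exact absurd h (Refl_ne_Dp p i d)
    · exact absurd h.symm (Rp_ne_Dp p c)
    · exact absurd h.symm (Rp2_ne_Dp p c)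
    · exact absurd h.symm (Refl_ne_Dp p j c)
    · rw [Dp_inj p h]
  · rintro ⟨H, hbot, htop⟩
    rcases sub_eq H with h | ⟨b, hb, h⟩
    · rcases addsub_classify p (rot H) with hA | hA | hA
      · exact absurd (by rw [h, hA, sub1_bot]) hbot
      · exact ⟨.inl (.inl ()), Subtype.ext (by rw [vert]; show Rp p = H; rw [h, hA, Rp])⟩
      · exact ⟨.inl (.inr ()), Subtype.ext (by rw [vert]; show Rp2 p = H; rw [h, hA, Rp2])⟩
    · rcases addsub_classify p (rot H) with hA | hA | hA
      · exact ⟨.inr (.inl b), Subtype.ext (by rw [vert]; show Refl p b = H; rw [h, hA, Refl])⟩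
      · exact ⟨.inr (.inr (π p b)), Subtype.ext (by
          rw [vert]; show Dp p (π p b) = H; rw [h, hA, sub2_K])⟩
      · exact absurd (by rw [h, hA, sub2_top]) htop

end P3
end IG

namespace IG
section P4
set_option linter.unusedSectionVars false
variable (p : ℕ) [hp : Fact p.Prime]

instance : NeZero p := ⟨(pp p).ne_zero⟩

lemma inf_ne_bot {G : Type*} [Group G] {H K : Subgroup G} {x : G} (hx : x ≠ 1)
    (h1 : x ∈ H) (h2 : x ∈ K) : H ⊓ K ≠ ⊥ := fun h => hx (by
  have : x ∈ H ⊓ K := ⟨h1, h2⟩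
  rw [h, Subgroup.mem_bot] at this; exact this)

-- non-trivial intersections (witnessed by `r p` or a reflection)
lemma inf_Rp_Rp2 : Rp p ⊓ Rp2 p ≠ ⊥ :=
  inf_ne_bot (rp_ne_one p) ((r_mem_Rp p).mpr (pih_p p)) (r_mem_Rp2 p)
lemma inf_Rp2_Rp : Rp2 p ⊓ Rp p ≠ ⊥ :=
  inf_ne_bot (rp_ne_one p) (r_mem_Rp2 p) ((r_mem_Rp p).mpr (pih_p p))
lemma inf_Rp_Dp (c : ZMod p) : Rp p ⊓ Dp p c ≠ ⊥ :=
  inf_ne_bot (rp_ne_one p) ((r_mem_Rp p).mpr (pih_p p)) ((r_mem_Dp p).mpr (pih_p p))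
lemma inf_Dp_Rp (c : ZMod p) : Dp p c ⊓ Rp p ≠ ⊥ :=
  inf_ne_bot (rp_ne_one p) ((r_mem_Dp p).mpr (pih_p p)) ((r_mem_Rp p).mpr (pih_p p))
lemma inf_Rp2_Dp (c : ZMod p) : Rp2 p ⊓ Dp p c ≠ ⊥ :=
  inf_ne_bot (rp_ne_one p) (r_mem_Rp2 p) ((r_mem_Dp p).mpr (pih_p p))
lemma inf_Dp_Rp2 (c : ZMod p) : Dp p c ⊓ Rp2 p ≠ ⊥ :=
  inf_ne_bot (rp_ne_one p) ((r_mem_Dp p).mpr (pih_p p)) (r_mem_Rp2 p)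
lemma inf_Dp_Dp (c c' : ZMod p) : Dp p c ⊓ Dp p c' ≠ ⊥ :=
  inf_ne_bot (rp_ne_one p) ((r_mem_Dp p).mpr (pih_p p)) ((r_mem_Dp p).mpr (pih_p p))
lemma inf_Refl_Dp_of_eq {b : ZMod (p ^ 2)} {c : ZMod p} (h : π p b = c) :
    Refl p b ⊓ Dp p c ≠ ⊥ :=
  inf_ne_bot (sr_ne_one p b) ((sr_mem_Refl p).mpr rfl) ((sr_mem_Dp p).mpr h)
lemma inf_Dp_Refl_of_eq {b : ZMod (p ^ 2)} {c : ZMod p} (h : π p b = c) :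
    Dp p c ⊓ Refl p b ≠ ⊥ :=
  inf_ne_bot (sr_ne_one p b) ((sr_mem_Dp p).mpr h) ((sr_mem_Refl p).mpr rfl)

-- trivial intersections
lemma inf_Rp_Refl (b : ZMod (p ^ 2)) : Rp p ⊓ Refl p b = ⊥ := by
  rw [eq_bot_iff]
  rintro x ⟨h1, h2⟩
  cases x with
  | r i => rw [Subgroup.mem_bot, one_def, r.injEq]; exact (r_mem_Refl p).mp h2
  | sr j => exact absurd h1 (sr_not_mem_Rp p)
lemma inf_Refl_Rp (b : ZMod (p ^ 2)) : Refl p b ⊓ Rp p = ⊥ := by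
  rw [inf_comm]; exact inf_Rp_Refl p b
lemma inf_Rp2_Refl (b : ZMod (p ^ 2)) : Rp2 p ⊓ Refl p b = ⊥ := by
  rw [eq_bot_iff]
  rintro x ⟨h1, h2⟩
  cases x with
  | r i => rw [Subgroup.mem_bot, one_def, r.injEq]; exact (r_mem_Refl p).mp h2
  | sr j => exact absurd h1 (sr_not_mem_Rp2 p)
lemma inf_Refl_Rp2 (b : ZMod (p ^ 2)) : Refl p b ⊓ Rp2 p = ⊥ := by
  rw [inf_comm]; exact inf_Rp2_Refl p b
lemma inf_Refl_Refl {b b' : ZMod (p ^ 2)} (h : b ≠ b') : Refl p b ⊓ Refl p b' = ⊥ := by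
  rw [eq_bot_iff]
  rintro x ⟨h1, h2⟩
  cases x with
  | r i => rw [Subgroup.mem_bot, one_def, r.injEq]; exact (r_mem_Refl p).mp h2
  | sr j =>
    have h1' : j = b := (sr_mem_Refl p).mp h1
    have h2' : j = b' := (sr_mem_Refl p).mp h2
    exact absurd (h1' ▸ h2') h
lemma inf_Refl_Dp_of_ne {b : ZMod (p ^ 2)} {c : ZMod p} (h : π p b ≠ c) :
    Refl p b ⊓ Dp p c = ⊥ := by
  rw [eq_bot_iff]
  rintro x ⟨h1, h2⟩
  cases x with
  | r i => rw [Subgroup.mem_bot, one_def, r.injEq]; exact (r_mem_Refl p).mp h1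
  | sr j =>
    have h1' : j = b := (sr_mem_Refl p).mp h1
    have h2' : π p j = c := (sr_mem_Dp p).mp h2
    exact absurd (h1' ▸ h2') h
lemma inf_Dp_Refl_of_ne {b : ZMod (p ^ 2)} {c : ZMod p} (h : π p b ≠ c) :
    Dp p c ⊓ Refl p b = ⊥ := by
  rw [inf_comm]; exact inf_Refl_Dp_of_ne p h

end P4
end IG

namespace IG
section P5
set_option linter.unusedSectionVars false
variable (p : ℕ) [hp : Fact p.Prime]

/-- The adjacency predicate transported to the index type. -/
def adjP (v : Vert (p ^ 2)) (x : Idx p) : Prop :=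
  v ≠ vert p x ∧ v.1 ⊓ vsub p x ≠ ⊥

lemma deg_eq (v : Vert (p ^ 2)) :
    deg (p ^ 2) v = Nat.card {x : Idx p // adjP p v x} := by
  refine Nat.card_congr ?_
  exact ((Equiv.ofBijective (vert p) (vert_bij p)).subtypeEquiv (p := fun x => adjP p v x)
    (q := fun w => w ∈ (interGraph (DihedralGroup (p ^ 2))).neighborSet v) (fun x => Iff.rfl)).symm

lemma card_idx (P : Idx p → Prop) :
    Nat.card {x : Idx p // P x} =
      Nat.card {u : Unit // P (.inl (.inl u))} + Nat.card {u : Unit // P (.inl (.inr u))} +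
      (Nat.card {i : ZMod (p ^ 2) // P (.inr (.inl i))} +
        Nat.card {c : ZMod p // P (.inr (.inr c))}) := by
  rw [Nat.card_congr (Equiv.subtypeSum), Nat.card_sum,
    Nat.card_congr (Equiv.subtypeSum), Nat.card_sum,
    Nat.card_congr (Equiv.subtypeSum), Nat.card_sum]

lemma card_false {α : Type*} (P : α → Prop) (h : ∀ a, ¬ P a) :
    Nat.card {a // P a} = 0 :=
  @Nat.card_of_isEmpty _ ⟨fun x => h x.1 x.2⟩

lemma card_u_true (P : Unit → Prop) (h : P ()) : Nat.card {u : Unit // P u} = 1 :=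
  @Nat.card_unique _ ⟨⟨(), h⟩⟩ _

lemma card_all {α : Type*} (P : α → Prop) (h : ∀ a, P a) :
    Nat.card {a // P a} = Nat.card α :=
  Nat.card_congr (Equiv.subtypeUnivEquiv h)

lemma card_iff {α : Type*} {P Q : α → Prop} (h : ∀ a, P a ↔ Q a) :
    Nat.card {a // P a} = Nat.card {a // Q a} :=
  Nat.card_congr (Equiv.subtypeEquivRight h)

lemma card_fiber (c : ZMod p) : Nat.card {i : ZMod (p ^ 2) // π p i = c} = p := by
  have e : {i : ZMod (p ^ 2) // π p i = c} ≃ K p :=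
    { toFun := fun i => ⟨i.1 - lift p c, by
        rw [mem_K, map_sub, pih_lift, i.2, sub_self]⟩
      invFun := fun k => ⟨lift p c + k.1, by
        rw [map_add, pih_lift, (mem_K p).mp k.2, add_zero]⟩
      left_inv := fun i => by ext; simp
      right_inv := fun k => by ext; simp }
  rw [Nat.card_congr e, card_K]

lemma card_ne (c : ZMod p) : Nat.card {d : ZMod p // ¬ (d = c)} = p - 1 := by
  rw [Nat.card_eq_fintype_card, Fintype.card_subtype_compl, Fintype.card_subtype_eq, ZMod.card]

lemma deg_class1 : deg (p ^ 2) (vert p (.inl (.inl ()))) = p + 1 := by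
  rw [deg_eq, card_idx]
  rw [card_false (fun u : Unit => adjP p (vert p (.inl (.inl ()))) (.inl (.inl u)))
    (by rintro ⟨⟩ ⟨hne, _⟩; exact hne rfl)]
  rw [card_u_true (fun u : Unit => adjP p (vert p (.inl (.inl ()))) (.inl (.inr u)))
    ⟨fun h => Rp_ne_Rp2 p (congrArg Subtype.val h), inf_Rp_Rp2 p⟩]
  rw [card_false (fun i : ZMod (p ^ 2) => adjP p (vert p (.inl (.inl ()))) (.inr (.inl i)))
    (by rintro i ⟨_, hinf⟩; exact hinf (inf_Rp_Refl p i))]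
  rw [card_all (fun c : ZMod p => adjP p (vert p (.inl (.inl ()))) (.inr (.inr c)))
    (fun c => ⟨fun h => Rp_ne_Dp p c (congrArg Subtype.val h), inf_Rp_Dp p c⟩)]
  rw [Nat.card_zmod]
  omega

lemma deg_class2 : deg (p ^ 2) (vert p (.inl (.inr ()))) = p + 1 := by
  rw [deg_eq, card_idx]
  rw [card_u_true (fun u : Unit => adjP p (vert p (.inl (.inr ()))) (.inl (.inl u)))
    ⟨fun h => Rp_ne_Rp2 p (congrArg Subtype.val h).symm, inf_Rp2_Rp p⟩]
  rw [card_false (fun u : Unit => adjP p (vert p (.inl (.inr ()))) (.inl (.inr u)))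
    (by rintro ⟨⟩ ⟨hne, _⟩; exact hne rfl)]
  rw [card_false (fun i : ZMod (p ^ 2) => adjP p (vert p (.inl (.inr ()))) (.inr (.inl i)))
    (by rintro i ⟨_, hinf⟩; exact hinf (inf_Rp2_Refl p i))]
  rw [card_all (fun c : ZMod p => adjP p (vert p (.inl (.inr ()))) (.inr (.inr c)))
    (fun c => ⟨fun h => Rp2_ne_Dp p c (congrArg Subtype.val h), inf_Rp2_Dp p c⟩)]
  rw [Nat.card_zmod]
  omega

lemma deg_class3 (b : ZMod (p ^ 2)) : deg (p ^ 2) (vert p (.inr (.inl b))) = 1 := by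
  rw [deg_eq, card_idx]
  rw [card_false (fun u : Unit => adjP p (vert p (.inr (.inl b))) (.inl (.inl u)))
    (by rintro ⟨⟩ ⟨_, hinf⟩; exact hinf (inf_Refl_Rp p b))]
  rw [card_false (fun u : Unit => adjP p (vert p (.inr (.inl b))) (.inl (.inr u)))
    (by rintro ⟨⟩ ⟨_, hinf⟩; exact hinf (inf_Refl_Rp2 p b))]
  rw [card_false (fun i : ZMod (p ^ 2) => adjP p (vert p (.inr (.inl b))) (.inr (.inl i)))
    (by
      rintro j ⟨hne, hinf⟩
      by_cases hj : b = j
      · exact hne (by rw [hj])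
      · exact hinf (inf_Refl_Refl p hj))]
  rw [card_iff (Q := fun c : ZMod p => π p b = c) (fun c => ?_)]
  · rw [Nat.card_eq_fintype_card, Fintype.card_subtype_eq']
  · constructor
    · rintro ⟨hne, hinf⟩
      by_contra hc
      exact hinf (inf_Refl_Dp_of_ne p hc)
    · intro h
      exact ⟨fun he => Refl_ne_Dp p b c (congrArg Subtype.val he), inf_Refl_Dp_of_eq p h⟩

lemma deg_class4 (c : ZMod p) : deg (p ^ 2) (vert p (.inr (.inr c))) = 2 * p + 1 := by
  rw [deg_eq, card_idx]
  rw [card_u_true (fun u : Unit => adjP p (vert p (.inr (.inr c))) (.inl (.inl u)))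
    ⟨fun h => Rp_ne_Dp p c (congrArg Subtype.val h).symm, inf_Dp_Rp p c⟩]
  rw [card_u_true (fun u : Unit => adjP p (vert p (.inr (.inr c))) (.inl (.inr u)))
    ⟨fun h => Rp2_ne_Dp p c (congrArg Subtype.val h).symm, inf_Dp_Rp2 p c⟩]
  rw [card_iff (Q := fun i : ZMod (p ^ 2) => π p i = c) (fun i => ?_), card_fiber]
  · rw [card_iff (Q := fun d : ZMod p => ¬ (d = c)) (fun d => ?_), card_ne]
    · have := (pp p).two_le
      omega
    · constructor
      · rintro ⟨hne, _⟩ hdc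
        exact hne (by rw [hdc])
      · intro hd
        exact ⟨fun he => hd (Dp_inj p (congrArg Subtype.val he)).symm, inf_Dp_Dp p c d⟩
  · constructor
    · rintro ⟨_, hinf⟩
      by_contra hc
      exact hinf (inf_Dp_Refl_of_ne p hc)
    · intro h
      exact ⟨fun he => Refl_ne_Dp p i c (congrArg Subtype.val he).symm, inf_Dp_Refl_of_eq p h⟩

end P5
end IG

theorem stmt14 (p : ℕ) (hp : p.Prime) :
    ∑ᶠ v : Vert (p ^ 2), (deg (p ^ 2) v) ^ 2 = 4 * p ^ 3 + 7 * p ^ 2 + 5 * p + 2 := by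
  haveI : Fact p.Prime := ⟨hp⟩
  letI : Fintype (Vert (p ^ 2)) := Fintype.ofBijective (IG.vert p) (IG.vert_bij p)
  rw [finsum_eq_sum_of_fintype]
  rw [← Fintype.sum_bijective (IG.vert p) (IG.vert_bij p)
    (fun x => (deg (p ^ 2) (IG.vert p x)) ^ 2) _ (fun x => rfl)]
  rw [Fintype.sum_sum_type, Fintype.sum_sum_type, Fintype.sum_sum_type]
  have h1 : ∀ u : Unit, deg (p ^ 2) (IG.vert p (.inl (.inl u))) = p + 1 :=
    fun u => by cases u; exact IG.deg_class1 p
  have h2 : ∀ u : Unit, deg (p ^ 2) (IG.vert p (.inl (.inr u))) = p + 1 :=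
    fun u => by cases u; exact IG.deg_class2 p
  simp only [h1, h2, IG.deg_class3, IG.deg_class4, Finset.sum_const, Finset.card_univ,
    Fintype.card_unit, ZMod.card, smul_eq_mul]
  ring
end

section
/- For a prime p, the second Zagreb index of the intersection graph of D_{2p^2} equals 2p^4 + 6p^3 + (13/2)p^2 + (7/2)p + 1. -/
open DihedralGroup Subgroup

set_option linter.unusedSectionVars false
set_option maxHeartbeats 1000000


namespace IG
variable {n : ℕ}

/-- membership predicate -/
def dihP (T : AddSubgroup (ZMod n)) (j : ZMod n) : DihedralGroup n → Prop
  | .r i => i ∈ T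
  | .sr k => k - j ∈ T

def rotP (T : AddSubgroup (ZMod n)) : DihedralGroup n → Prop
  | .r i => i ∈ T
  | .sr _ => False

def dihS (T : AddSubgroup (ZMod n)) (j : ZMod n) : Subgroup (DihedralGroup n) where
  carrier := setOf (dihP T j)
  one_mem' := by show dihP T j (r 0); exact T.zero_mem
  mul_mem' := by
    rintro (a | a) (b | b) ha hb
    · exact T.add_mem ha hb
    · show (b - a) - j ∈ T
      have : (b - a) - j = (b - j) + (-a) := by ring
      rw [this]; exact T.add_mem hb (T.neg_mem ha)
    · show (a + b) - j ∈ T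
      have : (a + b) - j = (a - j) + b := by ring
      rw [this]; exact T.add_mem ha hb
    · show b - a ∈ T
      have : b - a = (b - j) - (a - j) := by ring
      rw [this]; exact T.sub_mem hb ha
  inv_mem' := by
    rintro (a | a) ha
    · exact T.neg_mem ha
    · exact ha

def rotS (T : AddSubgroup (ZMod n)) : Subgroup (DihedralGroup n) where
  carrier := setOf (rotP T)
  one_mem' := T.zero_mem
  mul_mem' := by
    rintro (a | a) (b | b) ha hb
    · exact T.add_mem ha hb
    · exact hb.elim
    · exact ha.elim
    · exact hb.elim
  inv_mem' := by
    rintro (a | a) ha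
    · exact T.neg_mem ha
    · exact ha

@[simp] lemma r_mem_dihS {T : AddSubgroup (ZMod n)} {j i : ZMod n} :
    r i ∈ dihS T j ↔ i ∈ T := Iff.rfl
@[simp] lemma sr_mem_dihS {T : AddSubgroup (ZMod n)} {j k : ZMod n} :
    sr k ∈ dihS T j ↔ k - j ∈ T := Iff.rfl
@[simp] lemma r_mem_rotS {T : AddSubgroup (ZMod n)} {i : ZMod n} :
    r i ∈ rotS T ↔ i ∈ T := Iff.rfl
@[simp] lemma sr_not_mem_rotS {T : AddSubgroup (ZMod n)} {k : ZMod n} :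
    ¬ sr k ∈ rotS T := id

lemma dihS_congr {T : AddSubgroup (ZMod n)} {j j' : ZMod n} (h : j - j' ∈ T) :
    dihS T j = dihS T j' := by
  ext x
  rcases x with i | k
  · simp
  · simp only [sr_mem_dihS]
    constructor
    · intro hk; have := T.add_mem hk h; simpa [sub_add_sub_cancel] using this
    · intro hk; have := T.sub_mem hk h; simpa [sub_sub_sub_cancel_right] using this

/-- A subgroup containing no reflection equals `rotS` of its rotation part. -/
def rotPart (H : Subgroup (DihedralGroup n)) : AddSubgroup (ZMod n) where
  carrier := {i | r i ∈ H}
  zero_mem' := H.one_mem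
  add_mem' := by intro a b ha hb; simpa using H.mul_mem ha hb
  neg_mem' := by intro a ha; exact H.inv_mem ha

lemma eq_rotS (H : Subgroup (DihedralGroup n)) (hsr : ∀ k, sr k ∉ H) :
    H = rotS (rotPart H) := by
  ext x
  rcases x with i | k
  · rfl
  · simpa using hsr k

lemma eq_dihS (H : Subgroup (DihedralGroup n)) {j : ZMod n} (hj : sr j ∈ H) :
    H = dihS (rotPart H) j := by
  ext x
  rcases x with i | k
  · rfl
  · show sr k ∈ H ↔ k - j ∈ rotPart H
    constructor
    · intro hk
      have := H.mul_mem hj hk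
      exact (by simpa using this : r (k - j) ∈ H)
    · intro hk
      have : r (k - j) ∈ H := hk
      have := H.mul_mem hj this
      simpa [add_sub_cancel] using this

end IG

namespace IG2

variable (p : ℕ)

noncomputable def φ : ZMod (p^2) →+* ZMod p := ZMod.castHom (dvd_pow_self p two_ne_zero) _

noncomputable def Pk : AddSubgroup (ZMod (p^2)) := (φ p).toAddMonoidHom.ker

lemma mem_Pk {i : ZMod (p^2)} : i ∈ Pk p ↔ φ p i = 0 := Iff.rfl

variable {p} (hp : p.Prime)
include hp

lemma phi_apply (i : ZMod (p^2)) : φ p i = ((i.val : ℕ) : ZMod p) := by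
  haveI : NeZero (p^2) := ⟨pow_ne_zero 2 hp.pos.ne'⟩
  rw [φ, ZMod.castHom_apply, ← ZMod.natCast_val]

lemma mem_Pk_iff_dvd {i : ZMod (p^2)} : i ∈ Pk p ↔ p ∣ i.val := by
  rw [mem_Pk, phi_apply hp, ZMod.natCast_eq_zero_iff]

/-- fibers of φ have cardinality p -/
lemma card_fiber (c : ZMod p) : Nat.card {j : ZMod (p^2) // φ p j = c} = p := by
  haveI : NeZero p := ⟨hp.pos.ne'⟩
  haveI : NeZero (p^2) := ⟨pow_ne_zero 2 hp.pos.ne'⟩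
  have hb : ∀ a : ZMod p, ((c.val + p * a.val : ℕ) : ZMod p) = c := by
    intro a
    push_cast
    simp [ZMod.natCast_self, ZMod.natCast_zmod_val]
  have key : Function.Bijective
      (fun a : ZMod p => (⟨((c.val + p * a.val : ℕ) : ZMod (p^2)), by
        rw [phi_apply hp, ZMod.val_natCast]
        have hlt : c.val + p * a.val < p^2 := by
          have h1 := ZMod.val_lt c
          have h2 := ZMod.val_lt a
          nlinarith
        rw [Nat.mod_eq_of_lt hlt]
        exact hb a⟩ : {j : ZMod (p^2) // φ p j = c})) := by
    constructor
    · intro a b hab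
      have h0 := congrArg (fun z => (z : {j : ZMod (p^2) // φ p j = c}).1.val) hab
      simp only at h0
      have h1 := ZMod.val_lt c
      have h2 := ZMod.val_lt a
      have h3 := ZMod.val_lt b
      rw [ZMod.val_natCast, ZMod.val_natCast] at h0
      rw [Nat.mod_eq_of_lt (by nlinarith), Nat.mod_eq_of_lt (by nlinarith)] at h0
      have hp0 : 0 < p := hp.pos
      have hv : a.val = b.val := Nat.eq_of_mul_eq_mul_left hp0 (by omega)
      exact ZMod.val_injective p hv
    · rintro ⟨j, hj⟩
      rw [phi_apply hp] at hj
      have hcv : c.val = j.val % p := by rw [← hj, ZMod.val_natCast]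
      refine ⟨((j.val / p : ℕ) : ZMod p), ?_⟩
      apply Subtype.ext
      have hjlt : j.val < p^2 := ZMod.val_lt j
      have hdiv : j.val / p < p := Nat.div_lt_of_lt_mul (by rw [← pow_two]; exact hjlt)
      simp only
      rw [ZMod.val_natCast, Nat.mod_eq_of_lt hdiv, hcv, Nat.mod_add_div]
      exact ZMod.natCast_zmod_val j
  rw [← Nat.card_eq_of_bijective _ key, Nat.card_zmod]

lemma addsub_classify (T : AddSubgroup (ZMod (p^2))) :
    T = ⊥ ∨ T = Pk p ∨ T = ⊤ := by
  haveI : NeZero p := ⟨hp.pos.ne'⟩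
  haveI : NeZero (p^2) := ⟨pow_ne_zero 2 hp.pos.ne'⟩
  by_cases htop : ∃ x ∈ T, ¬ p ∣ x.val
  · right; right
    obtain ⟨x, hxT, hxd⟩ := htop
    have hcop : (x.val).Coprime (p^2) :=
      Nat.Coprime.pow_right 2 ((hp.coprime_iff_not_dvd.mpr hxd).symm)
    have hunit : IsUnit (x.val : ZMod (p^2)) := (ZMod.isUnit_iff_coprime _ _).mpr hcop
    rw [ZMod.natCast_zmod_val] at hunit
    obtain ⟨u, hu⟩ := hunit
    rw [AddSubgroup.eq_top_iff']
    intro y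
    have huinv : (↑u⁻¹ * ↑u : ZMod (p^2)) = 1 := u.inv_mul
    have hy : y = ((y * ↑u⁻¹ : ZMod (p^2)).val : ℕ) • x := by
      rw [nsmul_eq_mul, ZMod.natCast_zmod_val, mul_assoc, ← hu, huinv, mul_one]
    rw [hy]
    exact AddSubgroup.nsmul_mem T hxT _
  · push_neg at htop
    by_cases hbot : T = ⊥
    · exact Or.inl hbot
    right; left
    have hle : T ≤ Pk p := fun x hx => (mem_Pk_iff_dvd hp).mpr (htop x hx)
    refine le_antisymm hle ?_
    have hex : ∃ x ∈ T, x ≠ 0 := by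
      by_contra hc
      push_neg at hc
      exact hbot ((AddSubgroup.eq_bot_iff_forall T).mpr hc)
    obtain ⟨x, hxT, hx0⟩ := hex
    obtain ⟨m, hm⟩ := htop x hxT
    have hxlt : x.val < p^2 := ZMod.val_lt x
    have hm0 : m ≠ 0 := by
      intro h; apply hx0
      rw [← ZMod.val_eq_zero, hm, h, mul_zero]
    have hmlt : m < p := by nlinarith [Nat.pos_of_ne_zero hm0, hp.pos]
    have hmd : ¬ p ∣ m := fun hd => by
      have := Nat.le_of_dvd (Nat.pos_of_ne_zero hm0) hd; omega
    haveI : Fact p.Prime := ⟨hp⟩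
    intro y hy
    obtain ⟨k, hk⟩ := (mem_Pk_iff_dvd hp).mp hy
    have hmz : ((m : ℕ) : ZMod p) ≠ 0 := by
      rw [Ne, ZMod.natCast_eq_zero_iff]; exact hmd
    set t : ℕ := ((k : ZMod p) * ((m : ℕ) : ZMod p)⁻¹).val with ht
    have hcast : ((t * m : ℕ) : ZMod p) = (k : ZMod p) := by
      push_cast
      rw [ht, ZMod.natCast_zmod_val, mul_assoc, inv_mul_cancel₀ hmz, mul_one]
    have hmod : t * m ≡ k [MOD p] := (ZMod.natCast_eq_natCast_iff _ _ _).mp hcast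
    have hmod2 : p * (t * m) ≡ p * k [MOD p * p] := hmod.mul_left' (c := p)
    have hyx : y = t • x := by
      have hvx : ((x.val : ℕ) : ZMod (p^2)) = x := ZMod.natCast_zmod_val x
      have hvy : ((y.val : ℕ) : ZMod (p^2)) = y := ZMod.natCast_zmod_val y
      rw [nsmul_eq_mul, ← hvx, ← hvy, ← Nat.cast_mul, hm, hk,
        ZMod.natCast_eq_natCast_iff]
      have : t * (p * m) = p * (t * m) := by ring
      rw [this, pow_two]
      exact hmod2.symm
    rw [hyx]
    exact AddSubgroup.nsmul_mem T hxT t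

end IG2

namespace IG2
open IG

variable (p : ℕ)

noncomputable def AA : Subgroup (DihedralGroup (p^2)) := IG.rotS (Pk p)
noncomputable def BB : Subgroup (DihedralGroup (p^2)) := IG.rotS ⊤
noncomputable def Refl (j : ZMod (p^2)) : Subgroup (DihedralGroup (p^2)) := IG.dihS ⊥ j
noncomputable def Dih (c : ZMod p) : Subgroup (DihedralGroup (p^2)) :=
  IG.dihS (Pk p) ((c.val : ℕ) : ZMod (p^2))

abbrev V := Bool ⊕ (ZMod (p^2) ⊕ ZMod p)

noncomputable def toSub : V p → Subgroup (DihedralGroup (p^2))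
  | .inl false => AA p
  | .inl true => BB p
  | .inr (.inl j) => Refl p j
  | .inr (.inr c) => Dih p c

def dfun : V p → ℕ
  | .inl _ => p + 1
  | .inr (.inl _) => 1
  | .inr (.inr _) => 2 * p + 1

variable {p} (hp : p.Prime)
include hp

lemma phi_lift (c : ZMod p) : φ p ((c.val : ℕ) : ZMod (p^2)) = c := by
  haveI : NeZero p := ⟨hp.pos.ne'⟩
  rw [map_natCast, ZMod.natCast_zmod_val]

omit hp in
lemma phi_p : φ p ((p : ℕ) : ZMod (p^2)) = 0 := by
  rw [map_natCast, ZMod.natCast_self]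

lemma phi_one_ne : φ p (1 : ZMod (p^2)) ≠ 0 := by
  haveI : Fact (1 < p) := ⟨hp.one_lt⟩
  rw [map_one]
  exact one_ne_zero

lemma p_ne_zero' : ((p : ℕ) : ZMod (p^2)) ≠ 0 := by
  haveI : NeZero (p^2) := ⟨pow_ne_zero 2 hp.pos.ne'⟩
  intro h
  have := congrArg ZMod.val h
  rw [ZMod.val_natCast, ZMod.val_zero,
    Nat.mod_eq_of_lt (by nlinarith [hp.one_lt] : p < p^2)] at this
  exact hp.pos.ne' this

lemma one_ne_zero' : (1 : ZMod (p^2)) ≠ 0 := by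
  haveI : Fact (1 < p^2) := ⟨Nat.one_lt_pow two_ne_zero hp.one_lt⟩
  exact one_ne_zero

set_option linter.unusedSectionVars false

-- membership lemmas
lemma r_mem_AA {i : ZMod (p^2)} : r i ∈ AA p ↔ φ p i = 0 := Iff.rfl
lemma sr_not_mem_AA (k : ZMod (p^2)) : sr k ∉ AA p := id
lemma r_mem_BB (i : ZMod (p^2)) : r i ∈ BB p := trivial
lemma sr_not_mem_BB (k : ZMod (p^2)) : sr k ∉ BB p := id
lemma r_mem_Refl {i j : ZMod (p^2)} : r i ∈ Refl p j ↔ i = 0 := AddSubgroup.mem_bot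
lemma sr_mem_Refl {k j : ZMod (p^2)} : sr k ∈ Refl p j ↔ k = j := by
  show k - j ∈ (⊥ : AddSubgroup (ZMod (p^2))) ↔ _
  rw [AddSubgroup.mem_bot, sub_eq_zero]
lemma r_mem_Dih {i : ZMod (p^2)} {c : ZMod p} : r i ∈ Dih p c ↔ φ p i = 0 := Iff.rfl
lemma sr_mem_Dih {k : ZMod (p^2)} {c : ZMod p} : sr k ∈ Dih p c ↔ φ p k = c := by
  show k - _ ∈ Pk p ↔ _
  rw [mem_Pk, map_sub, phi_lift hp, sub_eq_zero]

lemma rp_ne_one : r ((p : ℕ) : ZMod (p^2)) ≠ 1 := by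
  rw [one_def]
  simp only [ne_eq, r.injEq]
  exact p_ne_zero' hp

lemma proper (x : V p) : toSub p x ≠ ⊥ ∧ toSub p x ≠ ⊤ := by
  have neb : ∀ {H : Subgroup (DihedralGroup (p^2))} (g : DihedralGroup (p^2)),
      g ∈ H → g ≠ 1 → H ≠ ⊥ := by
    intro H g hg hg1 h
    rw [h, Subgroup.mem_bot] at hg
    exact hg1 hg
  have net : ∀ {H : Subgroup (DihedralGroup (p^2))} (g : DihedralGroup (p^2)),
      g ∉ H → H ≠ ⊤ := by
    intro H g hg h
    rw [h] at hg
    exact hg trivial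
  rcases x with (a | j | c)
  · cases a
    · show AA p ≠ ⊥ ∧ AA p ≠ ⊤
      refine ⟨neb (r ((p:ℕ) : ZMod (p^2))) ?_ (rp_ne_one hp), net (sr 0) (sr_not_mem_AA hp 0)⟩
      rw [r_mem_AA hp]
      exact phi_p
    · show BB p ≠ ⊥ ∧ BB p ≠ ⊤
      exact ⟨neb (r 1) (r_mem_BB hp 1) (by rw [one_def, Ne, r.injEq]; exact one_ne_zero' hp),
        net (sr 0) (sr_not_mem_BB hp 0)⟩
  · show Refl p j ≠ ⊥ ∧ Refl p j ≠ ⊤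
    constructor
    · exact neb (sr j) ((sr_mem_Refl hp).mpr rfl) (by rw [one_def]; intro h; cases h)
    · exact net (r 1) (by rw [r_mem_Refl hp]; exact one_ne_zero' hp)
  · show Dih p c ≠ ⊥ ∧ Dih p c ≠ ⊤
    constructor
    · exact neb (sr ((c.val : ℕ) : ZMod (p^2))) ((sr_mem_Dih hp).mpr (phi_lift hp c))
        (by rw [one_def]; intro h; cases h)
    · exact net (r 1) (by rw [r_mem_Dih hp]; exact phi_one_ne hp)

end IG2

namespace IG2
open IG
variable {p : ℕ} (hp : p.Prime)
include hp

lemma toSub_inj : Function.Injective (toSub p) := by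
  have hAB : AA p ≠ BB p := by
    intro h
    have : r 1 ∈ AA p := h ▸ r_mem_BB hp 1
    exact phi_one_ne hp ((r_mem_AA hp).mp this)
  have hARefl : ∀ j, AA p ≠ Refl p j := by
    intro j h
    have : r ((p:ℕ) : ZMod (p^2)) ∈ Refl p j := by
      rw [← h, r_mem_AA hp]; exact phi_p
    rw [r_mem_Refl hp] at this
    exact p_ne_zero' hp this
  have hADih : ∀ c, AA p ≠ Dih p c := by
    intro c h
    have : sr ((c.val : ℕ) : ZMod (p^2)) ∈ Dih p c := (sr_mem_Dih hp).mpr (phi_lift hp c)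
    rw [← h] at this
    exact sr_not_mem_AA hp _ this
  have hBRefl : ∀ j, BB p ≠ Refl p j := by
    intro j h
    have : r 1 ∈ Refl p j := h ▸ r_mem_BB hp 1
    rw [r_mem_Refl hp] at this
    exact one_ne_zero' hp this
  have hBDih : ∀ c, BB p ≠ Dih p c := by
    intro c h
    have : sr ((c.val : ℕ) : ZMod (p^2)) ∈ Dih p c := (sr_mem_Dih hp).mpr (phi_lift hp c)
    rw [← h] at this
    exact sr_not_mem_BB hp _ this
  have hReflDih : ∀ j c, Refl p j ≠ Dih p c := by
    intro j c h
    have : r ((p:ℕ) : ZMod (p^2)) ∈ Refl p j := by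
      rw [h, r_mem_Dih hp]; exact phi_p
    rw [r_mem_Refl hp] at this
    exact p_ne_zero' hp this
  have hRefl : ∀ j j', Refl p j = Refl p j' → j = j' := by
    intro j j' h
    have : sr j ∈ Refl p j' := h ▸ (sr_mem_Refl hp).mpr rfl
    exact (sr_mem_Refl hp).mp this
  have hDih : ∀ c c', Dih p c = Dih p c' → c = c' := by
    intro c c' h
    have : sr ((c.val : ℕ) : ZMod (p^2)) ∈ Dih p c' := h ▸ (sr_mem_Dih hp).mpr (phi_lift hp c)
    rw [sr_mem_Dih hp, phi_lift hp] at this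
    exact this
  rintro (a | j | c) (b | j' | c') h
  · cases a <;> cases b <;> simp only [toSub] at h ⊢
    · exact absurd h hAB
    · exact absurd h.symm hAB
  · cases a <;> simp only [toSub] at h
    · exact absurd h (hARefl j')
    · exact absurd h (hBRefl j')
  · cases a <;> simp only [toSub] at h
    · exact absurd h (hADih c')
    · exact absurd h (hBDih c')
  · cases b <;> simp only [toSub] at h
    · exact absurd h.symm (hARefl j)
    · exact absurd h.symm (hBRefl j)
  · simp only [toSub] at h
    rw [hRefl j j' h]
  · simp only [toSub] at h
    exact absurd h (hReflDih j c')
  · cases b <;> simp only [toSub] at h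
    · exact absurd h.symm (hADih c)
    · exact absurd h.symm (hBDih c)
  · simp only [toSub] at h
    exact absurd h.symm (hReflDih j' c)
  · simp only [toSub] at h
    rw [hDih c c' h]

lemma rotS_bot : IG.rotS (⊥ : AddSubgroup (ZMod (p^2))) = ⊥ := by
  ext x
  rcases x with i | k
  · rw [Subgroup.mem_bot, IG.r_mem_rotS, AddSubgroup.mem_bot, one_def]
    simp only [r.injEq]
  · simp only [Subgroup.mem_bot, one_def]
    constructor
    · intro h; exact absurd h (IG.sr_not_mem_rotS)
    · intro h; cases h

lemma dihS_top (j : ZMod (p^2)) : IG.dihS (⊤ : AddSubgroup (ZMod (p^2))) j = ⊤ := by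
  rw [Subgroup.eq_top_iff']
  rintro (i | k) <;> trivial

lemma toSub_surj (H : Subgroup (DihedralGroup (p^2))) (hb : H ≠ ⊥) (ht : H ≠ ⊤) :
    ∃ x : V p, toSub p x = H := by
  by_cases hsr : ∃ k, sr k ∈ H
  · obtain ⟨k, hk⟩ := hsr
    have hH := IG.eq_dihS H hk
    rcases addsub_classify hp (IG.rotPart H) with h | h | h
    · exact ⟨Sum.inr (Sum.inl k), by rw [hH, h]; rfl⟩
    · refine ⟨Sum.inr (Sum.inr (φ p k)), ?_⟩
      show Dih p (φ p k) = H
      rw [hH, h, Dih]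
      apply IG.dihS_congr
      rw [mem_Pk, map_sub, phi_lift hp, sub_self]
    · exfalso
      apply ht
      rw [hH, h, dihS_top hp]
  · push_neg at hsr
    have hH := IG.eq_rotS H hsr
    rcases addsub_classify hp (IG.rotPart H) with h | h | h
    · exfalso; apply hb; rw [hH, h, rotS_bot hp]
    · exact ⟨Sum.inl false, by rw [hH, h]; rfl⟩
    · exact ⟨Sum.inl true, by rw [hH, h]; rfl⟩

end IG2

namespace IG2
open IG
variable {p : ℕ} (hp : p.Prime)

def adjV : V p → V p → Prop
  | .inl a, .inl b => a ≠ b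
  | .inl _, .inr (.inl _) => False
  | .inl _, .inr (.inr _) => True
  | .inr (.inl _), .inl _ => False
  | .inr (.inr _), .inl _ => True
  | .inr (.inl _), .inr (.inl _) => False
  | .inr (.inl j), .inr (.inr c) => φ p j = c
  | .inr (.inr c), .inr (.inl j) => φ p j = c
  | .inr (.inr c), .inr (.inr c') => c ≠ c'

noncomputable instance : DecidableRel (adjV (p := p)) := fun x y => by
  rcases x with (a | j | c) <;> rcases y with (b | j' | c') <;>
    simp only [adjV] <;> infer_instance

include hp

noncomputable def vert (x : V p) : Vert (p^2) := ⟨toSub p x, proper hp x⟩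

lemma vert_bij : Function.Bijective (vert hp) := by
  constructor
  · intro x y h
    exact toSub_inj hp (congrArg Subtype.val h)
  · rintro ⟨H, hb, ht⟩
    obtain ⟨x, hx⟩ := toSub_surj hp H hb ht
    exact ⟨x, Subtype.ext hx⟩

-- intersection helpers
lemma inf_ne_bot {H K : Subgroup (DihedralGroup (p^2))} (g : DihedralGroup (p^2))
    (hg1 : g ≠ 1) (hH : g ∈ H) (hK : g ∈ K) : H ⊓ K ≠ ⊥ := by
  intro h
  have : g ∈ H ⊓ K := ⟨hH, hK⟩
  rw [h, Subgroup.mem_bot] at this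
  exact hg1 this

lemma srk_ne_one (k : ZMod (p^2)) : sr k ≠ 1 := by rw [one_def]; intro h; cases h

lemma adj_iff (x y : V p) :
    (interGraph (DihedralGroup (p^2))).Adj (vert hp x) (vert hp y) ↔ adjV x y := by
  have hne : ∀ x y : V p, (vert hp x ≠ vert hp y) ↔ x ≠ y := by
    intro x y
    constructor
    · intro h hxy; exact h (congrArg _ hxy)
    · intro h hxy; exact h ((vert_bij hp).1 hxy)
  show (vert hp x ≠ vert hp y ∧ toSub p x ⊓ toSub p y ≠ ⊥) ↔ adjV x y
  rw [hne]
  have rp_mem_AA : r ((p:ℕ) : ZMod (p^2)) ∈ AA p := (r_mem_AA hp).mpr phi_p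
  have rp_mem_Dih : ∀ c, r ((p:ℕ) : ZMod (p^2)) ∈ Dih p c := fun c => (r_mem_Dih hp).mpr phi_p
  have rpne := rp_ne_one hp
  -- trivial intersections
  have hAR : ∀ j, AA p ⊓ Refl p j = ⊥ := by
    intro j
    rw [Subgroup.eq_bot_iff_forall]
    rintro (i | k) hx <;> rw [Subgroup.mem_inf] at hx <;> obtain ⟨h1, h2⟩ := hx
    · rw [r_mem_Refl hp] at h2; rw [h2, one_def]
    · exact absurd h1 (sr_not_mem_AA hp k)
  have hBR : ∀ j, BB p ⊓ Refl p j = ⊥ := by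
    intro j
    rw [Subgroup.eq_bot_iff_forall]
    rintro (i | k) hx <;> rw [Subgroup.mem_inf] at hx <;> obtain ⟨h1, h2⟩ := hx
    · rw [r_mem_Refl hp] at h2; rw [h2, one_def]
    · exact absurd h1 (sr_not_mem_BB hp k)
  have hRR : ∀ j j', j ≠ j' → Refl p j ⊓ Refl p j' = ⊥ := by
    intro j j' hjj
    rw [Subgroup.eq_bot_iff_forall]
    rintro (i | k) hx <;> rw [Subgroup.mem_inf] at hx <;> obtain ⟨h1, h2⟩ := hx
    · rw [r_mem_Refl hp] at h2; rw [h2, one_def]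
    · rw [sr_mem_Refl hp] at h1 h2
      exact absurd (h1 ▸ h2) hjj
  have hRD : ∀ j c, φ p j ≠ c → Refl p j ⊓ Dih p c = ⊥ := by
    intro j c hjc
    rw [Subgroup.eq_bot_iff_forall]
    rintro (i | k) hx <;> rw [Subgroup.mem_inf] at hx <;> obtain ⟨h1, h2⟩ := hx
    · rw [r_mem_Refl hp] at h1; rw [h1, one_def]
    · rw [sr_mem_Refl hp] at h1
      rw [sr_mem_Dih hp] at h2
      exact absurd (h1 ▸ h2) hjc
  rcases x with (a | j | c) <;> rcases y with (b | j' | c')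
  · -- Bool/Bool
    cases a <;> cases b
    · simp [adjV]
    · exact ⟨fun _ => (by decide : (false : Bool) ≠ true),
        fun _ => ⟨by simp, inf_ne_bot hp _ rpne rp_mem_AA (r_mem_BB hp _)⟩⟩
    · exact ⟨fun _ => (by decide : (true : Bool) ≠ false),
        fun _ => ⟨by simp, inf_ne_bot hp _ rpne (r_mem_BB hp _) rp_mem_AA⟩⟩
    · simp [adjV]
  · cases a <;> simp only [adjV, iff_false, not_and, ne_eq]
    · intro _; show ¬ AA p ⊓ Refl p j' ≠ ⊥; rw [not_not]; exact hAR j'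
    · intro _; show ¬ BB p ⊓ Refl p j' ≠ ⊥; rw [not_not]; exact hBR j'
  · cases a <;> simp only [adjV, iff_true]
    · refine ⟨by simp, inf_ne_bot hp _ rpne rp_mem_AA (rp_mem_Dih c')⟩
    · refine ⟨by simp, inf_ne_bot hp _ rpne (r_mem_BB hp _) (rp_mem_Dih c')⟩
  · cases b <;> simp only [adjV, iff_false, not_and, ne_eq]
    · intro _; show ¬ Refl p j ⊓ AA p ≠ ⊥; rw [not_not, inf_comm]; exact hAR j
    · intro _; show ¬ Refl p j ⊓ BB p ≠ ⊥; rw [not_not, inf_comm]; exact hBR j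
  · simp only [adjV, iff_false, not_and, ne_eq]
    intro hne'
    have hjj : j ≠ j' := fun h => hne' (by rw [h])
    show ¬ Refl p j ⊓ Refl p j' ≠ ⊥
    rw [not_not]
    exact hRR _ _ hjj
  · simp only [adjV]
    constructor
    · rintro ⟨-, h2⟩
      by_contra hc
      exact h2 (hRD _ _ hc)
    · intro h
      refine ⟨by simp, inf_ne_bot hp (sr j) (srk_ne_one hp j)
        ((sr_mem_Refl hp).mpr rfl) ((sr_mem_Dih hp).mpr h)⟩
  · cases b <;> simp only [adjV, iff_true]
    · refine ⟨by simp, inf_ne_bot hp _ rpne (rp_mem_Dih c) rp_mem_AA⟩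
    · refine ⟨by simp, inf_ne_bot hp _ rpne (rp_mem_Dih c) (r_mem_BB hp _)⟩
  · simp only [adjV]
    constructor
    · rintro ⟨-, h2⟩
      by_contra hc
      rw [inf_comm] at h2
      exact h2 (hRD _ _ hc)
    · intro h
      refine ⟨by simp, inf_ne_bot hp (sr j') (srk_ne_one hp j')
        ((sr_mem_Dih hp).mpr h) ((sr_mem_Refl hp).mpr rfl)⟩
  · simp only [adjV, ne_eq, Sum.inr.injEq, Sum.inr.injEq]
    constructor
    · rintro ⟨h1, -⟩ hcc
      exact h1 (by rw [hcc])
    · intro h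
      refine ⟨fun hxy => h (by simpa using hxy),
        inf_ne_bot hp _ rpne (rp_mem_Dih c) (rp_mem_Dih c')⟩

end IG2


namespace IG2
open IG
variable {p : ℕ} (hp : p.Prime)
include hp

omit hp in
lemma card_split [NeZero p] [NeZero (p^2)] (P : V p → Prop) :
    Nat.card {y : V p // P y} =
      Nat.card {b : Bool // P (.inl b)} +
        (Nat.card {j : ZMod (p^2) // P (.inr (.inl j))} +
          Nat.card {c : ZMod p // P (.inr (.inr c))}) :=
  calc Nat.card {y : V p // P y}
      = Nat.card ({b : Bool // P (.inl b)} ⊕ {z : ZMod (p^2) ⊕ ZMod p // P (.inr z)}) :=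
        Nat.card_congr Equiv.subtypeSum
    _ = Nat.card {b : Bool // P (.inl b)} +
          Nat.card ({j : ZMod (p^2) // P (.inr (.inl j))} ⊕ {c : ZMod p // P (.inr (.inr c))}) := by
        rw [Nat.card_sum, Nat.card_congr (Equiv.subtypeSum (p := fun z => P (.inr z)))]
    _ = _ := by rw [Nat.card_sum]

lemma deg_vert_eq (x : V p) : deg (p^2) (vert hp x) = dfun p x := by
  haveI : NeZero p := ⟨hp.pos.ne'⟩
  haveI : NeZero (p^2) := ⟨pow_ne_zero 2 hp.pos.ne'⟩
  have e1 : ((interGraph (DihedralGroup (p^2))).neighborSet (vert hp x)) ≃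
      {y : V p // adjV (p := p) x y} :=
    Equiv.symm (Equiv.subtypeEquiv (Equiv.ofBijective _ (vert_bij hp))
      (fun y => (adj_iff hp x y).symm))
  rw [deg, Nat.card_congr e1, card_split]
  rcases x with (a | j | c)
  · have h2 : Nat.card {j : ZMod (p^2) // adjV (p := p) (.inl a) (.inr (.inl j))} = 0 := by
      haveI : IsEmpty {j : ZMod (p^2) // adjV (p := p) (.inl a) (.inr (.inl j))} :=
        ⟨fun z => z.2⟩
      exact Nat.card_of_isEmpty
    have h3 : Nat.card {c : ZMod p // adjV (p := p) (.inl a) (.inr (.inr c))} = p := by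
      rw [Nat.card_congr (Equiv.subtypeUnivEquiv
        (p := fun c => adjV (p := p) (.inl a) (.inr (.inr c))) (fun c => trivial)),
        Nat.card_zmod]
    have h1 : Nat.card {b : Bool // adjV (p := p) (.inl a) (.inl b)} = 1 := by
      cases a
      · rw [Nat.card_congr (Equiv.subtypeEquivRight
            (p := fun b => adjV (p := p) (.inl false) (.inl b)) (q := fun b => b = true)
            (fun b => by cases b <;> simp [adjV])),
          Nat.card_eq_fintype_card, Fintype.card_subtype_eq]
      · rw [Nat.card_congr (Equiv.subtypeEquivRight
            (p := fun b => adjV (p := p) (.inl true) (.inl b)) (q := fun b => b = false)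
            (fun b => by cases b <;> simp [adjV])),
          Nat.card_eq_fintype_card, Fintype.card_subtype_eq]
    rw [h1, h2, h3]
    show 1 + (0 + p) = p + 1
    omega
  · have h1 : Nat.card {b : Bool // adjV (p := p) (.inr (.inl j)) (.inl b)} = 0 := by
      haveI : IsEmpty {b : Bool // adjV (p := p) (.inr (.inl j)) (.inl b)} := ⟨fun z => z.2⟩
      exact Nat.card_of_isEmpty
    have h2 : Nat.card {j' : ZMod (p^2) // adjV (p := p) (.inr (.inl j)) (.inr (.inl j'))} = 0 := by
      haveI : IsEmpty {j' : ZMod (p^2) // adjV (p := p) (.inr (.inl j)) (.inr (.inl j'))} :=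
        ⟨fun z => z.2⟩
      exact Nat.card_of_isEmpty
    have h3 : Nat.card {c : ZMod p // adjV (p := p) (.inr (.inl j)) (.inr (.inr c))} = 1 := by
      rw [Nat.card_congr (Equiv.subtypeEquivRight
          (p := fun c => adjV (p := p) (.inr (.inl j)) (.inr (.inr c)))
          (q := fun c => c = φ p j)
          (fun c => show (φ p j = c) ↔ (c = φ p j) from eq_comm)),
        Nat.card_eq_fintype_card, Fintype.card_subtype_eq]
    rw [h1, h2, h3]
    show 0 + (0 + 1) = 1
    omega
  · have h1 : Nat.card {b : Bool // adjV (p := p) (.inr (.inr c)) (.inl b)} = 2 := by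
      rw [Nat.card_congr (Equiv.subtypeUnivEquiv
        (p := fun b => adjV (p := p) (.inr (.inr c)) (.inl b)) (fun b => trivial)),
        Nat.card_eq_fintype_card, Fintype.card_bool]
    have h2 : Nat.card {j : ZMod (p^2) // adjV (p := p) (.inr (.inr c)) (.inr (.inl j))} = p :=
      card_fiber hp c
    have h3 : Nat.card {c' : ZMod p // adjV (p := p) (.inr (.inr c)) (.inr (.inr c'))} = p - 1 := by
      rw [Nat.card_congr (Equiv.subtypeEquivRight
          (p := fun c' => adjV (p := p) (.inr (.inr c)) (.inr (.inr c')))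
          (q := fun c' => ¬(c' = c))
          (fun c' => show (c ≠ c') ↔ ¬(c' = c) from ne_comm)),
        Nat.card_eq_fintype_card, Fintype.card_subtype_compl,
        Fintype.card_subtype_eq, ZMod.card]
    rw [h1, h2, h3]
    show 2 + (p + (p - 1)) = 2 * p + 1
    have := hp.pos
    omega

end IG2


namespace IG2
open IG
variable {p : ℕ} (hp : p.Prime)
include hp

lemma sum_ite_phi [NeZero p] [NeZero (p^2)] (c : ZMod p) (t : ℕ) :
    ∑ j : ZMod (p^2), (if φ p j = c then t else 0) = p * t := by
  classical
  rw [← Finset.sum_filter, Finset.sum_const, smul_eq_mul]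
  congr 1
  have h := card_fiber hp c
  rw [Nat.card_eq_fintype_card, Fintype.card_subtype] at h
  exact h

omit hp in
lemma sum_ite_ne [NeZero p] (c : ZMod p) (t : ℕ) :
    ∑ c' : ZMod p, (if c ≠ c' then t else 0) = (p - 1) * t := by
  classical
  rw [← Finset.sum_filter, Finset.filter_ne, Finset.sum_const, smul_eq_mul,
    Finset.card_erase_of_mem (Finset.mem_univ c), Finset.card_univ, ZMod.card]

omit hp in
lemma sum_ite_eqph [NeZero p] [NeZero (p^2)] (j : ZMod (p^2)) (t : ℕ) :
    ∑ c : ZMod p, (if φ p j = c then t else 0) = t := by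
  classical
  rw [Finset.sum_ite_eq Finset.univ (φ p j) (fun _ => t), if_pos (Finset.mem_univ _)]

lemma inner_A [NeZero p] [NeZero (p^2)] (a : Bool) :
    ∑ y : V p, (if adjV (p := p) (.inl a) y then dfun p (.inl a) * dfun p y else 0)
      = (p+1)*(p+1) + p*((p+1)*(2*p+1)) := by
  classical
  cases a <;>
  · simp only [Fintype.sum_sum_type, Fintype.sum_bool, adjV, dfun, if_true, if_false,
      Finset.sum_const_zero, Finset.sum_const, Finset.card_univ, smul_eq_mul, ZMod.card]
    simp

lemma inner_R [NeZero p] [NeZero (p^2)] (j : ZMod (p^2)) :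
    ∑ y : V p, (if adjV (p := p) (.inr (.inl j)) y then dfun p (.inr (.inl j)) * dfun p y else 0)
      = 2*p+1 := by
  classical
  simp only [Fintype.sum_sum_type, Fintype.sum_bool, adjV, dfun, if_true, if_false,
    Finset.sum_const_zero, Finset.sum_const, Finset.card_univ, smul_eq_mul, ZMod.card]
  rw [sum_ite_eqph (p := p) j (1 * (2*p+1))]
  simp

lemma inner_D [NeZero p] [NeZero (p^2)] (c : ZMod p) :
    ∑ y : V p, (if adjV (p := p) (.inr (.inr c)) y then dfun p (.inr (.inr c)) * dfun p y else 0)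
      = 2*((2*p+1)*(p+1)) + (p*((2*p+1)*1) + (p-1)*((2*p+1)*(2*p+1))) := by
  classical
  simp only [Fintype.sum_sum_type, Fintype.sum_bool, adjV, dfun, if_true, if_false,
    Finset.sum_const_zero, Finset.sum_const, Finset.card_univ, smul_eq_mul, ZMod.card]
  rw [sum_ite_phi hp c ((2*p+1)*1), sum_ite_ne (p := p) c ((2*p+1)*(2*p+1))]
  show (2*p+1)*(p+1) + (2*p+1)*(p+1) + (p * ((2 * p + 1) * 1) + (p - 1) * ((2 * p + 1) * (2 * p + 1))) = _
  ring

end IG2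

theorem stmt15 (p : ℕ) (hp : p.Prime) :
    ∑ᶠ u : Vert (p ^ 2), ∑ᶠ v : Vert (p ^ 2),
        ∑ᶠ _ : (interGraph (DihedralGroup (p ^ 2))).Adj u v,
          deg (p ^ 2) u * deg (p ^ 2) v =
      4 * p ^ 4 + 12 * p ^ 3 + 13 * p ^ 2 + 7 * p + 2 := by
  classical
  haveI : NeZero p := ⟨hp.pos.ne'⟩
  haveI : NeZero (p^2) := ⟨pow_ne_zero 2 hp.pos.ne'⟩
  let e := Equiv.ofBijective _ (IG2.vert_bij hp)
  have hF : ∀ x y : IG2.V p,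
      (∑ᶠ _ : (interGraph (DihedralGroup (p ^ 2))).Adj (e x) (e y),
          deg (p ^ 2) (e x) * deg (p ^ 2) (e y))
        = if IG2.adjV (p := p) x y then IG2.dfun p x * IG2.dfun p y else 0 := by
    intro x y
    rw [finsum_eq_if]
    have hdx : deg (p ^ 2) (e x) = IG2.dfun p x := IG2.deg_vert_eq hp x
    have hdy : deg (p ^ 2) (e y) = IG2.dfun p y := IG2.deg_vert_eq hp y
    rw [hdx, hdy]
    exact if_congr (IG2.adj_iff hp x y) rfl rfl
  calc ∑ᶠ u : Vert (p ^ 2), ∑ᶠ v : Vert (p ^ 2),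
        ∑ᶠ _ : (interGraph (DihedralGroup (p ^ 2))).Adj u v,
          deg (p ^ 2) u * deg (p ^ 2) v
      = ∑ᶠ x : IG2.V p, ∑ᶠ v : Vert (p ^ 2),
          ∑ᶠ _ : (interGraph (DihedralGroup (p ^ 2))).Adj (e x) v,
            deg (p ^ 2) (e x) * deg (p ^ 2) v := (finsum_comp_equiv e).symm
    _ = ∑ᶠ x : IG2.V p, ∑ᶠ y : IG2.V p,
          ∑ᶠ _ : (interGraph (DihedralGroup (p ^ 2))).Adj (e x) (e y),
            deg (p ^ 2) (e x) * deg (p ^ 2) (e y) :=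
        finsum_congr fun x => (finsum_comp_equiv e).symm
    _ = ∑ᶠ x : IG2.V p, ∑ᶠ y : IG2.V p,
          (if IG2.adjV (p := p) x y then IG2.dfun p x * IG2.dfun p y else 0) :=
        finsum_congr fun x => finsum_congr fun y => hF x y
    _ = ∑ x : IG2.V p, ∑ y : IG2.V p,
          (if IG2.adjV (p := p) x y then IG2.dfun p x * IG2.dfun p y else 0) := by
        rw [finsum_eq_sum_of_fintype]
        exact Finset.sum_congr rfl fun x _ => finsum_eq_sum_of_fintype _
    _ = 4 * p ^ 4 + 12 * p ^ 3 + 13 * p ^ 2 + 7 * p + 2 := by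
        rw [Fintype.sum_sum_type, Fintype.sum_sum_type, Fintype.sum_bool]
        rw [IG2.inner_A hp true, IG2.inner_A hp false]
        rw [Finset.sum_congr rfl (fun j _ => IG2.inner_R hp (j : ZMod (p^2))),
          Finset.sum_congr rfl (fun c _ => IG2.inner_D hp (c : ZMod p))]
        rw [Finset.sum_const, Finset.sum_const, Finset.card_univ, Finset.card_univ,
          ZMod.card, ZMod.card, smul_eq_mul, smul_eq_mul]
        obtain ⟨q, rfl⟩ : ∃ q, p = q + 1 := ⟨p - 1, by have := hp.pos; omega⟩
        simp only [Nat.add_sub_cancel]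
        ring
end

section
/- For a prime p, the metric dimension of the intersection graph of D_{2p^2} equals p^2 − p + 1. -/
open DihedralGroup Subgroup

set_option linter.unusedSectionVars false

namespace IGDP

variable {p : ℕ}

/-- divisibility by `p` in `ZMod (p^2)` -/
def Pd (p : ℕ) (c : ZMod (p ^ 2)) : Prop := ∃ m, c = (p : ZMod (p ^ 2)) * m

lemma Pd_zero : Pd p 0 := ⟨0, by ring⟩

lemma Pd.add {a b : ZMod (p ^ 2)} (ha : Pd p a) (hb : Pd p b) : Pd p (a + b) := by
  obtain ⟨m, rfl⟩ := ha; obtain ⟨k, rfl⟩ := hb; exact ⟨m + k, by ring⟩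

lemma Pd.neg {a : ZMod (p ^ 2)} (ha : Pd p a) : Pd p (-a) := by
  obtain ⟨m, rfl⟩ := ha; exact ⟨-m, by ring⟩

lemma Pd.sub {a b : ZMod (p ^ 2)} (ha : Pd p a) (hb : Pd p b) : Pd p (a - b) := by
  rw [sub_eq_add_neg]; exact ha.add hb.neg

lemma pd_self : Pd p ((p : ZMod (p ^ 2))) := ⟨1, by ring⟩

section basic

variable [hpf : Fact p.Prime]

lemma ppos : 0 < p := hpf.out.pos

instance : NeZero (p ^ 2) := ⟨pow_ne_zero 2 hpf.out.pos.ne'⟩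

lemma one_lt_psq : 1 < p ^ 2 := by
  have := hpf.out.one_lt; nlinarith

lemma p_lt_psq : p < p ^ 2 := by
  have := hpf.out.one_lt; nlinarith

lemma Pd_iff_dvd {c : ZMod (p ^ 2)} : Pd p c ↔ p ∣ c.val := by
  constructor
  · rintro ⟨m, rfl⟩
    have : ((p : ZMod (p ^ 2)) * m) = ((p * m.val : ℕ) : ZMod (p ^ 2)) := by
      push_cast [ZMod.natCast_val, ZMod.cast_id]; ring
    rw [this, ZMod.val_natCast]
    exact (Nat.dvd_mod_iff (dvd_pow_self p (by norm_num))).mpr (dvd_mul_right p m.val)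
  · rintro ⟨k, hk⟩
    refine ⟨(k : ZMod (p ^ 2)), ?_⟩
    have hc : ((c.val : ℕ) : ZMod (p ^ 2)) = c := ZMod.natCast_rightInverse c
    rw [← hc, hk]; push_cast; ring

lemma not_pd_one : ¬ Pd p (1 : ZMod (p ^ 2)) := by
  rw [Pd_iff_dvd, ZMod.val_one_eq_one_mod, Nat.one_mod_eq_one.mpr one_lt_psq.ne']
  intro h
  exact hpf.out.one_lt.ne' (Nat.dvd_one.mp h)

end basic

/-- the full rotation subgroup -/
def A (p : ℕ) : Subgroup (DihedralGroup (p ^ 2)) where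
  carrier := {x | ∃ c, x = r c}
  one_mem' := ⟨0, rfl⟩
  mul_mem' := by rintro _ _ ⟨a, rfl⟩ ⟨b, rfl⟩; exact ⟨a + b, rfl⟩
  inv_mem' := by rintro _ ⟨a, rfl⟩; exact ⟨-a, rfl⟩

/-- the rotation subgroup of order p -/
def B (p : ℕ) : Subgroup (DihedralGroup (p ^ 2)) where
  carrier := {x | ∃ c, x = r c ∧ Pd p c}
  one_mem' := ⟨0, rfl, Pd_zero⟩
  mul_mem' := by rintro _ _ ⟨a, rfl, ha⟩ ⟨b, rfl, hb⟩; exact ⟨a + b, rfl, ha.add hb⟩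
  inv_mem' := by rintro _ ⟨a, rfl, ha⟩; exact ⟨-a, rfl, ha.neg⟩

/-- reflection subgroups of order 2 -/
def S (p : ℕ) (i : ZMod (p ^ 2)) : Subgroup (DihedralGroup (p ^ 2)) where
  carrier := {x | x = 1 ∨ x = sr i}
  one_mem' := Or.inl rfl
  mul_mem' := by
    rintro _ _ (rfl | rfl) (rfl | rfl)
    · exact Or.inl (one_mul 1)
    · exact Or.inr (one_mul _)
    · exact Or.inr (mul_one _)
    · exact Or.inl (by simp)
  inv_mem' := by
    rintro _ (rfl | rfl)
    · exact Or.inl inv_one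
    · exact Or.inr rfl

/-- dihedral subgroups of order 2p -/
def D (p : ℕ) (i : ZMod (p ^ 2)) : Subgroup (DihedralGroup (p ^ 2)) where
  carrier := {x | (∃ c, x = r c ∧ Pd p c) ∨ ∃ c, x = sr c ∧ Pd p (c - i)}
  one_mem' := Or.inl ⟨0, rfl, Pd_zero⟩
  mul_mem' := by
    rintro _ _ (⟨a, rfl, ha⟩ | ⟨a, rfl, ha⟩) (⟨b, rfl, hb⟩ | ⟨b, rfl, hb⟩)
    · exact Or.inl ⟨a + b, rfl, ha.add hb⟩
    · refine Or.inr ⟨b - a, rfl, ?_⟩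
      have : b - a - i = (b - i) - a := by ring
      rw [this]; exact hb.sub ha
    · refine Or.inr ⟨a + b, rfl, ?_⟩
      have : a + b - i = (a - i) + b := by ring
      rw [this]; exact ha.add hb
    · refine Or.inl ⟨b - a, rfl, ?_⟩
      have : b - a = (b - i) - (a - i) := by ring
      rw [this]; exact hb.sub ha
  inv_mem' := by
    rintro _ (⟨a, rfl, ha⟩ | ⟨a, rfl, ha⟩)
    · exact Or.inl ⟨-a, rfl, ha.neg⟩
    · exact Or.inr ⟨a, rfl, ha⟩

lemma mem_A {x : DihedralGroup (p ^ 2)} : x ∈ A p ↔ ∃ c, x = r c := Iff.rfl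
lemma mem_B {x : DihedralGroup (p ^ 2)} : x ∈ B p ↔ ∃ c, x = r c ∧ Pd p c := Iff.rfl
lemma mem_S {x : DihedralGroup (p ^ 2)} {i} : x ∈ S p i ↔ x = 1 ∨ x = sr i := Iff.rfl
lemma mem_D {x : DihedralGroup (p ^ 2)} {i} :
    x ∈ D p i ↔ (∃ c, x = r c ∧ Pd p c) ∨ ∃ c, x = sr c ∧ Pd p (c - i) := Iff.rfl

lemma r_pow (c : ZMod (p ^ 2)) (k : ℕ) : (r c) ^ k = r ((k : ZMod (p ^ 2)) * c) := by
  induction k with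
  | zero => simp
  | succ k ih =>
    simp only [pow_succ, ih, r_mul_r]
    congr 1
    push_cast
    ring


section classify

variable [hpf : Fact p.Prime]

lemma r_mem_of_unit {c : ZMod (p ^ 2)} (hc : ¬ p ∣ c.val) {H : Subgroup (DihedralGroup (p ^ 2))}
    (h : r c ∈ H) (d : ZMod (p ^ 2)) : r d ∈ H := by
  have hcop : Nat.Coprime c.val (p ^ 2) :=
    Nat.Coprime.pow_right 2 ((hpf.out.coprime_iff_not_dvd.mpr hc).symm)
  have hu : IsUnit c := by
    have := (ZMod.isUnit_iff_coprime c.val (p ^ 2)).mpr hcop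
    rwa [ZMod.natCast_rightInverse c] at this
  obtain ⟨b, hb⟩ := hu.exists_left_inv
  have key : r d = (r c) ^ ((b * d).val) := by
    rw [r_pow, ZMod.natCast_rightInverse]
    congr 1
    rw [mul_right_comm, hb, one_mul]
  rw [key]
  exact pow_mem h _

lemma rp_mem {c : ZMod (p ^ 2)} (hc0 : c ≠ 0) (hcd : p ∣ c.val)
    {H : Subgroup (DihedralGroup (p ^ 2))} (h : r c ∈ H) : r (p : ZMod (p ^ 2)) ∈ H := by
  obtain ⟨m, hm⟩ := hcd
  have hmlt : m < p := by
    have := c.val_lt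
    rw [hm] at this
    by_contra hc
    push_neg at hc
    have : p * p ≤ p * m := Nat.mul_le_mul_left p hc
    nlinarith [this, c.val_lt, hm]
  have hm0 : m ≠ 0 := by
    rintro rfl
    apply hc0
    have : c.val = 0 := by omega
    exact (ZMod.val_eq_zero c).mp this
  have hmp : ¬ p ∣ m := fun hdvd => hm0 (Nat.eq_zero_of_dvd_of_lt hdvd hmlt)
  haveI : NeZero p := ⟨hpf.out.pos.ne'⟩
  set z : ZMod p := ((m : ZMod p))⁻¹ with hz
  have hmz : (m : ZMod p) ≠ 0 := by
    rw [Ne, ZMod.natCast_eq_zero_iff]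
    exact hmp
  have hone : ((z.val * m : ℕ) : ZMod p) = ((1 : ℕ) : ZMod p) := by
    push_cast
    rw [ZMod.natCast_rightInverse z, hz, inv_mul_cancel₀ hmz]
  have hmod : z.val * m ≡ 1 [MOD p] := (ZMod.natCast_eq_natCast_iff _ _ _).mp hone
  have hmod2 : z.val * c.val ≡ p [MOD p ^ 2] := by
    have h' : p * (z.val * m) ≡ p * 1 [MOD p * p] := hmod.mul_left' (c := p)
    have e1 : z.val * c.val = p * (z.val * m) := by rw [hm]; ring
    have e2 : p * p = p ^ 2 := (sq p).symm
    have e3 : p * 1 = p := mul_one p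
    have h'' : z.val * c.val ≡ p * 1 [MOD p ^ 2] := by rw [e1, ← e2]; exact h'
    simpa using h''
  have hcast : ((z.val * c.val : ℕ) : ZMod (p ^ 2)) = ((p : ℕ) : ZMod (p ^ 2)) :=
    (ZMod.natCast_eq_natCast_iff _ _ _).mpr hmod2
  have key : r ((p : ℕ) : ZMod (p ^ 2)) = (r c) ^ (z.val) := by
    rw [r_pow]
    congr 1
    conv_rhs => rw [← ZMod.natCast_rightInverse c]
    rw [← Nat.cast_mul, hcast]
  rw [key]
  exact pow_mem h _

lemma pd_r_mem {d : ZMod (p ^ 2)} (hd : Pd p d) {H : Subgroup (DihedralGroup (p ^ 2))}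
    (h : r (p : ZMod (p ^ 2)) ∈ H) : r d ∈ H := by
  obtain ⟨m, rfl⟩ := hd
  have key : r ((p : ZMod (p ^ 2)) * m) = (r (p : ZMod (p ^ 2))) ^ (m.val) := by
    rw [r_pow, ZMod.natCast_rightInverse]
    congr 1
    ring
  rw [key]
  exact pow_mem h _

theorem classify (H : Subgroup (DihedralGroup (p ^ 2))) (hbot : H ≠ ⊥) (htop : H ≠ ⊤) :
    H = A p ∨ H = B p ∨ (∃ i, H = S p i) ∨ ∃ i, H = D p i := by
  by_cases hs : ∃ j, sr j ∈ H
  · obtain ⟨j, hj⟩ := hs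
    by_cases h1 : ∃ c : ZMod (p ^ 2), r c ∈ H ∧ ¬ p ∣ c.val
    · exfalso
      apply htop
      obtain ⟨c, hc, hcd⟩ := h1
      rw [eq_top_iff']
      intro x
      cases x with
      | r d => exact r_mem_of_unit hcd hc d
      | sr d =>
        have hx : sr d = sr j * r (d - j) := by rw [sr_mul_r]; congr 1; ring
        rw [hx]
        exact mul_mem hj (r_mem_of_unit hcd hc _)
    · push_neg at h1
      by_cases h2 : ∃ c : ZMod (p ^ 2), r c ∈ H ∧ c ≠ 0
      · obtain ⟨c, hc, hc0⟩ := h2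
        have hrp : r (p : ZMod (p ^ 2)) ∈ H := rp_mem hc0 (h1 c hc) hc
        refine Or.inr (Or.inr (Or.inr ⟨j, ?_⟩))
        ext x
        simp only [mem_D]
        constructor
        · intro hx
          cases x with
          | r d => exact Or.inl ⟨d, rfl, Pd_iff_dvd.mpr (h1 d hx)⟩
          | sr d =>
            refine Or.inr ⟨d, rfl, ?_⟩
            have hr : r (d - j) ∈ H := by
              rw [← sr_mul_sr j d]; exact mul_mem hj hx
            exact Pd_iff_dvd.mpr (h1 _ hr)
        · rintro (⟨d, rfl, hd⟩ | ⟨d, rfl, hd⟩)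
          · exact pd_r_mem hd hrp
          · have hx : sr d = sr j * r (d - j) := by rw [sr_mul_r]; congr 1; ring
            rw [hx]
            exact mul_mem hj (pd_r_mem hd hrp)
      · push_neg at h2
        refine Or.inr (Or.inr (Or.inl ⟨j, ?_⟩))
        ext x
        simp only [mem_S]
        constructor
        · intro hx
          cases x with
          | r d =>
            have : d = 0 := h2 d hx
            subst this
            exact Or.inl one_def.symm
          | sr d =>
            have hr : r (d - j) ∈ H := by
              rw [← sr_mul_sr j d]; exact mul_mem hj hx
            have hdj : d = j := by
              have := h2 _ hr
              rwa [sub_eq_zero] at this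
            exact Or.inr (by rw [hdj])
        · rintro (rfl | rfl)
          · exact one_mem H
          · exact hj
  · push_neg at hs
    by_cases h1 : ∃ c : ZMod (p ^ 2), r c ∈ H ∧ ¬ p ∣ c.val
    · left
      obtain ⟨c, hc, hcd⟩ := h1
      ext x
      simp only [mem_A]
      constructor
      · intro hx
        cases x with
        | r d => exact ⟨d, rfl⟩
        | sr d => exact absurd hx (hs d)
      · rintro ⟨d, rfl⟩
        exact r_mem_of_unit hcd hc d
    · push_neg at h1
      by_cases h2 : ∃ c : ZMod (p ^ 2), r c ∈ H ∧ c ≠ 0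
      · refine Or.inr (Or.inl ?_)
        obtain ⟨c, hc, hc0⟩ := h2
        have hrp : r (p : ZMod (p ^ 2)) ∈ H := rp_mem hc0 (h1 c hc) hc
        ext x
        simp only [mem_B]
        constructor
        · intro hx
          cases x with
          | r d => exact ⟨d, rfl, Pd_iff_dvd.mpr (h1 d hx)⟩
          | sr d => exact absurd hx (hs d)
        · rintro ⟨d, rfl, hd⟩
          exact pd_r_mem hd hrp
      · exfalso
        apply hbot
        push_neg at h2
        rw [Subgroup.eq_bot_iff_forall]
        intro x hx
        cases x with
        | r d => rw [h2 d hx]; exact one_def.symm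
        | sr d => exact absurd hx (hs d)

end classify



section vertices

variable (p : ℕ) [hpf : Fact p.Prime]

lemma r_eq_one_iff {c : ZMod (p ^ 2)} : (r c : DihedralGroup (p ^ 2)) = 1 ↔ c = 0 := by
  rw [one_def]; exact ⟨fun h => by injection h, fun h => by rw [h]⟩

lemma one_ne_zero' : (1 : ZMod (p ^ 2)) ≠ 0 := by
  intro h
  have := congrArg ZMod.val h
  rw [ZMod.val_one_eq_one_mod, ZMod.val_zero, Nat.one_mod_eq_one.mpr one_lt_psq.ne'] at this
  exact one_ne_zero this

lemma p_ne_zero' : ((p : ℕ) : ZMod (p ^ 2)) ≠ 0 := by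
  intro h
  have := congrArg ZMod.val h
  rw [ZMod.val_natCast_of_lt p_lt_psq, ZMod.val_zero] at this
  exact ppos.ne' this

lemma r_one_mem_A : (r 1 : DihedralGroup (p ^ 2)) ∈ A p := ⟨1, rfl⟩
lemma r_one_not_mem_B : (r 1 : DihedralGroup (p ^ 2)) ∉ B p := by
  rintro ⟨c, hc, hpd⟩
  injection hc with h
  rw [← h] at hpd
  exact not_pd_one hpd
lemma r_one_not_mem_S (i) : (r 1 : DihedralGroup (p ^ 2)) ∉ S p i := by
  rintro (h | h)
  · exact one_ne_zero' p ((r_eq_one_iff p).mp h)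
  · exact absurd h (by simp)
lemma r_one_not_mem_D (i) : (r 1 : DihedralGroup (p ^ 2)) ∉ D p i := by
  rintro (⟨c, hc, hpd⟩ | ⟨c, hc, _⟩)
  · injection hc with h
    rw [← h] at hpd
    exact not_pd_one hpd
  · exact absurd hc (by simp)
lemma rp_mem_B : (r ((p : ℕ) : ZMod (p ^ 2))) ∈ B p := ⟨_, rfl, pd_self⟩
lemma rp_mem_D (i) : (r ((p : ℕ) : ZMod (p ^ 2))) ∈ D p i := Or.inl ⟨_, rfl, pd_self⟩
lemma rp_ne_one : (r ((p : ℕ) : ZMod (p ^ 2))) ≠ 1 :=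
  fun h => p_ne_zero' p ((r_eq_one_iff p).mp h)
lemma rp_not_mem_S (i) : (r ((p : ℕ) : ZMod (p ^ 2))) ∉ S p i := by
  rintro (h | h)
  · exact rp_ne_one p h
  · exact absurd h (by simp)
lemma sr_mem_S (i) : (sr i : DihedralGroup (p ^ 2)) ∈ S p i := Or.inr rfl
lemma sr_mem_D_iff {i c : ZMod (p ^ 2)} : (sr c : DihedralGroup (p ^ 2)) ∈ D p i ↔ Pd p (c - i) := by
  constructor
  · rintro (⟨d, hd, _⟩ | ⟨d, hd, hpd⟩)
    · exact absurd hd (by simp)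
    · injection hd with h
      rwa [← h] at hpd
  · intro h
    exact Or.inr ⟨c, rfl, h⟩
lemma sr_not_mem_A (c) : (sr c : DihedralGroup (p ^ 2)) ∉ A p := by
  rintro ⟨d, hd⟩
  exact absurd hd (by simp)
lemma sr_not_mem_B (c) : (sr c : DihedralGroup (p ^ 2)) ∉ B p := by
  rintro ⟨d, hd, _⟩
  exact absurd hd (by simp)
lemma sr_ne_one (c : ZMod (p ^ 2)) : (sr c : DihedralGroup (p ^ 2)) ≠ 1 := by
  rw [one_def]; intro h; cases h

lemma A_ne_bot : A p ≠ ⊥ := fun h =>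
  (fun hh => one_ne_zero' p ((r_eq_one_iff p).mp hh))
    ((Subgroup.eq_bot_iff_forall _).mp h _ (r_one_mem_A p))
lemma A_ne_top : A p ≠ ⊤ := fun h => sr_not_mem_A p 0 (h ▸ Subgroup.mem_top _)
lemma B_ne_bot : B p ≠ ⊥ := fun h =>
  rp_ne_one p ((Subgroup.eq_bot_iff_forall _).mp h _ (rp_mem_B p))
lemma B_ne_top : B p ≠ ⊤ := fun h => sr_not_mem_B p 0 (h ▸ Subgroup.mem_top _)
lemma S_ne_bot (i) : S p i ≠ ⊥ := fun h =>
  sr_ne_one p i ((Subgroup.eq_bot_iff_forall _).mp h _ (sr_mem_S p i))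
lemma S_ne_top (i) : S p i ≠ ⊤ := fun h => r_one_not_mem_S p i (h ▸ Subgroup.mem_top _)
lemma D_ne_bot (i) : D p i ≠ ⊥ := fun h =>
  rp_ne_one p ((Subgroup.eq_bot_iff_forall _).mp h _ (rp_mem_D p i))
lemma D_ne_top (i) : D p i ≠ ⊤ := fun h => r_one_not_mem_D p i (h ▸ Subgroup.mem_top _)

/-- named vertices -/
def vA : Vert (p ^ 2) := ⟨A p, A_ne_bot p, A_ne_top p⟩
def vB : Vert (p ^ 2) := ⟨B p, B_ne_bot p, B_ne_top p⟩
def vS (i : ZMod (p ^ 2)) : Vert (p ^ 2) := ⟨S p i, S_ne_bot p i, S_ne_top p i⟩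
def vD (i : ZMod (p ^ 2)) : Vert (p ^ 2) := ⟨D p i, D_ne_bot p i, D_ne_top p i⟩

variable {p}

lemma A_ne_B : A p ≠ B p := fun h => r_one_not_mem_B p (h ▸ r_one_mem_A p)
lemma A_ne_S (i) : A p ≠ S p i := fun h => r_one_not_mem_S p i (h ▸ r_one_mem_A p)
lemma A_ne_D (i) : A p ≠ D p i := fun h => r_one_not_mem_D p i (h ▸ r_one_mem_A p)
lemma B_ne_S (i) : B p ≠ S p i := fun h => rp_not_mem_S p i (h ▸ rp_mem_B p)
lemma B_ne_D (i) : B p ≠ D p i := fun h => sr_not_mem_B p i (h.symm ▸ (sr_mem_D_iff p).mpr (by simpa using (Pd_zero : Pd p 0)))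
lemma S_ne_D (i j) : S p i ≠ D p j := fun h => rp_not_mem_S p i (h ▸ rp_mem_D p j)
lemma S_inj {i j : ZMod (p ^ 2)} (h : S p i = S p j) : i = j := by
  have := h ▸ sr_mem_S p i
  rcases this with h1 | h1
  · exact absurd h1 (sr_ne_one p i)
  · injection h1
lemma D_eq_iff {i j : ZMod (p ^ 2)} : D p i = D p j ↔ Pd p (i - j) := by
  constructor
  · intro h
    have : (sr i : DihedralGroup (p ^ 2)) ∈ D p j :=
      h ▸ (sr_mem_D_iff p).mpr (by simpa using (Pd_zero : Pd p 0))
    exact (sr_mem_D_iff p).mp this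
  · intro h
    ext x
    cases x with
    | r c =>
      simp only [mem_D]
      constructor
      · rintro (⟨d, hd, hpd⟩ | ⟨d, hd, _⟩)
        · exact Or.inl ⟨d, hd, hpd⟩
        · exact absurd hd (by simp)
      · rintro (⟨d, hd, hpd⟩ | ⟨d, hd, _⟩)
        · exact Or.inl ⟨d, hd, hpd⟩
        · exact absurd hd (by simp)
    | sr c =>
      rw [sr_mem_D_iff p, sr_mem_D_iff p]
      constructor
      · intro h'
        have : c - j = (c - i) + (i - j) := by ring
        rw [this]; exact h'.add h
      · intro h'
        have : c - i = (c - j) - (i - j) := by ring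
        rw [this]; exact h'.sub h

lemma vertK {H K : Subgroup (DihedralGroup (p ^ 2))} {h1 h2} :
    (⟨H, h1⟩ : Vert (p ^ 2)) = ⟨K, h2⟩ ↔ H = K := Subtype.mk_eq_mk

end vertices


section graphGeneric

open SimpleGraph

variable {V : Type*} {G : SimpleGraph V}

lemma dist_eq_two' {u w x : V} (hne : u ≠ w) (hna : ¬G.Adj u w)
    (h1 : G.Adj u x) (h2 : G.Adj x w) : G.dist u w = 2 := by
  have hle : G.dist u w ≤ 2 := by
    have := SimpleGraph.dist_le (SimpleGraph.Walk.cons h1 (SimpleGraph.Walk.cons h2 SimpleGraph.Walk.nil))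
    simpa using this
  have hr : G.Reachable u w := ⟨SimpleGraph.Walk.cons h1 (SimpleGraph.Walk.cons h2 SimpleGraph.Walk.nil)⟩
  have h0 : G.dist u w ≠ 0 := (hr.pos_dist_of_ne hne).ne'
  have h1' : G.dist u w ≠ 1 := fun h => hna (SimpleGraph.dist_eq_one_iff_adj.mp h)
  omega

lemma dist_eq_three' {u w x y : V} (hne : u ≠ w) (hna : ¬G.Adj u w)
    (hno : ∀ z, G.Adj u z → G.Adj z w → False)
    (h1 : G.Adj u x) (h2 : G.Adj x y) (h3 : G.Adj y w) : G.dist u w = 3 := by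
  have hle : G.dist u w ≤ 3 := by
    have := SimpleGraph.dist_le (SimpleGraph.Walk.cons h1 (SimpleGraph.Walk.cons h2
      (SimpleGraph.Walk.cons h3 SimpleGraph.Walk.nil)))
    simpa using this
  have hr : G.Reachable u w := ⟨SimpleGraph.Walk.cons h1 (SimpleGraph.Walk.cons h2
      (SimpleGraph.Walk.cons h3 SimpleGraph.Walk.nil))⟩
  have h0 : G.dist u w ≠ 0 := (hr.pos_dist_of_ne hne).ne'
  have h1' : G.dist u w ≠ 1 := fun h => hna (SimpleGraph.dist_eq_one_iff_adj.mp h)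
  have h2' : G.dist u w ≠ 2 := by
    intro hd
    obtain ⟨P, hP⟩ := hr.exists_walk_length_eq_dist
    rw [hd] at hP
    cases P with
    | nil => simp at hP
    | @cons _ a _ ha q =>
      cases q with
      | nil => simp at hP
      | @cons _ b _ hb q2 =>
        cases q2 with
        | nil => exact hno _ ha hb
        | cons hc q3 => simp [SimpleGraph.Walk.length_cons] at hP
  omega

lemma twin_walk {u v : V} (h : ∀ x, x ≠ u → x ≠ v → (G.Adj u x ↔ G.Adj v x)) {w : V}
    (hwv : w ≠ v) (P : G.Walk v w) : ∃ Q : G.Walk u w, Q.length ≤ P.length := by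
  cases P with
  | nil => exact absurd rfl hwv
  | @cons _ x _ a q =>
    by_cases hx : x = u
    · subst hx
      exact ⟨q, by simp⟩
    · have hxv : x ≠ v := (G.ne_of_adj a).symm
      exact ⟨SimpleGraph.Walk.cons ((h x hx hxv).mpr a) q, by simp⟩

lemma twin_dist {u v : V} (h : ∀ x, x ≠ u → x ≠ v → (G.Adj u x ↔ G.Adj v x)) {w : V}
    (hwu : w ≠ u) (hwv : w ≠ v) : G.dist u w = G.dist v w := by
  have h' : ∀ x, x ≠ v → x ≠ u → (G.Adj v x ↔ G.Adj u x) := fun x h1 h2 => (h x h2 h1).symm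
  by_cases hr : G.Reachable v w
  · by_cases hru : G.Reachable u w
    · apply le_antisymm
      · obtain ⟨P, hP⟩ := hr.exists_walk_length_eq_dist
        obtain ⟨Q, hQ⟩ := twin_walk h hwv P
        calc G.dist u w ≤ Q.length := SimpleGraph.dist_le Q
        _ ≤ P.length := hQ
        _ = G.dist v w := hP
      · obtain ⟨P, hP⟩ := hru.exists_walk_length_eq_dist
        obtain ⟨Q, hQ⟩ := twin_walk h' hwu P
        calc G.dist v w ≤ Q.length := SimpleGraph.dist_le Q
        _ ≤ P.length := hQ
        _ = G.dist u w := hP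
    · exfalso
      obtain ⟨P⟩ := hr
      obtain ⟨Q, _⟩ := twin_walk h hwv P
      exact hru ⟨Q⟩
  · have hru : ¬ G.Reachable u w := by
      rintro ⟨Q⟩
      obtain ⟨P, _⟩ := twin_walk h' hwu Q
      exact hr ⟨P⟩
    rw [SimpleGraph.dist_eq_zero_of_not_reachable hr,
      SimpleGraph.dist_eq_zero_of_not_reachable hru]

end graphGeneric

section adjacency

variable {p : ℕ} [hpf : Fact p.Prime]

lemma adj_of {u v : Vert (p ^ 2)} (hne : u.1 ≠ v.1) {x : DihedralGroup (p ^ 2)}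
    (hx1 : x ∈ u.1) (hx2 : x ∈ v.1) (hx : x ≠ 1) : (interGraph (DihedralGroup (p ^ 2))).Adj u v :=
  ⟨fun h => hne (congrArg Subtype.val h),
   fun h => hx ((Subgroup.eq_bot_iff_forall _).mp h x (Subgroup.mem_inf.mpr ⟨hx1, hx2⟩))⟩

lemma not_adj_of {u v : Vert (p ^ 2)} (h : ∀ x, x ∈ u.1 → x ∈ v.1 → x = 1) :
    ¬ (interGraph (DihedralGroup (p ^ 2))).Adj u v := fun hadj =>
  hadj.2 ((Subgroup.eq_bot_iff_forall _).mpr fun x hx =>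
    h x (Subgroup.mem_inf.mp hx).1 (Subgroup.mem_inf.mp hx).2)

lemma classifyV (x : Vert (p ^ 2)) :
    x = vA p ∨ x = vB p ∨ (∃ i, x = vS p i) ∨ ∃ i, x = vD p i := by
  obtain ⟨H, h1, h2⟩ := x
  rcases classify H h1 h2 with h | h | ⟨i, h⟩ | ⟨i, h⟩
  · exact Or.inl (Subtype.ext h)
  · exact Or.inr (Or.inl (Subtype.ext h))
  · exact Or.inr (Or.inr (Or.inl ⟨i, Subtype.ext h⟩))
  · exact Or.inr (Or.inr (Or.inr ⟨i, Subtype.ext h⟩))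

lemma vS_inj {i j : ZMod (p ^ 2)} (h : vS p i = vS p j) : i = j :=
  S_inj (vertK.mp h)

lemma vD_eq_iff {i j : ZMod (p ^ 2)} : vD p i = vD p j ↔ Pd p (i - j) := by
  rw [show (vD p i = vD p j) ↔ D p i = D p j from vertK]
  exact D_eq_iff

lemma aAB : (interGraph (DihedralGroup (p ^ 2))).Adj (vA p) (vB p) :=
  adj_of A_ne_B ⟨_, rfl⟩ (rp_mem_B p) (rp_ne_one p)

lemma aAD (i) : (interGraph (DihedralGroup (p ^ 2))).Adj (vA p) (vD p i) :=
  adj_of (A_ne_D i) ⟨_, rfl⟩ (rp_mem_D p i) (rp_ne_one p)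

lemma aBD (i) : (interGraph (DihedralGroup (p ^ 2))).Adj (vB p) (vD p i) :=
  adj_of (B_ne_D i) (rp_mem_B p) (rp_mem_D p i) (rp_ne_one p)

lemma aDD {i j : ZMod (p ^ 2)} (h : ¬ Pd p (i - j)) :
    (interGraph (DihedralGroup (p ^ 2))).Adj (vD p i) (vD p j) :=
  adj_of (fun he => h (D_eq_iff.mp he)) (rp_mem_D p i) (rp_mem_D p j) (rp_ne_one p)

lemma aDS {i m : ZMod (p ^ 2)} (h : Pd p (m - i)) :
    (interGraph (DihedralGroup (p ^ 2))).Adj (vD p i) (vS p m) :=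
  adj_of (S_ne_D m i).symm ((sr_mem_D_iff p).mpr h) (sr_mem_S p m) (sr_ne_one p m)

lemma nAS (m) : ¬ (interGraph (DihedralGroup (p ^ 2))).Adj (vA p) (vS p m) :=
  not_adj_of fun x hxA hxS => by
    rcases hxS with h | h
    · exact h
    · exact absurd (h ▸ hxA) (sr_not_mem_A p m)

lemma nBS (m) : ¬ (interGraph (DihedralGroup (p ^ 2))).Adj (vB p) (vS p m) :=
  not_adj_of fun x hxB hxS => by
    rcases hxS with h | h
    · exact h
    · exact absurd (h ▸ hxB) (sr_not_mem_B p m)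

lemma nSS {i m : ZMod (p ^ 2)} (hne : i ≠ m) :
    ¬ (interGraph (DihedralGroup (p ^ 2))).Adj (vS p i) (vS p m) :=
  not_adj_of fun x hxi hxm => by
    rcases hxi with h | h
    · exact h
    · rcases hxm with h' | h'
      · exact h'
      · rw [h] at h'
        injection h' with he
        exact absurd he hne

lemma nDS {i m : ZMod (p ^ 2)} (h : ¬ Pd p (m - i)) :
    ¬ (interGraph (DihedralGroup (p ^ 2))).Adj (vD p i) (vS p m) :=
  not_adj_of fun x hxD hxS => by
    rcases hxS with h' | h'
    · exact h'
    · subst h'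
      exact absurd ((sr_mem_D_iff p).mp hxD) h

lemma adj_vS_mem {w : Vert (p ^ 2)} {m : ZMod (p ^ 2)}
    (h : (interGraph (DihedralGroup (p ^ 2))).Adj w (vS p m)) : sr m ∈ w.1 := by
  obtain ⟨hne, hinf⟩ := h
  have hex : ∃ x ∈ w.1 ⊓ S p m, x ≠ 1 := by
    by_contra hc
    push_neg at hc
    exact hinf ((Subgroup.eq_bot_iff_forall _).mpr hc)
  obtain ⟨x, hx, hx1⟩ := hex
  obtain ⟨hxw, hxS⟩ := Subgroup.mem_inf.mp hx
  rcases hxS with h' | h'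
  · exact absurd h' hx1
  · exact h' ▸ hxw

lemma no_common_SS {i m : ZMod (p ^ 2)} (h : ¬ Pd p (i - m)) (z : Vert (p ^ 2))
    (h1 : (interGraph (DihedralGroup (p ^ 2))).Adj (vS p i) z)
    (h2 : (interGraph (DihedralGroup (p ^ 2))).Adj z (vS p m)) : False := by
  have hi : sr i ∈ z.1 := adj_vS_mem h1.symm
  have hm : sr m ∈ z.1 := adj_vS_mem h2
  rcases classifyV z with rfl | rfl | ⟨c, rfl⟩ | ⟨c, rfl⟩
  · exact sr_not_mem_A p i hi
  · exact sr_not_mem_B p i hi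
  · rcases hi with h' | h'
    · exact sr_ne_one p i h'
    · rcases hm with h'' | h''
      · exact sr_ne_one p m h''
      · injection h' with he
        injection h'' with he'
        apply h
        rw [he, he', sub_self]
        exact Pd_zero
  · have hpi : Pd p (i - c) := (sr_mem_D_iff p).mp hi
    have hpm : Pd p (m - c) := (sr_mem_D_iff p).mp hm
    apply h
    have : i - m = (i - c) - (m - c) := by ring
    rw [this]
    exact hpi.sub hpm

end adjacency


section distances

variable {p : ℕ} [hpf : Fact p.Prime]

lemma pd_sub_self (i : ZMod (p ^ 2)) : Pd p (i - i) := by simpa using (Pd_zero : Pd p 0)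

lemma dAA : (interGraph (DihedralGroup (p ^ 2))).dist (vA p) (vA p) = 0 :=
  SimpleGraph.dist_self

lemma dBA : (interGraph (DihedralGroup (p ^ 2))).dist (vB p) (vA p) = 1 :=
  SimpleGraph.dist_eq_one_iff_adj.mpr aAB.symm

lemma dDA (i) : (interGraph (DihedralGroup (p ^ 2))).dist (vD p i) (vA p) = 1 :=
  SimpleGraph.dist_eq_one_iff_adj.mpr (aAD i).symm

lemma dSA (i) : (interGraph (DihedralGroup (p ^ 2))).dist (vS p i) (vA p) = 2 :=
  dist_eq_two' (fun h => A_ne_S i (vertK.mp h).symm) (fun h => nAS i h.symm)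
    ((aDS (pd_sub_self i)).symm) (aAD i).symm

lemma dAS (m) : (interGraph (DihedralGroup (p ^ 2))).dist (vA p) (vS p m) = 2 := by
  rw [SimpleGraph.dist_comm]; exact dSA m

lemma dBS (m) : (interGraph (DihedralGroup (p ^ 2))).dist (vB p) (vS p m) = 2 :=
  dist_eq_two' (fun h => B_ne_S m (vertK.mp h)) (nBS m) (aBD m) (aDS (pd_sub_self m))

lemma dDS1 {i m} (h : Pd p (m - i)) :
    (interGraph (DihedralGroup (p ^ 2))).dist (vD p i) (vS p m) = 1 :=
  SimpleGraph.dist_eq_one_iff_adj.mpr (aDS h)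

lemma dDS2 {i m} (h : ¬ Pd p (m - i)) :
    (interGraph (DihedralGroup (p ^ 2))).dist (vD p i) (vS p m) = 2 :=
  dist_eq_two' (fun he => S_ne_D m i (vertK.mp he).symm) (nDS h)
    (aDD (fun hq => h (by simpa [neg_sub] using hq.neg))) (aDS (pd_sub_self m))

lemma dSS2 {i m} (hne : i ≠ m) (hpd : Pd p (m - i)) :
    (interGraph (DihedralGroup (p ^ 2))).dist (vS p i) (vS p m) = 2 :=
  dist_eq_two' (fun he => hne (vS_inj he)) (nSS hne)
    ((aDS (pd_sub_self i)).symm) (aDS hpd)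

lemma dSS3 {i m} (h : ¬ Pd p (i - m)) :
    (interGraph (DihedralGroup (p ^ 2))).dist (vS p i) (vS p m) = 3 := by
  have hne : i ≠ m := fun he => h (by rw [he]; exact pd_sub_self m)
  refine dist_eq_three' (fun he => hne (vS_inj he)) (nSS hne) (no_common_SS h)
    ((aDS (pd_sub_self i)).symm) (aDD h) (aDS (pd_sub_self m))

lemma twinAB : ∀ x : Vert (p ^ 2), x ≠ vA p → x ≠ vB p →
    ((interGraph (DihedralGroup (p ^ 2))).Adj (vA p) x ↔
     (interGraph (DihedralGroup (p ^ 2))).Adj (vB p) x) := by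
  intro x hx1 hx2
  rcases classifyV x with rfl | rfl | ⟨c, rfl⟩ | ⟨c, rfl⟩
  · exact absurd rfl hx1
  · exact absurd rfl hx2
  · exact iff_of_false (nAS c) (nBS c)
  · exact iff_of_true (aAD c) (aBD c)

lemma twinSS {i i' : ZMod (p ^ 2)} (hpd : Pd p (i - i')) :
    ∀ x : Vert (p ^ 2), x ≠ vS p i → x ≠ vS p i' →
    ((interGraph (DihedralGroup (p ^ 2))).Adj (vS p i) x ↔
     (interGraph (DihedralGroup (p ^ 2))).Adj (vS p i') x) := by
  intro x hx1 hx2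
  rcases classifyV x with rfl | rfl | ⟨c, rfl⟩ | ⟨c, rfl⟩
  · exact iff_of_false (fun h => nAS i h.symm) (fun h => nAS i' h.symm)
  · exact iff_of_false (fun h => nBS i h.symm) (fun h => nBS i' h.symm)
  · have h1 : i ≠ c := fun he => hx1 (by rw [he])
    have h2 : i' ≠ c := fun he => hx2 (by rw [he])
    exact iff_of_false (nSS h1) (nSS h2)
  · by_cases hc : Pd p (i - c)
    · have hc' : Pd p (i' - c) := by
        have : i' - c = (i - c) - (i - i') := by ring
        rw [this]; exact hc.sub hpd
      exact iff_of_true (aDS hc).symm (aDS hc').symm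
    · have hc' : ¬ Pd p (i' - c) := fun hq => hc (by
        have : i - c = (i' - c) + (i - i') := by ring
        rw [this]; exact hq.add hpd)
      exact iff_of_false (fun h => nDS hc h.symm) (fun h => nDS hc' h.symm)

end distances


section counting

variable {p : ℕ} [hpf : Fact p.Prime]

instance : Finite (Subgroup (DihedralGroup (p ^ 2))) :=
  Finite.of_injective (fun H : Subgroup (DihedralGroup (p ^ 2)) => (H : Set (DihedralGroup (p ^ 2))))
    SetLike.coe_injective

instance : Finite (Vert (p ^ 2)) := Subtype.finite

lemma val_p : ((p : ℕ) : ZMod (p ^ 2)).val = p := ZMod.val_natCast_of_lt p_lt_psq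

lemma two_p_le : p + p ≤ p ^ 2 := by
  have := hpf.out.two_le
  nlinarith

lemma low_add_val {j : ZMod (p ^ 2)} (h : j.val < p) :
    (j + ((p : ℕ) : ZMod (p ^ 2))).val = j.val + p := by
  rw [ZMod.val_add_of_lt, val_p]
  rw [val_p]
  have := two_p_le (p := p)
  omega

/-- a representative of the block of `j` with large val. -/
def pick (p : ℕ) [Fact p.Prime] (j : ZMod (p ^ 2)) : ZMod (p ^ 2) :=
  if p ≤ j.val then j else j + ((p : ℕ) : ZMod (p ^ 2))

lemma pick_val (j : ZMod (p ^ 2)) : p ≤ (pick p j).val := by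
  rw [pick]
  split_ifs with h
  · exact h
  · rw [low_add_val (by omega)]
    omega

lemma pick_pd (j : ZMod (p ^ 2)) : Pd p (pick p j - j) := by
  rw [pick]
  split_ifs with h
  · simpa using (Pd_zero : Pd p 0)
  · simpa using (pd_self : Pd p _)

lemma pd_neg_iff {c : ZMod (p ^ 2)} (h : Pd p c) : Pd p (-c) := h.neg

lemma low_blocks {i j : ZMod (p ^ 2)} (hi : i.val < p) (hj : j.val < p) (hne : i ≠ j) :
    ¬ Pd p (i - j) := by
  intro hpd
  have hd0 : i - j ≠ 0 := sub_ne_zero_of_ne hne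
  have hdval : (i - j).val ≠ 0 := fun h => hd0 ((ZMod.val_eq_zero _).mp h)
  have hdvd : p ∣ (i - j).val := Pd_iff_dvd.mp hpd
  obtain ⟨k, hk⟩ := hdvd
  have hklt : k < p := by
    have := (i - j).val_lt
    rw [hk] at this
    by_contra hc
    push_neg at hc
    nlinarith
  have hik : i = j + (i - j) := by ring
  have hval : i.val = (j.val + (i - j).val) % (p ^ 2) := by
    conv_lhs => rw [hik]
    exact ZMod.val_add j (i - j)
  have hlt : j.val + (i - j).val < p ^ 2 := by
    rw [hk]
    have h1 : p * k + p ≤ p * p := by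
      have hk1 : k + 1 ≤ p := hklt
      calc p * k + p = p * (k + 1) := by ring
      _ ≤ p * p := Nat.mul_le_mul_left p hk1
    have h2 : p * p = p ^ 2 := (sq p).symm
    omega
  rw [Nat.mod_eq_of_lt hlt] at hval
  have hge : p ≤ (i - j).val := Nat.le_of_dvd (Nat.pos_of_ne_zero hdval) ⟨k, hk⟩
  omega

lemma cast_pd_iff {c : ZMod (p ^ 2)} :
    Pd p c ↔ (ZMod.castHom (dvd_pow_self p (two_ne_zero)) (ZMod p) c = 0) := by
  haveI : NeZero p := ⟨hpf.out.pos.ne'⟩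
  rw [ZMod.castHom_apply, ← ZMod.natCast_val, ZMod.natCast_eq_zero_iff]
  exact Pd_iff_dvd

end counting


section main

variable {p : ℕ} [hpf : Fact p.Prime]

lemma vS_injective : Function.Injective (vS p) := fun _ _ h => vS_inj h

/-- the chosen resolving set -/
def Wup (p : ℕ) [Fact p.Prime] : Set (Vert (p ^ 2)) :=
  insert (vA p) ((vS p) '' {i : ZMod (p ^ 2) | p ≤ i.val})

lemma card_Wup : Nat.card (Wup p) = p ^ 2 - p + 1 := by
  classical
  rw [Nat.card_coe_set_eq, Wup]
  have hnotmem : vA p ∉ (vS p '' {i : ZMod (p ^ 2) | p ≤ i.val}) := by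
    rintro ⟨i, _, hi⟩
    exact A_ne_S i (vertK.mp hi.symm)
  rw [Set.ncard_insert_of_notMem hnotmem (Set.toFinite _),
    Set.ncard_image_of_injective _ vS_injective]
  have hset : {i : ZMod (p ^ 2) | p ≤ i.val} =
      ↑(Finset.univ.filter (fun i : ZMod (p ^ 2) => p ≤ i.val)) := by
    ext i; simp
  rw [hset, Set.ncard_coe_finset]
  have himg : (Finset.range p).image (fun k : ℕ => (k : ZMod (p ^ 2))) =
      Finset.univ.filter (fun i : ZMod (p ^ 2) => ¬ p ≤ i.val) := by
    ext i
    simp only [Finset.mem_image, Finset.mem_range, Finset.mem_filter, Finset.mem_univ, true_and,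
      not_le]
    constructor
    · rintro ⟨k, hk, rfl⟩
      rw [ZMod.val_natCast_of_lt (hk.trans p_lt_psq)]
      exact hk
    · intro hi
      exact ⟨i.val, hi, ZMod.natCast_rightInverse i⟩
  have hlow : (Finset.univ.filter (fun i : ZMod (p ^ 2) => ¬ p ≤ i.val)).card = p := by
    rw [← himg, Finset.card_image_of_injOn, Finset.card_range]
    intro a ha b hb hab
    have := congrArg ZMod.val hab
    rw [ZMod.val_natCast_of_lt ((Finset.mem_range.mp ha).trans p_lt_psq),
      ZMod.val_natCast_of_lt ((Finset.mem_range.mp hb).trans p_lt_psq)] at this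
    exact this
  have htot : (Finset.univ.filter (fun i : ZMod (p ^ 2) => p ≤ i.val)).card +
      (Finset.univ.filter (fun i : ZMod (p ^ 2) => ¬ p ≤ i.val)).card = p ^ 2 := by
    rw [Finset.card_filter_add_card_filter_not, Finset.card_univ, ZMod.card]
  omega

lemma Wup_resolves (u v : Vert (p ^ 2))
    (hd : ∀ w ∈ Wup p, (interGraph (DihedralGroup (p ^ 2))).dist u w =
      (interGraph (DihedralGroup (p ^ 2))).dist v w) : u = v := by
  have hAm : vA p ∈ Wup p := Set.mem_insert _ _
  have hSm : ∀ m : ZMod (p ^ 2), p ≤ m.val → vS p m ∈ Wup p := fun m hm =>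
    Set.mem_insert_iff.mpr (Or.inr ⟨m, hm, rfl⟩)
  have hA := hd (vA p) hAm
  rcases classifyV u with rfl | rfl | ⟨i, rfl⟩ | ⟨i, rfl⟩
  · -- u = vA
    rcases classifyV v with rfl | rfl | ⟨j, rfl⟩ | ⟨j, rfl⟩
    · rfl
    · rw [dAA, dBA] at hA; exact absurd hA (by decide)
    · rw [dAA, dSA] at hA; exact absurd hA (by decide)
    · rw [dAA, dDA] at hA; exact absurd hA (by decide)
  · -- u = vB
    rcases classifyV v with rfl | rfl | ⟨j, rfl⟩ | ⟨j, rfl⟩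
    · rw [dBA, dAA] at hA; exact absurd hA (by decide)
    · rfl
    · rw [dBA, dSA] at hA; exact absurd hA (by decide)
    · have hS := hd (vS p (pick p j)) (hSm _ (pick_val j))
      rw [dBS, dDS1 (pick_pd j)] at hS
      exact absurd hS (by decide)
  · -- u = vS i
    rcases classifyV v with rfl | rfl | ⟨j, rfl⟩ | ⟨j, rfl⟩
    · rw [dSA, dAA] at hA; exact absurd hA (by decide)
    · rw [dSA, dBA] at hA; exact absurd hA (by decide)
    · -- vS i vs vS j
      by_cases hij : i = j
      · rw [hij]
      exfalso
      by_cases hiW : p ≤ i.val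
      · have h1 := hd (vS p i) (hSm i hiW)
        rw [SimpleGraph.dist_self] at h1
        by_cases hpd : Pd p (i - j)
        · rw [dSS2 (Ne.symm hij) hpd] at h1
          exact absurd h1 (by decide)
        · rw [dSS3 (fun hq => hpd (by simpa [neg_sub] using hq.neg))] at h1
          exact absurd h1 (by decide)
      · by_cases hjW : p ≤ j.val
        · have h1 := hd (vS p j) (hSm j hjW)
          rw [SimpleGraph.dist_self] at h1
          by_cases hpd : Pd p (j - i)
          · rw [dSS2 hij hpd] at h1
            exact absurd h1 (by decide)
          · rw [dSS3 (fun hq => hpd (by simpa [neg_sub] using hq.neg))] at h1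
            exact absurd h1 (by decide)
        · push_neg at hiW hjW
          have hnpd : ¬ Pd p (i - j) := low_blocks hiW hjW hij
          have hm : p ≤ (i + ((p : ℕ) : ZMod (p ^ 2))).val := by
            rw [low_add_val hiW]; omega
          have h1 := hd (vS p (i + ((p : ℕ) : ZMod (p ^ 2)))) (hSm _ hm)
          have hne2 : i ≠ i + ((p : ℕ) : ZMod (p ^ 2)) := by
            intro he
            have := congrArg ZMod.val he
            rw [low_add_val hiW] at this
            have := hpf.out.pos
            omega
          have e1 : (interGraph (DihedralGroup (p ^ 2))).dist (vS p i)
              (vS p (i + ((p : ℕ) : ZMod (p ^ 2)))) = 2 :=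
            dSS2 hne2 (by simpa using (pd_self : Pd p _))
          have e2 : (interGraph (DihedralGroup (p ^ 2))).dist (vS p j)
              (vS p (i + ((p : ℕ) : ZMod (p ^ 2)))) = 3 := by
            apply dSS3
            intro hq
            apply hnpd
            have hsum : Pd p (j - i) := by
              have : j - i = (j - (i + ((p : ℕ) : ZMod (p ^ 2)))) + ((p : ℕ) : ZMod (p ^ 2)) := by
                ring
              rw [this]
              exact hq.add pd_self
            simpa [neg_sub] using hsum.neg
          rw [e1, e2] at h1
          exact absurd h1 (by decide)
    · rw [dSA, dDA] at hA; exact absurd hA (by decide)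
  · -- u = vD i
    rcases classifyV v with rfl | rfl | ⟨j, rfl⟩ | ⟨j, rfl⟩
    · rw [dDA, dAA] at hA; exact absurd hA (by decide)
    · have hS := hd (vS p (pick p i)) (hSm _ (pick_val i))
      rw [dDS1 (pick_pd i), dBS] at hS
      exact absurd hS (by decide)
    · rw [dDA, dSA] at hA; exact absurd hA (by decide)
    · -- vD i vs vD j
      by_contra hne
      have hpd : ¬ Pd p (i - j) := fun h => hne (vD_eq_iff.mpr h)
      have h1 := hd (vS p (pick p i)) (hSm _ (pick_val i))
      have e2 : (interGraph (DihedralGroup (p ^ 2))).dist (vD p j) (vS p (pick p i)) = 2 := by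
        apply dDS2
        intro hq
        apply hpd
        have : i - j = (pick p i - j) - (pick p i - i) := by ring
        rw [this]
        exact hq.sub (pick_pd i)
      rw [dDS1 (pick_pd i), e2] at h1
      exact absurd h1 (by decide)

lemma lower_bound (W : Set (Vert (p ^ 2)))
    (hres : ∀ u v : Vert (p ^ 2),
      (∀ w ∈ W, (interGraph (DihedralGroup (p ^ 2))).dist u w =
        (interGraph (DihedralGroup (p ^ 2))).dist v w) → u = v) :
    p ^ 2 - p + 1 ≤ Nat.card W := by
  classical
  haveI : NeZero p := ⟨hpf.out.pos.ne'⟩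
  have hAB : vA p ∈ W ∨ vB p ∈ W := by
    by_contra hc
    push_neg at hc
    have := hres (vA p) (vB p) (fun w hw =>
      twin_dist twinAB (fun he => hc.1 (he ▸ hw)) (fun he => hc.2 (he ▸ hw)))
    exact A_ne_B (vertK.mp this)
  have hSS : ∀ i i' : ZMod (p ^ 2), i ≠ i' → Pd p (i - i') → vS p i ∈ W ∨ vS p i' ∈ W := by
    intro i i' hne hpd
    by_contra hc
    push_neg at hc
    have := hres (vS p i) (vS p i') (fun w hw =>
      twin_dist (twinSS hpd) (fun he => hc.1 (he ▸ hw)) (fun he => hc.2 (he ▸ hw)))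
    exact hne (vS_inj this)
  set I : Finset (ZMod (p ^ 2)) := Finset.univ.filter (fun i => vS p i ∉ W) with hIdef
  have hI : I.card ≤ p := by
    have hmapsto : ∀ a ∈ I, (ZMod.castHom (dvd_pow_self p two_ne_zero) (ZMod p)) a ∈
        (Finset.univ : Finset (ZMod p)) := fun a _ => Finset.mem_univ _
    have hinj : Set.InjOn (fun a => (ZMod.castHom (dvd_pow_self p two_ne_zero) (ZMod p)) a) ↑I := by
      intro a ha b hb hab
      by_contra hne
      have hab' : (ZMod.castHom (dvd_pow_self p two_ne_zero) (ZMod p)) a =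
          (ZMod.castHom (dvd_pow_self p two_ne_zero) (ZMod p)) b := hab
      have hpd : Pd p (a - b) := cast_pd_iff.mpr (by rw [map_sub, sub_eq_zero]; exact hab')
      have hor := hSS a b hne hpd
      simp only [hIdef, Finset.coe_filter, Set.mem_setOf_eq, Finset.mem_univ, true_and] at ha hb
      tauto
    calc I.card ≤ (Finset.univ : Finset (ZMod p)).card :=
          Finset.card_le_card_of_injOn _ hmapsto hinj
    _ = p := by rw [Finset.card_univ, ZMod.card]
  set J : Finset (ZMod (p ^ 2)) := Finset.univ.filter (fun i => vS p i ∈ W) with hJdef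
  have hJI : J.card + I.card = p ^ 2 := by
    rw [hJdef, hIdef, Finset.card_filter_add_card_filter_not, Finset.card_univ, ZMod.card]
  obtain ⟨x0, hx0W, hx0⟩ : ∃ x0, x0 ∈ W ∧ (x0 = vA p ∨ x0 = vB p) := by
    rcases hAB with h | h
    · exact ⟨vA p, h, Or.inl rfl⟩
    · exact ⟨vB p, h, Or.inr rfl⟩
  have hWfin : W.Finite := Set.toFinite W
  have hsub : insert x0 (J.image (vS p)) ⊆ hWfin.toFinset := by
    intro x hx
    rw [Set.Finite.mem_toFinset]
    rcases Finset.mem_insert.mp hx with rfl | hx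
    · exact hx0W
    · obtain ⟨i, hi, rfl⟩ := Finset.mem_image.mp hx
      exact (Finset.mem_filter.mp hi).2
  have hx0img : x0 ∉ J.image (vS p) := by
    intro hmem
    obtain ⟨i, _, hi⟩ := Finset.mem_image.mp hmem
    rcases hx0 with rfl | rfl
    · exact A_ne_S i (vertK.mp hi).symm
    · exact B_ne_S i (vertK.mp hi).symm
  have hcard1 : (insert x0 (J.image (vS p))).card = J.card + 1 := by
    rw [Finset.card_insert_of_notMem hx0img,
      Finset.card_image_of_injective _ vS_injective]
  have hfinal : J.card + 1 ≤ hWfin.toFinset.card := by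
    rw [← hcard1]
    exact Finset.card_le_card hsub
  have hNcard : Nat.card W = hWfin.toFinset.card := by
    rw [Nat.card_coe_set_eq, Set.ncard_eq_toFinset_card W hWfin]
  omega

end main

end IGDP

theorem stmt19 (p : ℕ) (hp : p.Prime) :
    IsLeast {n : ℕ | ∃ W : Set (Vert (p ^ 2)),
      (∀ u v : Vert (p ^ 2),
        (∀ w ∈ W, (interGraph (DihedralGroup (p ^ 2))).dist u w =
          (interGraph (DihedralGroup (p ^ 2))).dist v w) → u = v) ∧
      Nat.card W = n} (p ^ 2 - p + 1) := by
  haveI : Fact p.Prime := ⟨hp⟩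
  constructor
  · exact ⟨IGDP.Wup p, IGDP.Wup_resolves, IGDP.card_Wup⟩
  · rintro n ⟨W, hres, rfl⟩
    exact IGDP.lower_bound W hres
end
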